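/- arXiv:1301.0154 — 11 statements merged into one kernel-verified Lean document; each statement's English description precedes it below -/
import Mathlib

section
/- For all $s > 0$, $e^{4s} - 4(s^2 - 3s + 4)e^{3s} - (4s^2 - 30)e^{2s} - 4(s^2 + 3s + 4)e^s + 1 > 0$. -/
open Real

noncomputable def F0 (s : ℝ) : ℝ :=
  cosh (2*s) - 4*s^2*cosh s + 12*s*sinh s - 16*cosh s - 2*s^2 + 15
noncomputable def F1 (s : ℝ) : ℝ :=
  2*sinh (2*s) - 4*s^2*sinh s + 4*s*cosh s - 4*sinh s - 4*s
noncomputable def F2 (s : ℝ) : ℝ :=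
  4*cosh (2*s) - 4*s^2*cosh s - 4*s*sinh s - 4
noncomputable def F3 (s : ℝ) : ℝ :=
  8*sinh (2*s) - 4*s^2*sinh s - 12*s*cosh s - 4*sinh s
noncomputable def F4 (s : ℝ) : ℝ :=
  16*cosh (2*s) - 4*s^2*cosh s - 20*s*sinh s - 16*cosh s
noncomputable def F5 (s : ℝ) : ℝ :=
  32*sinh (2*s) - 4*s^2*sinh s - 28*s*cosh s - 36*sinh s
noncomputable def F6 (s : ℝ) : ℝ :=
  64*cosh (2*s) - 4*s^2*cosh s - 36*s*sinh s - 64*cosh s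
noncomputable def F7 (s : ℝ) : ℝ :=
  128*sinh (2*s) - 4*s^2*sinh s - 44*s*cosh s - 100*sinh s

lemma pos_of_deriv (g g' : ℝ → ℝ) (hd : ∀ x, HasDerivAt g (g' x) x)
    (h0 : g 0 = 0) (hpos : ∀ x, 0 < x → 0 < g' x) {s : ℝ} (hs : 0 < s) : 0 < g s := by
  have hmono : StrictMonoOn g (Set.Ici 0) := by
    apply strictMonoOn_of_deriv_pos (convex_Ici 0)
    · exact fun x _ => (hd x).continuousAt.continuousWithinAt
    · intro x hx
      rw [interior_Ici] at hx
      rw [(hd x).deriv]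
      exact hpos x hx
  have := hmono Set.self_mem_Ici (Set.mem_Ici.2 hs.le) hs
  simpa [h0] using this

lemma hid (s : ℝ) : HasDerivAt (fun s : ℝ => s) 1 s := hasDerivAt_id' s
lemma hc2 (s : ℝ) : HasDerivAt (fun s : ℝ => cosh (2*s)) (2 * sinh (2*s)) s := by
  simpa [mul_comm] using ((hid s).const_mul 2).cosh
lemma hs2 (s : ℝ) : HasDerivAt (fun s : ℝ => sinh (2*s)) (2 * cosh (2*s)) s := by
  simpa [mul_comm] using ((hid s).const_mul 2).sinh
lemma hsq (s : ℝ) : HasDerivAt (fun s : ℝ => s^2) (2*s) s := by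
  simpa using hasDerivAt_pow 2 s

lemma d0 (s : ℝ) : HasDerivAt F0 (F1 s) s := by
  unfold F0 F1
  have h := (((((hc2 s).sub
      (((hsq s).const_mul 4).mul (Real.hasDerivAt_cosh s))).add
      (((hid s).const_mul 12).mul (Real.hasDerivAt_sinh s))).sub
      ((Real.hasDerivAt_cosh s).const_mul 16)).sub
      ((hsq s).const_mul 2)).add_const 15
  exact h.congr_deriv (by ring)

lemma d1 (s : ℝ) : HasDerivAt F1 (F2 s) s := by
  unfold F1 F2
  have h := (((((hs2 s).const_mul 2).sub
      (((hsq s).const_mul 4).mul (Real.hasDerivAt_sinh s))).add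
      (((hid s).const_mul 4).mul (Real.hasDerivAt_cosh s))).sub
      ((Real.hasDerivAt_sinh s).const_mul 4)).sub ((hid s).const_mul 4)
  exact h.congr_deriv (by ring)

lemma d2 (s : ℝ) : HasDerivAt F2 (F3 s) s := by
  unfold F2 F3
  have h := ((((hc2 s).const_mul 4).sub
      (((hsq s).const_mul 4).mul (Real.hasDerivAt_cosh s))).sub
      (((hid s).const_mul 4).mul (Real.hasDerivAt_sinh s))).sub_const 4
  exact h.congr_deriv (by ring)

lemma d3 (s : ℝ) : HasDerivAt F3 (F4 s) s := by
  unfold F3 F4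
  have h := ((((hs2 s).const_mul 8).sub
      (((hsq s).const_mul 4).mul (Real.hasDerivAt_sinh s))).sub
      (((hid s).const_mul 12).mul (Real.hasDerivAt_cosh s))).sub
      ((Real.hasDerivAt_sinh s).const_mul 4)
  exact h.congr_deriv (by ring)

lemma d4 (s : ℝ) : HasDerivAt F4 (F5 s) s := by
  unfold F4 F5
  have h := ((((hc2 s).const_mul 16).sub
      (((hsq s).const_mul 4).mul (Real.hasDerivAt_cosh s))).sub
      (((hid s).const_mul 20).mul (Real.hasDerivAt_sinh s))).sub
      ((Real.hasDerivAt_cosh s).const_mul 16)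
  exact h.congr_deriv (by ring)

lemma d5 (s : ℝ) : HasDerivAt F5 (F6 s) s := by
  unfold F5 F6
  have h := ((((hs2 s).const_mul 32).sub
      (((hsq s).const_mul 4).mul (Real.hasDerivAt_sinh s))).sub
      (((hid s).const_mul 28).mul (Real.hasDerivAt_cosh s))).sub
      ((Real.hasDerivAt_sinh s).const_mul 36)
  exact h.congr_deriv (by ring)

lemma d6 (s : ℝ) : HasDerivAt F6 (F7 s) s := by
  unfold F6 F7
  have h := ((((hc2 s).const_mul 64).sub
      (((hsq s).const_mul 4).mul (Real.hasDerivAt_cosh s))).sub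
      (((hid s).const_mul 36).mul (Real.hasDerivAt_sinh s))).sub
      ((Real.hasDerivAt_cosh s).const_mul 64)
  exact h.congr_deriv (by ring)

-- auxiliary inequalities
lemma cosh_lb {s : ℝ} (hs : 0 < s) : 1 + s^2/2 < cosh s := by
  have h := pos_of_deriv (fun s => cosh s - 1 - s^2/2) (fun s => sinh s - s)
    (fun x => by
      have := ((Real.hasDerivAt_cosh x).sub_const 1).sub ((hsq x).div_const 2)
      exact this.congr_deriv (by ring))
    (by norm_num)
    (fun x hx => by
      have := Real.self_lt_sinh_iff.2 hx
      show (0:ℝ) < sinh x - x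
      linarith) hs
  have h' : 0 < cosh s - 1 - s^2/2 := h
  linarith

lemma sinh_lt_self_mul_cosh {s : ℝ} (hs : 0 < s) : sinh s < s * cosh s := by
  have h := pos_of_deriv (fun s => s * cosh s - sinh s) (fun s => s * sinh s)
    (fun x => by
      have := ((hid x).mul (Real.hasDerivAt_cosh x)).sub (Real.hasDerivAt_sinh x)
      exact this.congr_deriv (by ring))
    (by norm_num)
    (fun x hx => mul_pos hx (Real.sinh_pos_iff.2 hx)) hs
  have h' : 0 < s * cosh s - sinh s := h
  linarith

lemma F7_pos {s : ℝ} (hs : 0 < s) : 0 < F7 s := by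
  unfold F7
  rw [Real.sinh_two_mul]
  have h1 : s < sinh s := Real.self_lt_sinh_iff.2 hs
  have h2 : 1 + s^2/2 < cosh s := cosh_lb hs
  have h3 : sinh s < s * cosh s := sinh_lt_self_mul_cosh hs
  have hsh : 0 < sinh s := Real.sinh_pos_iff.2 hs
  have hch : 0 < cosh s := Real.cosh_pos s
  nlinarith [mul_nonneg (sub_pos.2 h1).le hch.le, mul_nonneg (sub_pos.2 h2).le hsh.le,
    mul_pos hs hch, mul_pos (mul_pos hs hs) hsh, hsh]

lemma F6_pos {s : ℝ} (hs : 0 < s) : 0 < F6 s :=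
  pos_of_deriv F6 F7 d6 (by unfold F6; norm_num) (fun x hx => F7_pos hx) hs
lemma F5_pos {s : ℝ} (hs : 0 < s) : 0 < F5 s :=
  pos_of_deriv F5 F6 d5 (by unfold F5; norm_num) (fun x hx => F6_pos hx) hs
lemma F4_pos {s : ℝ} (hs : 0 < s) : 0 < F4 s :=
  pos_of_deriv F4 F5 d4 (by unfold F4; norm_num) (fun x hx => F5_pos hx) hs
lemma F3_pos {s : ℝ} (hs : 0 < s) : 0 < F3 s :=
  pos_of_deriv F3 F4 d3 (by unfold F3; norm_num) (fun x hx => F4_pos hx) hs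
lemma F2_pos {s : ℝ} (hs : 0 < s) : 0 < F2 s :=
  pos_of_deriv F2 F3 d2 (by unfold F2; norm_num) (fun x hx => F3_pos hx) hs
lemma F1_pos {s : ℝ} (hs : 0 < s) : 0 < F1 s :=
  pos_of_deriv F1 F2 d1 (by unfold F1; norm_num) (fun x hx => F2_pos hx) hs
lemma F0_pos {s : ℝ} (hs : 0 < s) : 0 < F0 s :=
  pos_of_deriv F0 F1 d0 (by unfold F0; norm_num) (fun x hx => F1_pos hx) hs

theorem h1_pos (s : ℝ) (hs : 0 < s) :
    0 < Real.exp (4 * s) - 4 * (s ^ 2 - 3 * s + 4) * Real.exp (3 * s)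
      - (4 * s ^ 2 - 30) * Real.exp (2 * s) - 4 * (s ^ 2 + 3 * s + 4) * Real.exp s + 1 := by
  have hF := F0_pos hs
  have hE : Real.exp s ≠ 0 := Real.exp_ne_zero s
  have key : Real.exp (4 * s) - 4 * (s ^ 2 - 3 * s + 4) * Real.exp (3 * s)
      - (4 * s ^ 2 - 30) * Real.exp (2 * s) - 4 * (s ^ 2 + 3 * s + 4) * Real.exp s + 1
      = 2 * Real.exp (2 * s) * F0 s := by
    unfold F0
    rw [Real.cosh_eq, Real.sinh_eq, Real.cosh_eq,
      show (4:ℝ)*s = 2*s + 2*s by ring, show (3:ℝ)*s = 2*s + s by ring,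
      show (2:ℝ)*s = s + s by ring, Real.exp_add, Real.exp_add, Real.exp_add,
      Real.exp_neg, Real.exp_neg, Real.exp_add]
    field_simp
    ring
  rw [key]
  have : 0 < Real.exp (2*s) := Real.exp_pos _
  positivity
end

section
/- For all $s > 0$, $e^{3s} - (3s^2 - 7s + 9)e^{2s} - (2s^2 + 2s - 15)e^s - s^2 - 5s - 7 > 0$. -/
set_option maxHeartbeats 1000000

open Real

/-- Degree-7 Taylor lower bound for `exp`. -/
lemma exp_taylor7_lb (s : ℝ) (hs : 0 ≤ s) :
    1 + s + s ^ 2 / 2 + s ^ 3 / 6 + s ^ 4 / 24 + s ^ 5 / 120 + s ^ 6 / 720 + s ^ 7 / 5040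
      ≤ Real.exp s := by
  have h := Real.sum_le_exp_of_nonneg hs 8
  simp only [Finset.sum_range_succ, Finset.sum_range_zero, Nat.factorial] at h
  norm_num at h
  linarith

/-- Degree-7 Taylor upper bound for `exp` on `[0,1]`. -/
lemma exp_taylor7_ub (s : ℝ) (h0 : 0 ≤ s) (h1 : s ≤ 1) :
    Real.exp s ≤ 1 + s + s ^ 2 / 2 + s ^ 3 / 6 + s ^ 4 / 24 + s ^ 5 / 120 + s ^ 6 / 720
      + s ^ 7 / 5040 + s ^ 8 / 35840 := by
  have h := Real.exp_bound' h0 h1 (n := 8) (by norm_num)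
  simp only [Finset.sum_range_succ, Finset.sum_range_zero, Nat.factorial] at h
  norm_num at h
  linarith

theorem h2_pos (s : ℝ) (hs : 0 < s) :
    0 < Real.exp (3 * s) - (3 * s ^ 2 - 7 * s + 9) * Real.exp (2 * s)
      - (2 * s ^ 2 + 2 * s - 15) * Real.exp s - s ^ 2 - 5 * s - 7 := by
  set t := Real.exp s with ht
  have ht3 : Real.exp (3 * s) = t ^ 3 := by
    rw [ht, ← Real.exp_nat_mul]; norm_num
  have ht2 : Real.exp (2 * s) = t ^ 2 := by
    rw [ht, ← Real.exp_nat_mul]; norm_num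
  rw [ht3, ht2]
  set L : ℝ := 1 + s + s ^ 2 / 2 + s ^ 3 / 6 + s ^ 4 / 24 + s ^ 5 / 120 + s ^ 6 / 720
      + s ^ 7 / 5040 with hLdef
  have hL : L ≤ t := exp_taylor7_lb s hs.le
  have ht1 : (1 : ℝ) ≤ t := Real.one_le_exp hs.le
  -- g = 3L² - 2AL + B has all nonnegative coefficients
  have hG : 0 ≤ (t - L) * ((3/1:ℝ) * s ^ 2 + (2/1:ℝ) * s ^ 3 + (7/12:ℝ) * s ^ 4
      + (7/30:ℝ) * s ^ 5 + (13/120:ℝ) * s ^ 6 + (53/1260:ℝ) * s ^ 7 + (269/20160:ℝ) * s ^ 8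
      + (29/10080:ℝ) * s ^ 9 + (19/25200:ℝ) * s ^ 10 + (1/8400:ℝ) * s ^ 11
      + (19/1209600:ℝ) * s ^ 12 + (1/604800:ℝ) * s ^ 13 + (1/8467200:ℝ) * s ^ 14) := by
    have h2 := pow_nonneg hs.le
    refine mul_nonneg (by linarith) (by positivity)
  -- f(L) = s^7 · Q(s) with Q having positive coefficients
  have hFL : 0 < (1/90:ℝ) * s ^ 7 + (1/72:ℝ) * s ^ 8 + (71/7560:ℝ) * s ^ 9
      + (2683/604800:ℝ) * s ^ 10 + (143/86400:ℝ) * s ^ 11 + (181/345600:ℝ) * s ^ 12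
      + (1031/7257600:ℝ) * s ^ 13 + (3371/101606400:ℝ) * s ^ 14 + (1133/169344000:ℝ) * s ^ 15
      + (131/112896000:ℝ) * s ^ 16 + (181/1016064000:ℝ) * s ^ 17
      + (391/18289152000:ℝ) * s ^ 18 + (13/6096384000:ℝ) * s ^ 19
      + (1/6096384000:ℝ) * s ^ 20 + (1/128024064000:ℝ) * s ^ 21 := by positivity
  rcases le_or_gt s 1 with hs1 | hs1
  · -- small case : 0 < s ≤ 1
    have hU : t ≤ L + s ^ 8 / 35840 := exp_taylor7_ub s hs.le hs1
    have hA6 : 0 ≤ t + 2 * L - (3 * s ^ 2 - 7 * s + 9) + 6 := by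
      have h1 : 0 ≤ s * (7 - 3 * s) := mul_nonneg hs.le (by linarith)
      have hL1 : (1:ℝ) ≤ L := by
        have := pow_nonneg hs.le
        simp only [hLdef]
        have h2 := this 2; have h3 := this 3; have h4 := this 4
        have h5 := this 5; have h6 := this 6; have h7 := this 7
        linarith
      nlinarith
    have p2 : 0 ≤ (t - L) ^ 2 * (t + 2 * L - (3 * s ^ 2 - 7 * s + 9) + 6) :=
      mul_nonneg (sq_nonneg _) hA6
    have p3 : 0 ≤ (t - L) * (s ^ 8 / 35840 - (t - L)) :=
      mul_nonneg (by linarith) (by linarith)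
    have p4 : 0 ≤ (s ^ 8 / 35840 - (t - L)) * (s ^ 8 / 35840) :=
      mul_nonneg (by linarith) (by positivity)
    have p5 : s ^ 16 ≤ s ^ 7 :=
      pow_le_pow_of_le_one hs.le hs1 (by norm_num)
    have hmono := pow_nonneg hs.le
    have h8 := hmono 8; have h9 := hmono 9; have h10 := hmono 10
    have h11 := hmono 11; have h12 := hmono 12; have h13 := hmono 13
    have h14 := hmono 14; have h15 := hmono 15; have h16 := hmono 16
    have h17 := hmono 17; have h18 := hmono 18; have h19 := hmono 19
    have h20 := hmono 20; have h21 := hmono 21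
    have h7p : 0 < s ^ 7 := pow_pos hs 7
    simp only [hLdef] at hG p2 p3 p4 hL hU
    linarith [hFL, hG, p2, p3, p4, p5]
  · -- large case : s ≥ 1
    have hu : 0 ≤ s - 1 := by linarith
    have hA : 0 ≤ t + 2 * L - (3 * s ^ 2 - 7 * s + 9) := by
      have hp := pow_nonneg hu
      have h1 := hp 1; have h2 := hp 2; have h3 := hp 3; have h4 := hp 4
      have h5 := hp 5; have h6 := hp 6; have h7 := hp 7
      have hL' := hL
      simp only [hLdef] at hL' ⊢
      linarith [hL']
    have p2 : 0 ≤ (t - L) ^ 2 * (t + 2 * L - (3 * s ^ 2 - 7 * s + 9)) :=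
      mul_nonneg (sq_nonneg _) hA
    simp only [hLdef] at hG p2 hL
    linarith [hFL, hG, p2]
end

section
/- The function $s \mapsto \sigma''(s)$, where $\sigma(s) = s/(1-e^{-s})$, is logarithmically concave on $(0,\infty)$; that is, $(\ln \sigma''(s))'' \le 0$ for all $s > 0$. -/
open Real

lemma my_exp_tsum (x : ℝ) : Real.exp x = ∑' n : ℕ, x ^ n / (Nat.factorial n) := by
  rw [Real.exp_eq_exp_ℝ, NormedSpace.exp_eq_tsum_div]

lemma my_exp_hasSum (x : ℝ) : HasSum (fun n : ℕ => x ^ n / (Nat.factorial n)) (Real.exp x) :=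
  (my_exp_tsum x) ▸ (Real.summable_pow_div_factorial x).hasSum

lemma shift1_hasSum (x : ℝ) :
    HasSum (fun n : ℕ => (n : ℝ) * x ^ n / (Nat.factorial n)) (x * Real.exp x) := by
  have h2 : HasSum (fun n : ℕ => ((n+1 : ℕ) : ℝ) * x ^ (n+1) / (Nat.factorial (n+1)))
      (x * Real.exp x) := by
    have h := (my_exp_hasSum x).mul_left x
    refine h.congr_fun fun n => ?_
    rw [Nat.factorial_succ]
    push_cast
    have h2 : (Nat.factorial n : ℝ) ≠ 0 := by positivity
    have h3 : ((n:ℝ)+1) ≠ 0 := by positivity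
    field_simp
    ring
  have h3 := (hasSum_nat_add_iff (f := fun n : ℕ => (n : ℝ) * x ^ n / (Nat.factorial n)) 1).mp h2
  simpa using h3

lemma shift2_hasSum (x : ℝ) :
    HasSum (fun n : ℕ => (n : ℝ) * ((n:ℝ) - 1) * x ^ n / (Nat.factorial n))
      (x ^ 2 * Real.exp x) := by
  have h2 : HasSum (fun n : ℕ => ((n+2 : ℕ) : ℝ) * (((n+2:ℕ):ℝ) - 1) * x ^ (n+2) / (Nat.factorial (n+2)))
      (x ^ 2 * Real.exp x) := by
    have h := (my_exp_hasSum x).mul_left (x ^ 2)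
    refine h.congr_fun fun n => ?_
    rw [show Nat.factorial (n+2) = (n+2) * ((n+1) * Nat.factorial n) by
      rw [Nat.factorial_succ, Nat.factorial_succ]]
    push_cast
    have h2 : (Nat.factorial n : ℝ) ≠ 0 := by positivity
    have h3 : ((n:ℝ)+1) ≠ 0 := by positivity
    have h4 : ((n:ℝ)+2) ≠ 0 := by positivity
    field_simp
    ring
  have h3 := (hasSum_nat_add_iff
    (f := fun n : ℕ => (n : ℝ) * ((n:ℝ) - 1) * x ^ n / (Nat.factorial n)) 2).mp h2
  rw [show ∑ n ∈ Finset.range 2, (n : ℝ) * ((n:ℝ) - 1) * x ^ n / (Nat.factorial n) = 0 by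
    simp [Finset.sum_range_succ]] at h3
  simpa using h3

lemma nat_sq_le_two_pow : ∀ m : ℕ, 4 ≤ m → m^2 ≤ 2^m := by
  intro m hm
  induction m with
  | zero => omega
  | succ k ih =>
    rcases Nat.lt_or_ge k 4 with hk | hk
    · interval_cases k <;> omega
    · have h1 := ih (by omega)
      have h2 : 2*k + 1 ≤ k^2 := by nlinarith
      calc (k+1)^2 = k^2 + (2*k+1) := by ring
        _ ≤ 2^k + 2^k := by omega
        _ = 2^(k+1) := by ring

lemma G_hasSum (s : ℝ) :
    HasSum (fun n : ℕ =>
      (2:ℝ)^n * s^n / (Nat.factorial n) + (-2:ℝ)^n * s^n / (Nat.factorial n)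
      - 4 * ((n:ℝ) * ((n:ℝ)-1) * s^n / (Nat.factorial n))
      - 4 * ((n:ℝ) * ((n:ℝ)-1) * (-s)^n / (Nat.factorial n))
      - 16 * (s^n / (Nat.factorial n)) - 16 * ((-s)^n / (Nat.factorial n))
      + 12 * ((n:ℝ) * s^n / (Nat.factorial n)) + 12 * ((n:ℝ) * (-s)^n / (Nat.factorial n))
      + (if n = 0 then (30:ℝ) else 0) + (if n = 2 then -4*s^2 else 0))
    (Real.exp (2*s) + Real.exp ((-2)*s) - 4*(s^2 * Real.exp s) - 4*((-s)^2 * Real.exp (-s))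
      - 16 * Real.exp s - 16 * Real.exp (-s) + 12*(s * Real.exp s) + 12*((-s) * Real.exp (-s))
      + 30 + (-4*s^2)) := by
  have hA : HasSum (fun n : ℕ => (2:ℝ)^n * s^n / (Nat.factorial n)) (Real.exp (2*s)) :=
    (my_exp_hasSum (2*s)).congr_fun fun n => by rw [mul_pow]
  have hB : HasSum (fun n : ℕ => (-2:ℝ)^n * s^n / (Nat.factorial n)) (Real.exp ((-2)*s)) :=
    (my_exp_hasSum ((-2)*s)).congr_fun fun n => by rw [mul_pow]
  have hC := (shift2_hasSum s).mul_left 4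
  have hD := (shift2_hasSum (-s)).mul_left 4
  have hE := (my_exp_hasSum s).mul_left 16
  have hF := (my_exp_hasSum (-s)).mul_left 16
  have hG := (shift1_hasSum s).mul_left 12
  have hH := (shift1_hasSum (-s)).mul_left 12
  have hI : HasSum (fun n : ℕ => if n = 0 then (30:ℝ) else 0) 30 := hasSum_ite_eq 0 30
  have hJ : HasSum (fun n : ℕ => if n = 2 then -4*s^2 else 0) (-4*s^2) := hasSum_ite_eq 2 _
  exact ((((((((hA.add hB).sub hC).sub hD).sub hE).sub hF).add hG).add hH).add hI).add hJ

lemma G_nonneg (s : ℝ) :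
    0 ≤ Real.exp (2*s) + Real.exp ((-2)*s) - 4*(s^2 * Real.exp s) - 4*((-s)^2 * Real.exp (-s))
      - 16 * Real.exp s - 16 * Real.exp (-s) + 12*(s * Real.exp s) + 12*((-s) * Real.exp (-s))
      + 30 + (-4*s^2) := by
  refine hasSum_le (fun n => ?_) hasSum_zero (G_hasSum s)
  rcases Nat.even_or_odd n with he | ho
  · rw [he.neg_pow s, he.neg_pow (2:ℝ)]
    obtain ⟨k, rfl⟩ := he
    have hn4 : k + k = 0 ∨ k + k = 2 ∨ 4 ≤ k + k := by omega
    rcases hn4 with h0 | h2 | h4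
    · rw [h0]; norm_num
    · rw [h2]; norm_num [Nat.factorial]; linarith
    · set n := k + k with hn
      rw [if_neg (by omega), if_neg (by omega)]
      have heq : (2:ℝ)^n * s^n / (Nat.factorial n) + (2:ℝ)^n * s^n / (Nat.factorial n)
          - 4 * ((n:ℝ) * ((n:ℝ)-1) * s^n / (Nat.factorial n))
          - 4 * ((n:ℝ) * ((n:ℝ)-1) * s^n / (Nat.factorial n))
          - 16 * (s^n / (Nat.factorial n)) - 16 * (s^n / (Nat.factorial n))
          + 12 * ((n:ℝ) * s^n / (Nat.factorial n)) + 12 * ((n:ℝ) * s^n / (Nat.factorial n)) + 0 + 0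
          = (2*2^n - 8*(n:ℝ)^2 + 32*(n:ℝ) - 32) * (s^n / (Nat.factorial n)) := by ring
      rw [heq]
      have hnat : 4 * (n-2)^2 ≤ 2^n := by
        rcases Nat.lt_or_ge n 6 with h6 | h6
        · have : n = 4 := by omega
          rw [this]; norm_num
        · have h1 := nat_sq_le_two_pow (n-2) (by omega)
          calc 4 * (n-2)^2 ≤ 4 * 2^(n-2) := by omega
            _ = 2^2 * 2^(n-2) := by norm_num
            _ = 2^(n-2+2) := by rw [pow_add]; ring
            _ = 2^n := by congr 1; omega
      have hcast : (8:ℝ)*(n:ℝ)^2 - 32*(n:ℝ) + 32 ≤ 2 * 2^n := by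
        have h2 : ((4 * (n-2)^2 : ℕ) : ℝ) ≤ ((2^n : ℕ) : ℝ) := by exact_mod_cast hnat
        have h3 : ((n-2 : ℕ) : ℝ) = (n:ℝ) - 2 := by
          have : (2:ℕ) ≤ n := by omega
          push_cast [this]; ring
        push_cast [h3] at h2
        nlinarith
      have hsp : (0:ℝ) ≤ s^n / (Nat.factorial n) := by
        have : Even n := ⟨k, hn⟩
        have := this.pow_nonneg s
        positivity
      have hb : (0:ℝ) ≤ 2*2^n - 8*(n:ℝ)^2 + 32*(n:ℝ) - 32 := by
        have : ((2:ℕ):ℝ)^n = (2:ℝ)^n := by push_cast; ring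
        nlinarith
      exact mul_nonneg hb hsp
  · rw [ho.neg_pow s, ho.neg_pow (2:ℝ),
      if_neg (by rintro rfl; exact (Nat.not_odd_iff_even.2 (by norm_num)) ho),
      if_neg (by rintro rfl; exact (Nat.not_odd_iff_even.2 (by norm_num)) ho)]
    ring_nf
    exact le_refl _


noncomputable def Nf (u : ℝ) : ℝ := (u - 2) * Real.exp u + u + 2
noncomputable def sf1 (u : ℝ) : ℝ := (Real.exp u - 1 - u) * Real.exp u / (Real.exp u - 1)^2
noncomputable def sf2 (u : ℝ) : ℝ := Nf u * Real.exp u / (Real.exp u - 1)^3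

lemma hasDerivAt_Nf (u : ℝ) : HasDerivAt Nf ((u-1)*Real.exp u + 1) u := by
  have h := ((((hasDerivAt_id u).sub_const 2).mul (Real.hasDerivAt_exp u)).add
    (hasDerivAt_id u)).add_const 2
  refine h.congr_deriv ?_
  simp only [id_eq]
  ring

lemma hasDerivAt_Nf' (u : ℝ) : HasDerivAt (fun v => (v-1)*Real.exp v + 1) (u * Real.exp u) u := by
  have h := (((hasDerivAt_id u).sub_const 1).mul (Real.hasDerivAt_exp u)).add_const 1
  refine h.congr_deriv ?_
  simp only [id_eq]
  ring

lemma Nf'_pos (u : ℝ) (hu : 0 < u) : 0 < (u-1)*Real.exp u + 1 := by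
  have hmono : StrictMonoOn (fun v => (v-1)*Real.exp v + 1) (Set.Ici 0) := by
    apply strictMonoOn_of_deriv_pos (convex_Ici 0)
    · fun_prop
    · intro x hx
      rw [interior_Ici] at hx
      rw [(hasDerivAt_Nf' x).deriv]
      exact mul_pos hx (Real.exp_pos x)
  have := hmono (Set.self_mem_Ici) (le_of_lt hu : (0:ℝ) ≤ u) hu
  simpa using this

lemma Nf_pos (u : ℝ) (hu : 0 < u) : 0 < Nf u := by
  have hmono : StrictMonoOn Nf (Set.Ici 0) := by
    apply strictMonoOn_of_deriv_pos (convex_Ici 0)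
    · have : Continuous Nf := by unfold Nf; fun_prop
      exact this.continuousOn
    · intro x hx
      rw [interior_Ici] at hx
      rw [(hasDerivAt_Nf x).deriv]
      exact Nf'_pos x hx
  have := hmono (Set.self_mem_Ici) (le_of_lt hu : (0:ℝ) ≤ u) hu
  simpa [Nf] using this

lemma exp_sub_one_pos (u : ℝ) (hu : 0 < u) : 0 < Real.exp u - 1 := by
  have h : Real.exp 0 < Real.exp u := Real.exp_lt_exp.mpr hu
  rw [Real.exp_zero] at h
  linarith

lemma den_pos (u : ℝ) (hu : 0 < u) : 0 < 1 - Real.exp (-u) := by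
  have h : Real.exp (-u) < Real.exp 0 := Real.exp_lt_exp.mpr (by linarith)
  rw [Real.exp_zero] at h
  linarith

lemma hasDerivAt_f0 (u : ℝ) (hu : 0 < u) :
    HasDerivAt (fun v => v / (1 - Real.exp (-v))) (sf1 u) u := by
  have h1 : HasDerivAt (fun v : ℝ => Real.exp (-v)) (-Real.exp (-u)) u := by
    simpa using (hasDerivAt_neg u).exp
  have hden : HasDerivAt (fun v : ℝ => 1 - Real.exp (-v)) (Real.exp (-u)) u := by
    simpa using h1.const_sub 1
  have h := (hasDerivAt_id u).div hden (ne_of_gt (den_pos u hu))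
  refine h.congr_deriv ?_
  have hE : Real.exp u ≠ 0 := (Real.exp_pos u).ne'
  have hE1 : Real.exp u - 1 ≠ 0 := (exp_sub_one_pos u hu).ne'
  have hd : 1 - Real.exp (-u) ≠ 0 := (den_pos u hu).ne'
  simp only [sf1, Real.exp_neg, id_eq] at *
  field_simp

lemma hasDerivAt_sf1 (u : ℝ) (hu : 0 < u) : HasDerivAt sf1 (sf2 u) u := by
  have hE1 : Real.exp u - 1 ≠ 0 := (exp_sub_one_pos u hu).ne'
  have hnum : HasDerivAt (fun v => (Real.exp v - 1 - v) * Real.exp v)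
      ((Real.exp u - 1) * Real.exp u + (Real.exp u - 1 - u) * Real.exp u) u := by
    have := (((Real.hasDerivAt_exp u).sub_const 1).sub (hasDerivAt_id u)).mul
      (Real.hasDerivAt_exp u)
    exact this
  have hden : HasDerivAt (fun v => (Real.exp v - 1)^2)
      (2 * (Real.exp u - 1) * Real.exp u) u := by
    have := ((Real.hasDerivAt_exp u).sub_const 1).pow 2
    refine this.congr_deriv ?_
    simp
  have h := hnum.div hden (pow_ne_zero 2 hE1)
  have heq : ∀ v, sf1 v = (Real.exp v - 1 - v) * Real.exp v / (Real.exp v - 1)^2 := fun v => rfl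
  rw [show sf1 = fun v => (Real.exp v - 1 - v) * Real.exp v / (Real.exp v - 1)^2 from rfl]
  refine h.congr_deriv ?_
  simp only [sf2, Nf]
  field_simp
  ring

noncomputable def sigmaFn : ℝ → ℝ := fun s => if s = 0 then 1 else s / (1 - Real.exp (-s))

lemma deriv_sigmaFn (u : ℝ) (hu : u ∈ Set.Ioi (0:ℝ)) : deriv sigmaFn u = sf1 u := by
  have hev : sigmaFn =ᶠ[nhds u] (fun v => v / (1 - Real.exp (-v))) := by
    filter_upwards [isOpen_Ioi.mem_nhds hu] with v hv
    simp only [sigmaFn, if_neg (ne_of_gt (Set.mem_Ioi.mp hv))]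
  exact ((hasDerivAt_f0 u hu).congr_of_eventuallyEq hev).deriv

lemma iter2_sigmaFn (u : ℝ) (hu : u ∈ Set.Ioi (0:ℝ)) : iteratedDeriv 2 sigmaFn u = sf2 u := by
  rw [iteratedDeriv_succ, iteratedDeriv_one]
  have hev : deriv sigmaFn =ᶠ[nhds u] sf1 := by
    filter_upwards [isOpen_Ioi.mem_nhds hu] with v hv
    exact deriv_sigmaFn v hv
  rw [hev.deriv_eq]
  exact (hasDerivAt_sf1 u hu).deriv

noncomputable def Lg (u : ℝ) : ℝ := Real.log (Nf u) + u - 3 * Real.log (Real.exp u - 1)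
noncomputable def L1 (u : ℝ) : ℝ :=
  ((u-1)*Real.exp u + 1)/(Nf u) + 1 - 3*(Real.exp u/(Real.exp u - 1))
noncomputable def L2 (u : ℝ) : ℝ :=
  (u*Real.exp u * Nf u - ((u-1)*Real.exp u + 1)^2)/(Nf u)^2 + 3*(Real.exp u/(Real.exp u - 1)^2)

lemma log_sf2_eq (u : ℝ) (hu : 0 < u) : Real.log (sf2 u) = Lg u := by
  have hN := Nf_pos u hu
  have hE1 := exp_sub_one_pos u hu
  simp only [sf2, Lg]
  rw [Real.log_div (by positivity) (by positivity), Real.log_mul (by positivity) (by positivity),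
    Real.log_exp, Real.log_pow]
  norm_num

lemma hasDerivAt_Lg (u : ℝ) (hu : 0 < u) : HasDerivAt Lg (L1 u) u := by
  have hN := Nf_pos u hu
  have hE1 := exp_sub_one_pos u hu
  have h1 := (hasDerivAt_Nf u).log (ne_of_gt hN)
  have h3 := (((Real.hasDerivAt_exp u).sub_const 1).log (ne_of_gt hE1)).const_mul 3
  have h := (h1.add (hasDerivAt_id u)).sub h3
  have heq : Lg = fun v => Real.log (Nf v) + v - 3 * Real.log (Real.exp v - 1) := rfl
  rw [heq]
  exact h

lemma hasDerivAt_L1 (u : ℝ) (hu : 0 < u) : HasDerivAt L1 (L2 u) u := by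
  have hN := Nf_pos u hu
  have hE1 := exp_sub_one_pos u hu
  have h1 := (hasDerivAt_Nf' u).div (hasDerivAt_Nf u) (ne_of_gt hN)
  have h3 := ((Real.hasDerivAt_exp u).div ((Real.hasDerivAt_exp u).sub_const 1)
    (ne_of_gt hE1)).const_mul 3
  have h := (h1.add_const 1).sub h3
  have heq : L1 = fun v => ((v-1)*Real.exp v + 1)/(Nf v) + 1 - 3*(Real.exp v/(Real.exp v - 1)) := rfl
  rw [heq]
  refine h.congr_deriv ?_
  simp only [L2]
  field_simp
  ring

lemma L2_nonpos (s : ℝ) (hs : 0 < s) : L2 s ≤ 0 := by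
  have hN := Nf_pos s hs
  have hE1 := exp_sub_one_pos s hs
  have hE : (0:ℝ) < Real.exp s := Real.exp_pos s
  have hG := G_nonneg s
  have e2 : Real.exp (2*s) = Real.exp s * Real.exp s := by
    rw [two_mul, Real.exp_add]
  have em2 : Real.exp ((-2)*s) = (Real.exp s * Real.exp s)⁻¹ := by
    rw [show (-2)*s = -(2*s) by ring, Real.exp_neg, e2]
  have em1 : Real.exp (-s) = (Real.exp s)⁻¹ := Real.exp_neg s
  rw [e2, em2, em1] at hG
  set E := Real.exp s with hEdef
  have hF : 0 ≤ (E^2 - (s^2+2)*E + 1)*(E-1)^2 - 3*E*(Nf s)^2 := by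
    have key : (E^2 - (s^2+2)*E + 1)*(E-1)^2 - 3*E*(Nf s)^2
        = (E*E) * (E * E + (E * E)⁻¹ - 4*(s^2 * E) - 4*((-s)^2 * E⁻¹)
          - 16 * E - 16 * E⁻¹ + 12*(s * E) + 12*((-s) * E⁻¹) + 30 + (-4*s^2)) := by
      simp only [Nf]
      field_simp
      ring
    rw [key]
    exact mul_nonneg (by positivity) hG
  have hNne : (s - 2) * Real.exp s + s + 2 ≠ 0 := by
    have := hN; simp only [Nf] at this; linarith
  have hL2 : L2 s = (3*E*(Nf s)^2 - (E^2 - (s^2+2)*E + 1)*(E-1)^2)/((Nf s)^2*(E-1)^2) := by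
    simp only [L2, hEdef]
    have hE1ne : Real.exp s - 1 ≠ 0 := (exp_sub_one_pos s hs).ne'
    have hNs : Nf s ≠ 0 := hN.ne'
    field_simp
    simp only [Nf]
    ring
  rw [hL2]
  apply div_nonpos_of_nonpos_of_nonneg
  · linarith
  · positivity


theorem sigma_second_deriv_log_concave (s : ℝ) (hs : 0 < s) :
    iteratedDeriv 2 (fun u => Real.log (iteratedDeriv 2 sigmaFn u)) s ≤ 0 := by
  have hderiv : ∀ u ∈ Set.Ioi (0:ℝ),
      deriv (fun v => Real.log (iteratedDeriv 2 sigmaFn v)) u = L1 u := by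
    intro u hu
    have hev : (fun v => Real.log (iteratedDeriv 2 sigmaFn v)) =ᶠ[nhds u] Lg := by
      filter_upwards [isOpen_Ioi.mem_nhds hu] with v hv
      rw [iter2_sigmaFn v hv, log_sf2_eq v hv]
    exact ((hasDerivAt_Lg u hu).congr_of_eventuallyEq hev).deriv
  rw [iteratedDeriv_succ, iteratedDeriv_one]
  have hev2 : deriv (fun v => Real.log (iteratedDeriv 2 sigmaFn v)) =ᶠ[nhds s] L1 := by
    filter_upwards [isOpen_Ioi.mem_nhds (Set.mem_Ioi.mpr hs)] with v hv
    exact hderiv v hv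
  rw [hev2.deriv_eq, (hasDerivAt_L1 s hs).deriv]
  exact L2_nonpos s hs
end

section
/- Let $f : \mathbb{R} \to (0,\infty)$ be differentiable and logarithmically concave, and let $\lambda \in \mathbb{R}$ be fixed. Then the function $x \mapsto f(x) f(\lambda - x)$ is increasing on $(-\infty, \lambda/2)$ and decreasing on $(\lambda/2, \infty)$. -/
/-- A concave function on ℝ that is symmetric about `lam/2` is monotone on `Iio (lam/2)`. -/
lemma concave_symm_monoOn (g : ℝ → ℝ) (hg : ConcaveOn ℝ Set.univ g) (lam : ℝ)
    (hsymm : ∀ x, g (lam - x) = g x) : MonotoneOn g (Set.Iio (lam / 2)) := by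
  intro x hx y hy hxy
  rcases eq_or_lt_of_le hxy with rfl | hlt
  · exact le_rfl
  · have hx' : x < lam / 2 := hx
    have hy' : y < lam / 2 := hy
    have hden : 0 < lam - 2 * x := by linarith
    set a : ℝ := (lam - x - y) / (lam - 2 * x) with ha_def
    set b : ℝ := (y - x) / (lam - 2 * x) with hb_def
    have ha : 0 ≤ a := div_nonneg (by linarith) hden.le
    have hb : 0 ≤ b := div_nonneg (by linarith) hden.le
    have hab : a + b = 1 := by
      rw [ha_def, hb_def, ← add_div, div_eq_one_iff_eq hden.ne']
      ring
    have hpt : a • x + b • (lam - x) = y := by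
      rw [ha_def, hb_def]
      rw [smul_eq_mul, smul_eq_mul, div_mul_eq_mul_div, div_mul_eq_mul_div, ← add_div, div_eq_iff hden.ne']
      ring
    have := hg.2 (Set.mem_univ x) (Set.mem_univ (lam - x)) ha hb hab
    rw [hpt, hsymm x] at this
    calc g x = a * g x + b * g x := by rw [← add_mul, hab, one_mul]
    _ ≤ g y := this

theorem logConcave_product_mono (f : ℝ → ℝ) (hpos : ∀ x, 0 < f x)
    (hdiff : Differentiable ℝ f)
    (hconc : ConcaveOn ℝ Set.univ (fun x => Real.log (f x))) (lam : ℝ) :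
    MonotoneOn (fun x => f x * f (lam - x)) (Set.Iio (lam / 2)) ∧
    AntitoneOn (fun x => f x * f (lam - x)) (Set.Ioi (lam / 2)) := by
  set g : ℝ → ℝ := fun x => Real.log (f x) + Real.log (f (lam - x)) with hg_def
  have hg2 : ConcaveOn ℝ Set.univ (fun x => Real.log (f (lam - x))) := by
    constructor
    · exact convex_univ
    · intro x _ y _ a b ha hb hab
      have key : lam - (a • x + b • y) = a • (lam - x) + b • (lam - y) := by
        simp only [smul_eq_mul]; linear_combination (-lam) * hab
      simp only [key]
      exact hconc.2 (Set.mem_univ _) (Set.mem_univ _) ha hb hab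
  have hgconc : ConcaveOn ℝ Set.univ g := hconc.add hg2
  have hsymm : ∀ x, g (lam - x) = g x := by
    intro x; simp [hg_def, sub_sub_cancel, add_comm]
  have hmono : MonotoneOn g (Set.Iio (lam / 2)) := concave_symm_monoOn g hgconc lam hsymm
  have hprod : ∀ x, f x * f (lam - x) = Real.exp (g x) := by
    intro x
    rw [hg_def, Real.exp_add, Real.exp_log (hpos x), Real.exp_log (hpos _)]
  constructor
  · intro x hx y hy hxy
    simp only [hprod]
    exact Real.exp_le_exp.mpr (hmono hx hy hxy)
  · intro x hx y hy hxy
    simp only [hprod]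
    apply Real.exp_le_exp.mpr
    have hx' : lam / 2 < x := hx
    have hy' : lam / 2 < y := hy
    have h1 : lam - y ∈ Set.Iio (lam / 2) := by simp [Set.mem_Iio]; linarith
    have h2 : lam - x ∈ Set.Iio (lam / 2) := by simp [Set.mem_Iio]; linarith
    calc g y = g (lam - y) := (hsymm y).symm
    _ ≤ g (lam - x) := hmono h1 h2 (by linarith)
    _ = g x := hsymm x
end

section
/- Let $f : [a,b] \to \mathbb{R}$ be twice differentiable with $m \le f''(t) \le M$ for $t \in (a,b)$, and set $S_2 = \frac{f'(b)-f'(a)}{b-a}$. Then $\frac{2m - 3S_2}{12}(b-a)^2 \le \frac{1}{b-a}\int_a^b f(t)\,dt - \frac{f(a)+f(b)}{2} \le \frac{2M - 3S_2}{12}(b-a)^2$. -/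
open Set intervalIntegral

lemma hh_aux (f f' f'' : ℝ → ℝ) (a b m : ℝ) (hab : a < b)
    (hf : ∀ t ∈ Set.Icc a b, HasDerivAt f (f' t) t)
    (hf' : ∀ t ∈ Set.Icc a b, HasDerivAt f' (f'' t) t)
    (hm : ∀ t ∈ Set.Ioo a b, m ≤ f'' t) :
    (b-a)/2*(f a + f b) - (b-a)^2/4*(f' b - f' a) + m*(b-a)^3/6 ≤ ∫ t in a..b, f t := by
  set K : ℝ → ℝ := fun t => (b-a)^2/4 - (t-a)*(b-t)/2 with hKdef
  set P : ℝ → ℝ := fun t => (b-a)^2/4*t - (-(t^3)/3 + (a+b)*t^2/2 - a*b*t)/2 with hPdef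
  have hK : ∀ x : ℝ, HasDerivAt K (x - (a+b)/2) x := by
    intro x
    have h1 : HasDerivAt (fun t : ℝ => (t-a)*(b-t)/2)
        ((1*(b-x) + (x-a)*(0-1))/2) x :=
      (((hasDerivAt_id x).sub_const a).mul
        ((hasDerivAt_const x b).sub (hasDerivAt_id x))).div_const 2
    have h2 := (hasDerivAt_const x ((b-a)^2/4)).sub h1
    refine h2.congr_deriv ?_
    ring
  have hP : ∀ x : ℝ, HasDerivAt P (K x) x := by
    intro x
    have h1 : HasDerivAt (fun t : ℝ => -(t^3)/3 + (a+b)*t^2/2 - a*b*t)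
        (-(3*x^2)/3 + (a+b)*(2*x)/2 - a*b*1) x := by
      have ha : HasDerivAt (fun t : ℝ => -(t^3)/3) (-(3*x^2)/3) x := by
        simpa using ((hasDerivAt_pow 3 x).neg.div_const 3)
      have hb : HasDerivAt (fun t : ℝ => (a+b)*t^2/2) ((a+b)*(2*x)/2) x := by
        simpa [pow_one] using (((hasDerivAt_pow 2 x).const_mul (a+b)).div_const 2)
      have hc : HasDerivAt (fun t : ℝ => a*b*t) (a*b*1) x := (hasDerivAt_id x).const_mul (a*b)
      exact (ha.add hb).sub hc
    have h2 : HasDerivAt (fun t : ℝ => (b-a)^2/4*t) ((b-a)^2/4*1) x :=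
      (hasDerivAt_id x).const_mul _
    have h3 := h2.sub (h1.div_const 2)
    refine h3.congr_deriv ?_
    simp only [hKdef]
    ring
  have hfc : ContinuousOn f (Set.Icc a b) := fun t ht =>
    (hf t ht).continuousAt.continuousWithinAt
  have hf'c : ContinuousOn f' (Set.Icc a b) := fun t ht =>
    (hf' t ht).continuousAt.continuousWithinAt
  have hfint : ∀ x ∈ Set.Icc a b, IntervalIntegrable f MeasureTheory.volume a x := by
    intro x hx
    apply ContinuousOn.intervalIntegrable
    apply hfc.mono
    rw [Set.uIcc_of_le hx.1]
    exact Set.Icc_subset_Icc le_rfl hx.2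
  set G : ℝ → ℝ := fun t => K t * f' t - (t - (a+b)/2) * f t + (∫ s in a..t, f s) - m * P t
    with hGdef
  have hprim : ContinuousOn (fun x => ∫ s in a..x, f s) (Set.Icc a b) := by
    have h := intervalIntegral.continuousOn_primitive_interval
      (μ := MeasureTheory.volume) (f := f) (a := a) (b := b)
      (by rw [Set.uIcc_of_le hab.le]; exact hfc.integrableOn_Icc)
    rwa [Set.uIcc_of_le hab.le] at h
  have hGcont : ContinuousOn G (Set.Icc a b) := by
    refine (((?_ : ContinuousOn K _).mul hf'c).sub
      ((continuousOn_id.sub continuousOn_const).mul hfc)).add hprim |>.sub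
      (continuousOn_const.mul (fun x _ => (hP x).continuousAt.continuousWithinAt))
    exact fun x _ => (hK x).continuousAt.continuousWithinAt
  have hGderiv : ∀ x ∈ Set.Ioo a b, HasDerivAt G (K x * (f'' x - m)) x := by
    intro x hx
    have hx' : x ∈ Set.Icc a b := Set.mem_Icc_of_Ioo hx
    have h1 : HasDerivAt (fun t => K t * f' t) ((x - (a+b)/2) * f' x + K x * f'' x) x :=
      (hK x).mul (hf' x hx')
    have h2 : HasDerivAt (fun t => (t - (a+b)/2) * f t) (1 * f x + (x - (a+b)/2) * f' x) x :=
      ((hasDerivAt_id x).sub_const _).mul (hf x hx')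
    have h3 : HasDerivAt (fun u => ∫ s in a..u, f s) (f x) x :=
      intervalIntegral.integral_hasDerivAt_right (hfint x hx')
        (ContinuousAt.stronglyMeasurableAtFilter isOpen_Ioo
          (fun y hy => (hf y (Set.mem_Icc_of_Ioo hy)).continuousAt) x hx)
        (hf x hx').continuousAt
    have h4 : HasDerivAt (fun t => m * P t) (m * K x) x := (hP x).const_mul m
    have h5 := ((h1.sub h2).add h3).sub h4
    refine h5.congr_deriv ?_
    ring
  have hmono : MonotoneOn G (Set.Icc a b) := by
    apply monotoneOn_of_deriv_nonneg (convex_Icc a b) hGcont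
    · intro x hx
      rw [interior_Icc] at hx
      exact (hGderiv x hx).differentiableAt.differentiableWithinAt
    · intro x hx
      rw [interior_Icc] at hx
      rw [(hGderiv x hx).deriv]
      have hK0 : 0 ≤ K x := by
        simp only [hKdef]
        nlinarith [sq_nonneg ((x - a) - (b - x)), hx.1, hx.2]
      exact mul_nonneg hK0 (sub_nonneg.2 (hm x hx))
  have hGle : G a ≤ G b :=
    hmono (Set.left_mem_Icc.2 hab.le) (Set.right_mem_Icc.2 hab.le) hab.le
  simp only [hGdef, hKdef, hPdef, intervalIntegral.integral_same] at hGle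
  nlinarith [hGle]

theorem hermite_hadamard_refinement (f f' f'' : ℝ → ℝ) (a b m M : ℝ) (hab : a < b)
    (hf : ∀ t ∈ Set.Icc a b, HasDerivAt f (f' t) t)
    (hf' : ∀ t ∈ Set.Icc a b, HasDerivAt f' (f'' t) t)
    (hm : ∀ t ∈ Set.Ioo a b, m ≤ f'' t) (hM : ∀ t ∈ Set.Ioo a b, f'' t ≤ M) :
    (2 * m - 3 * ((f' b - f' a) / (b - a))) / 12 * (b - a) ^ 2 ≤
        (1 / (b - a)) * (∫ t in a..b, f t) - (f a + f b) / 2 ∧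
      (1 / (b - a)) * (∫ t in a..b, f t) - (f a + f b) / 2 ≤
        (2 * M - 3 * ((f' b - f' a) / (b - a))) / 12 * (b - a) ^ 2 := by
  have hba : (0:ℝ) < b - a := sub_pos.2 hab
  have h1 := hh_aux f f' f'' a b m hab hf hf' hm
  have h2 := hh_aux (fun t => -f t) (fun t => -f' t) (fun t => -f'' t) a b (-M) hab
    (fun t ht => (hf t ht).neg) (fun t ht => (hf' t ht).neg)
    (fun t ht => neg_le_neg (hM t ht))
  rw [intervalIntegral.integral_neg] at h2
  constructor
  · rw [← sub_nonneg]
    have h : (1 / (b - a)) * (∫ t in a..b, f t) - (f a + f b) / 2 -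
        (2 * m - 3 * ((f' b - f' a) / (b - a))) / 12 * (b - a) ^ 2 =
        ((∫ t in a..b, f t) - ((b-a)/2*(f a + f b) - (b-a)^2/4*(f' b - f' a) + m*(b-a)^3/6))
          / (b - a) := by
      field_simp
      ring
    rw [h]
    exact div_nonneg (sub_nonneg.2 h1) hba.le
  · rw [← sub_nonneg]
    have h : (2 * M - 3 * ((f' b - f' a) / (b - a))) / 12 * (b - a) ^ 2 -
        ((1 / (b - a)) * (∫ t in a..b, f t) - (f a + f b) / 2) =
        (-(∫ t in a..b, f t) - ((b-a)/2*(-f a + -f b) - (b-a)^2/4*(-f' b - -f' a)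
          + (-M)*(b-a)^3/6)) / (b - a) := by
      field_simp
      ring
    rw [h]
    exact div_nonneg (sub_nonneg.2 h2) hba.le
end

section
/- For every integer $k \ge 5$, the quantity $Q(k) = 6(66k^2 + 35k - 78) + 3(33k^2 - 148k + 12)2^k + 2(2k^2 - 31k + 66)3^k$ is positive. -/
theorem Q_pos (k : ℕ) (hk : 5 ≤ k) :
    (0 : ℤ) < 6 * (66 * (k : ℤ) ^ 2 + 35 * k - 78) +
      3 * (33 * (k : ℤ) ^ 2 - 148 * k + 12) * 2 ^ k +
      2 * (2 * (k : ℤ) ^ 2 - 31 * k + 66) * 3 ^ k := by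
  rcases le_or_gt k 12 with h | h
  · interval_cases k <;> decide
  · have h2 : (0:ℤ) < 2 ^ k := by positivity
    have h3 : (0:ℤ) < 3 ^ k := by positivity
    have hk' : (13:ℤ) ≤ (k:ℤ) := by exact_mod_cast h
    have a : (0:ℤ) < 33*(k:ℤ)^2 - 148*k + 12 := by nlinarith
    have b : (0:ℤ) < 2*(k:ℤ)^2 - 31*k + 66 := by nlinarith
    have c : (0:ℤ) < 66*(k:ℤ)^2 + 35*k - 78 := by nlinarith
    nlinarith [mul_pos a h2, mul_pos b h3]
end

section
/- For every positive integer $n$ and every $x > 0$, the $n$-th derivative of the digamma function satisfies $\psi^{(n)}(x) = (-1)^{n+1}\int_0^\infty \frac{t^n}{1-e^{-t}} e^{-xt}\,dt$. -/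
open MeasureTheory Filter Set Topology

noncomputable def S (m : ℕ) (x : ℝ) : ℝ := ∑' k : ℕ, ((x + ((k : ℝ) + 1)) ^ m)⁻¹

noncomputable def T1 (x : ℝ) : ℝ := ∑' k : ℕ, (((k : ℝ) + 2)⁻¹ - (x + ((k : ℝ) + 1))⁻¹)

lemma summable_sq : Summable (fun k : ℕ => (((k : ℝ) + 1) ^ 2)⁻¹) := by
  have h := Real.summable_one_div_nat_pow.mpr (by norm_num : 1 < 2)
  have := (summable_nat_add_iff 1).mpr h
  simpa [one_div] using this

lemma bound1 {y : ℝ} (hy : -(2⁻¹ : ℝ) < y) (k m : ℕ) (hm : 2 ≤ m) :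
    ((y + ((k : ℝ) + 1)) ^ m)⁻¹ ≤ 2 ^ m * (((k : ℝ) + 1) ^ 2)⁻¹ := by
  have hk : (0 : ℝ) ≤ k := k.cast_nonneg
  have hpos : (0 : ℝ) < ((k : ℝ) + 1) / 2 := by positivity
  have h1 : ((k : ℝ) + 1) / 2 ≤ y + ((k : ℝ) + 1) := by linarith
  have h2 : (((k : ℝ) + 1) / 2) ^ m ≤ (y + ((k : ℝ) + 1)) ^ m := pow_le_pow_left₀ hpos.le h1 m
  have h3 : ((y + ((k : ℝ) + 1)) ^ m)⁻¹ ≤ ((((k : ℝ) + 1) / 2) ^ m)⁻¹ :=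
    inv_anti₀ (by positivity) h2
  refine h3.trans ?_
  rw [div_pow, inv_div, div_eq_mul_inv]
  have h4 : ((k : ℝ) + 1) ^ 2 ≤ ((k : ℝ) + 1) ^ m := pow_le_pow_right₀ (by linarith) hm
  exact mul_le_mul_of_nonneg_left (inv_anti₀ (by positivity) h4) (by positivity)

lemma summable_S' {m : ℕ} (hm : 2 ≤ m) {y : ℝ} (hy : -(2⁻¹ : ℝ) < y) :
    Summable fun k : ℕ => ((y + ((k : ℝ) + 1)) ^ m)⁻¹ := by
  refine Summable.of_nonneg_of_le (fun k => ?_) (fun k => bound1 hy k m hm)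
    (summable_sq.mul_left _)
  have hk : (0 : ℝ) ≤ k := k.cast_nonneg
  have : (0 : ℝ) < y + ((k : ℝ) + 1) := by linarith
  positivity

lemma hasDerivAt_term {k m : ℕ} (hm : 1 ≤ m) {y : ℝ} (hy : 0 < y + ((k : ℝ) + 1)) :
    HasDerivAt (fun z : ℝ => ((z + ((k : ℝ) + 1)) ^ m)⁻¹)
      (-(m : ℝ) * ((y + ((k : ℝ) + 1)) ^ (m + 1))⁻¹) y := by
  have hid : HasDerivAt (fun z : ℝ => z + ((k : ℝ) + 1)) 1 y := (hasDerivAt_id y).add_const _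
  have hpow : HasDerivAt (fun z : ℝ => (z + ((k : ℝ) + 1)) ^ m)
      ((m : ℝ) * (y + ((k : ℝ) + 1)) ^ (m - 1)) y := by
    simpa using hid.fun_pow m
  have h := hpow.inv (pow_ne_zero m hy.ne')
  refine h.congr_deriv ?_
  have hc := hy.ne'
  field_simp
  rw [← pow_add]
  have e : m - 1 + (m + 1) = m * 2 := by omega
  rw [e, ← pow_mul]

lemma hasDerivAt_S {m : ℕ} (hm : 2 ≤ m) {x : ℝ} (hx : -(2⁻¹ : ℝ) < x) :
    HasDerivAt (S m) (-(m : ℝ) * S (m + 1) x) x := by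
  have key := hasDerivAt_tsum_of_isPreconnected
    (t := Ioi (-(2⁻¹ : ℝ)))
    (u := fun k : ℕ => (m : ℝ) * (2 ^ (m + 1) * (((k : ℝ) + 1) ^ 2)⁻¹))
    (g := fun (k : ℕ) (y : ℝ) => ((y + ((k : ℝ) + 1)) ^ m)⁻¹)
    (g' := fun (k : ℕ) (y : ℝ) => -(m : ℝ) * ((y + ((k : ℝ) + 1)) ^ (m + 1))⁻¹)
    (y₀ := 1) (y := x)
    (by simpa [mul_assoc] using (summable_sq.mul_left ((m : ℝ) * 2 ^ (m + 1))))
    isOpen_Ioi isPreconnected_Ioi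
    (fun k y hy => hasDerivAt_term (by omega) (by
        have hk : (0:ℝ) ≤ k := k.cast_nonneg
        simp only [mem_Ioi] at hy
        linarith))
    (fun k y hy => ?_) (by norm_num) ?_ hx
  · have : (fun z => ∑' k : ℕ, ((z + ((k : ℝ) + 1)) ^ m)⁻¹) = S m := rfl
    rw [this] at key
    refine key.congr_deriv ?_
    rw [S, ← tsum_mul_left]
  · simp only [mem_Ioi] at hy
    show ‖-(m : ℝ) * ((y + ((k : ℝ) + 1)) ^ (m + 1))⁻¹‖ ≤ (m : ℝ) * (2 ^ (m + 1) * (((k : ℝ) + 1) ^ 2)⁻¹)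
    rw [norm_mul, norm_neg, Real.norm_natCast]
    have hk : (0 : ℝ) ≤ k := k.cast_nonneg
    refine mul_le_mul_of_nonneg_left ?_ m.cast_nonneg
    have hb := bound1 hy k (m + 1) (by omega)
    have hpos : (0 : ℝ) < y + ((k : ℝ) + 1) := by linarith
    rwa [Real.norm_of_nonneg (by positivity)]
  · exact summable_S' hm (by norm_num)

lemma hasDerivAt_T1 {x : ℝ} (hx : -(2⁻¹ : ℝ) < x) : HasDerivAt T1 (S 2 x) x := by
  have key := hasDerivAt_tsum_of_isPreconnected
    (t := Ioi (-(2⁻¹ : ℝ)))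
    (u := fun k : ℕ => 2 ^ 2 * (((k : ℝ) + 1) ^ 2)⁻¹)
    (g := fun (k : ℕ) (y : ℝ) => (((k : ℝ) + 2)⁻¹ - (y + ((k : ℝ) + 1))⁻¹))
    (g' := fun (k : ℕ) (y : ℝ) => ((y + ((k : ℝ) + 1)) ^ 2)⁻¹)
    (y₀ := 1) (y := x)
    (summable_sq.mul_left _)
    isOpen_Ioi isPreconnected_Ioi
    (fun k y hy => ?_)
    (fun k y hy => ?_) (by norm_num) ?_ hx
  · exact key
  · simp only [mem_Ioi] at hy
    have hk : (0 : ℝ) ≤ k := k.cast_nonneg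
    have hpos : (0 : ℝ) < y + ((k : ℝ) + 1) := by linarith
    have h := hasDerivAt_term (k := k) (m := 1) le_rfl hpos
    simpa using (h.const_sub (((k : ℝ) + 2)⁻¹))
  · simp only [mem_Ioi] at hy
    have hk : (0 : ℝ) ≤ k := k.cast_nonneg
    have hpos : (0 : ℝ) < y + ((k : ℝ) + 1) := by linarith
    have hb := bound1 hy k 2 le_rfl
    show ‖((y + ((k : ℝ) + 1)) ^ 2)⁻¹‖ ≤ 2 ^ 2 * (((k : ℝ) + 1) ^ 2)⁻¹
    rwa [Real.norm_of_nonneg (by positivity)]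
  · apply Summable.congr (f := fun _ : ℕ => (0 : ℝ)) summable_zero
    intro k
    have : (1 : ℝ) + ((k : ℝ) + 1) = (k : ℝ) + 2 := by ring
    simp [this]

noncomputable def digamma : ℝ → ℝ := deriv (fun x => Real.log (Real.Gamma x))

lemma differentiableAt_logGamma {x : ℝ} (hx : 0 < x) :
    DifferentiableAt ℝ (fun y => Real.log (Real.Gamma y)) x := by
  have hne : ∀ m : ℕ, x ≠ -m := by
    intro m
    have : (0 : ℝ) ≤ m := m.cast_nonneg
    intro h; rw [h] at hx; linarith
  exact (Real.differentiableAt_Gamma hne).log (Real.Gamma_ne_zero hne)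

lemma logGamma_rec {y : ℝ} (hy : 0 < y) :
    Real.log (Real.Gamma (y + 1)) = Real.log (Real.Gamma y) + Real.log y := by
  rw [Real.Gamma_add_one hy.ne', Real.log_mul hy.ne' (Real.Gamma_pos_of_pos hy).ne', add_comm]

lemma digamma_rec {x : ℝ} (hx : 0 < x) : digamma (x + 1) = digamma x + x⁻¹ := by
  have h1 : digamma (x + 1) = deriv (fun y => Real.log (Real.Gamma (y + 1))) x :=
    (deriv_comp_add_const _ _ _).symm
  rw [h1]
  have h2 : (fun y => Real.log (Real.Gamma (y + 1))) =ᶠ[𝓝 x]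
      (fun y => Real.log (Real.Gamma y) + Real.log y) := by
    filter_upwards [eventually_gt_nhds hx] with y hy using logGamma_rec hy
  rw [h2.deriv_eq, deriv_fun_add (differentiableAt_logGamma hx) (Real.differentiableAt_log hx.ne'),
    Real.deriv_log]
  rfl

lemma digamma_le_log {x : ℝ} (hx : 0 < x) : digamma x ≤ Real.log x := by
  have hc := Real.convexOn_log_Gamma
  have h := hc.deriv_le_slope (mem_Ioi.2 hx) (mem_Ioi.2 (by linarith : (0:ℝ) < x + 1))
    (by linarith) ((differentiableAt_logGamma hx : _))
  rw [slope_def_field] at h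
  have he : (Real.log ∘ Real.Gamma) (x + 1) - (Real.log ∘ Real.Gamma) x = Real.log x := by
    simp only [Function.comp_apply, logGamma_rec hx]; ring
  rw [he, add_sub_cancel_left, div_one] at h
  exact h

lemma log_le_digamma {x : ℝ} (hx : 0 < x) : Real.log x ≤ digamma (x + 1) := by
  have hc := Real.convexOn_log_Gamma
  have h := hc.slope_le_deriv (mem_Ioi.2 hx) (mem_Ioi.2 (by linarith : (0:ℝ) < x + 1))
    (by linarith) ((differentiableAt_logGamma (by linarith) : _))
  rw [slope_def_field] at h
  have he : (Real.log ∘ Real.Gamma) (x + 1) - (Real.log ∘ Real.Gamma) x = Real.log x := by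
    simp only [Function.comp_apply, logGamma_rec hx]; ring
  rw [he, add_sub_cancel_left, div_one] at h
  exact h

lemma digamma_add_nat {x : ℝ} (hx : 0 < x) (N : ℕ) :
    digamma (x + N) = digamma x + ∑ k ∈ Finset.range N, (x + k)⁻¹ := by
  induction N with
  | zero => simp
  | succ N ih =>
    have hxN : 0 < x + N := by have : (0:ℝ) ≤ N := N.cast_nonneg; linarith
    have : x + (N + 1 : ℕ) = (x + N) + 1 := by push_cast; ring
    rw [this, digamma_rec hxN, ih, Finset.sum_range_succ]
    ring

lemma log_ratio_tendsto (a b : ℝ) :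
    Tendsto (fun N : ℕ => Real.log ((N : ℝ) + a) - Real.log ((N : ℝ) + b)) atTop (𝓝 0) := by
  have hinv : Tendsto (fun N : ℕ => ((N : ℝ))⁻¹) atTop (𝓝 0) :=
    tendsto_inv_atTop_zero.comp tendsto_natCast_atTop_atTop
  have h₁ : Tendsto (fun N : ℕ => 1 + a * ((N : ℝ))⁻¹) atTop (𝓝 1) := by
    have := (hinv.const_mul a).const_add 1
    simpa using this
  have h₂ : Tendsto (fun N : ℕ => 1 + b * ((N : ℝ))⁻¹) atTop (𝓝 1) := by
    have := (hinv.const_mul b).const_add 1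
    simpa using this
  have hq : Tendsto (fun N : ℕ => ((N : ℝ) + a) / ((N : ℝ) + b)) atTop (𝓝 1) := by
    have hdiv := h₁.div h₂ one_ne_zero
    rw [div_one] at hdiv
    apply hdiv.congr'
    filter_upwards [tendsto_natCast_atTop_atTop.eventually_gt_atTop (max (|a|) (|b|))] with N hN
    have h0 : (0 : ℝ) < N := by
      have : (0 : ℝ) ≤ |a| ⊔ |b| := (abs_nonneg a).trans (le_max_left _ _)
      linarith
    have hb0 : (0 : ℝ) < (N : ℝ) + b := by
      have : |b| ≤ max (|a|) (|b|) := le_max_right _ _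
      have := neg_abs_le b
      linarith [lt_of_le_of_lt (le_max_right (|a|) (|b|)) hN]
    show (1 + a * (N:ℝ)⁻¹) / (1 + b * (N:ℝ)⁻¹) = (N + a) / (N + b)
    field_simp
  have hlog := (Real.continuousAt_log one_ne_zero).tendsto.comp hq
  rw [Real.log_one] at hlog
  apply hlog.congr'
  filter_upwards [tendsto_natCast_atTop_atTop.eventually_gt_atTop (max (|a|) (|b|))] with N hN
  have ha0 : (0 : ℝ) < (N : ℝ) + a := by
    have := neg_abs_le a
    linarith [lt_of_le_of_lt (le_max_left (|a|) (|b|)) hN]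
  have hb0 : (0 : ℝ) < (N : ℝ) + b := by
    have := neg_abs_le b
    linarith [lt_of_le_of_lt (le_max_right (|a|) (|b|)) hN]
  simp only [Function.comp_apply]
  rw [Real.log_div ha0.ne' hb0.ne']

lemma summable_T {x : ℝ} (hx : 0 < x) :
    Summable (fun k : ℕ => ((1 : ℝ) + k)⁻¹ - (x + k)⁻¹) := by
  have hsq : Summable (fun k : ℕ => ((k : ℝ) ^ 2)⁻¹) := by
    have := Real.summable_one_div_nat_pow.mpr (by norm_num : 1 < 2)
    simpa [one_div] using this
  refine Summable.of_norm_bounded_eventually (g := fun k => |x - 1| * ((k : ℝ) ^ 2)⁻¹)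
    (hsq.mul_left _) ?_
  rw [Nat.cofinite_eq_atTop]
  filter_upwards [eventually_ge_atTop 1] with k hk
  have hk1 : (1 : ℝ) ≤ k := by exact_mod_cast hk
  have hxk : (0 : ℝ) < x + k := by linarith
  have h1k : (0 : ℝ) < 1 + k := by linarith
  have e : ((1 : ℝ) + k)⁻¹ - (x + k)⁻¹ = (x - 1) * (((1 + (k:ℝ)) * (x + k))⁻¹) := by
    field_simp
    ring
  rw [e, norm_mul, Real.norm_eq_abs, Real.norm_eq_abs]
  refine mul_le_mul_of_nonneg_left ?_ (abs_nonneg _)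
  rw [abs_of_nonneg (by positivity)]
  have : (k : ℝ) ^ 2 ≤ (1 + (k:ℝ)) * (x + k) := by nlinarith
  exact inv_anti₀ (by positivity) this

lemma digamma_eq {x : ℝ} (hx : 0 < x) :
    digamma x = digamma 1 + ∑' k : ℕ, (((1 : ℝ) + k)⁻¹ - (x + k)⁻¹) := by
  have hT := summable_T hx
  have h1 : Tendsto (fun N : ℕ => ∑ k ∈ Finset.range N, (((1 : ℝ) + k)⁻¹ - (x + k)⁻¹)) atTop
      (𝓝 (∑' k : ℕ, (((1 : ℝ) + k)⁻¹ - (x + k)⁻¹))) := hT.hasSum.tendsto_sum_nat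
  have h2 : ∀ N : ℕ, ∑ k ∈ Finset.range N, (((1 : ℝ) + k)⁻¹ - (x + k)⁻¹) =
      (digamma x - digamma 1) + (digamma (1 + N) - digamma (x + N)) := by
    intro N
    have ha := digamma_add_nat one_pos N
    have hb := digamma_add_nat hx N
    rw [Finset.sum_sub_distrib]
    have ha' : ∑ k ∈ Finset.range N, ((1 : ℝ) + k)⁻¹ = digamma (1 + N) - digamma 1 := by
      rw [ha]; ring
    have hb' : ∑ k ∈ Finset.range N, ((x : ℝ) + k)⁻¹ = digamma (x + N) - digamma x := by
      rw [hb]; ring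
    rw [ha', hb']; ring
  have h3 : Tendsto (fun N : ℕ => digamma (1 + N) - digamma (x + N)) atTop (𝓝 0) := by
    have hlow := log_ratio_tendsto 0 x
    have hup := log_ratio_tendsto 1 (x - 1)
    refine tendsto_of_tendsto_of_tendsto_of_le_of_le' hlow hup ?_ ?_
    · filter_upwards [eventually_ge_atTop 1] with N hN
      have hN1 : (1 : ℝ) ≤ N := by exact_mod_cast hN
      have hNpos : (0 : ℝ) < N := by linarith
      have l1 : Real.log N ≤ digamma (1 + N) := by
        have := log_le_digamma hNpos
        rwa [add_comm] at this
      have l2 : digamma (x + N) ≤ Real.log (x + N) := digamma_le_log (by linarith)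
      have e1 : (N : ℝ) + 0 = (N : ℝ) := by ring
      have e2 : (N : ℝ) + x = x + N := by ring
      rw [e1, e2]
      linarith
    · filter_upwards [eventually_ge_atTop 1] with N hN
      have hN1 : (1 : ℝ) ≤ N := by exact_mod_cast hN
      have l1 : digamma (1 + N) ≤ Real.log (1 + N) := digamma_le_log (by linarith)
      have l2 : Real.log (x + N - 1) ≤ digamma (x + N) := by
        have h := log_le_digamma (show (0:ℝ) < x + N - 1 by linarith)
        have e : x + N - 1 + 1 = x + N := by ring
        rwa [e] at h
      have e1 : (N : ℝ) + 1 = 1 + N := by ring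
      have e2 : (N : ℝ) + (x - 1) = x + N - 1 := by ring
      rw [e1, e2]
      linarith
  have h4 : Tendsto (fun N : ℕ => (digamma x - digamma 1) + (digamma (1 + N) - digamma (x + N)))
      atTop (𝓝 ((digamma x - digamma 1) + 0)) := tendsto_const_nhds.add h3
  have h5 := tendsto_nhds_unique (h1.congr h2) h4
  rw [add_zero] at h5
  rw [h5]
  ring

lemma hasDerivAt_inv_pow {p : ℕ} (hp : 1 ≤ p) {x : ℝ} (hx : x ≠ 0) :
    HasDerivAt (fun y : ℝ => (y ^ p)⁻¹) (-(p : ℝ) * (x ^ (p + 1))⁻¹) x := by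
  have h := (hasDerivAt_pow p x).inv (pow_ne_zero p hx)
  refine h.congr_deriv ?_
  field_simp
  rw [← pow_add]
  have e : p - 1 + (p + 1) = p * 2 := by omega
  rw [e, ← pow_mul]

lemma iteratedDeriv_digamma : ∀ n : ℕ, 1 ≤ n → ∀ x : ℝ, 0 < x →
    iteratedDeriv n digamma x =
      (-1 : ℝ) ^ (n + 1) * (n.factorial : ℝ) * ((x ^ (n + 1))⁻¹ + S (n + 1) x) := by
  intro n
  induction n with
  | zero => omega
  | succ m ih =>
    intro _ x hx
    rcases Nat.eq_zero_or_pos m with hm | hm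
    · subst hm
      rw [iteratedDeriv_one]
      have hev : digamma =ᶠ[𝓝 x] fun y => digamma 1 + 1 - y⁻¹ + T1 y := by
        filter_upwards [isOpen_Ioi.mem_nhds hx] with y hy
        rw [digamma_eq hy, Summable.tsum_eq_zero_add (summable_T hy)]
        have ht : ∑' k : ℕ, (((1 : ℝ) + (↑(k + 1) : ℝ))⁻¹ - (y + (↑(k + 1) : ℝ))⁻¹) = T1 y := by
          rw [T1]
          apply tsum_congr
          intro k
          push_cast
          have e1 : (1 : ℝ) + ((k : ℝ) + 1) = (k : ℝ) + 2 := by ring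
          rw [e1]
        rw [ht]
        norm_num
        ring
      rw [hev.deriv_eq]
      have hT1 := hasDerivAt_T1 (show -(2⁻¹ : ℝ) < x by linarith)
      have hinv := hasDerivAt_inv hx.ne'
      have hd : HasDerivAt (fun y : ℝ => digamma 1 + 1 - y⁻¹ + T1 y) ((x ^ 2)⁻¹ + S 2 x) x := by
        have h1 := (hinv.const_sub (digamma 1 + 1)).add hT1
        refine h1.congr_deriv ?_
        ring
      rw [hd.deriv]
      norm_num
    · have h1m : 1 ≤ m := hm
      rw [iteratedDeriv_succ]
      have hev : iteratedDeriv m digamma =ᶠ[𝓝 x]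
          fun y => (-1 : ℝ) ^ (m + 1) * (m.factorial : ℝ) * ((y ^ (m + 1))⁻¹ + S (m + 1) y) := by
        filter_upwards [isOpen_Ioi.mem_nhds hx] with y hy using ih h1m y hy
      rw [hev.deriv_eq]
      have hS := hasDerivAt_S (show 2 ≤ m + 1 by omega) (show -(2⁻¹ : ℝ) < x by linarith)
      have hp := hasDerivAt_inv_pow (p := m + 1) (by omega) hx.ne'
      have hd : HasDerivAt (fun y : ℝ => (y ^ (m + 1))⁻¹ + S (m + 1) y)
          (-((m : ℝ) + 1) * ((x ^ (m + 1 + 1))⁻¹ + S (m + 1 + 1) x)) x := by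
        have h2 := hp.add hS
        refine h2.congr_deriv ?_
        push_cast
        ring
      have h3 := hd.const_mul ((-1 : ℝ) ^ (m + 1) * (m.factorial : ℝ))
      rw [h3.deriv, Nat.factorial_succ]
      push_cast
      ring

lemma integrable_pow_exp {n : ℕ} {c : ℝ} (hc : 0 < c) :
    IntegrableOn (fun t : ℝ => t ^ n * Real.exp (-(c * t))) (Ioi 0) := by
  have hn1 : (-1 : ℝ) < n := by
    have : (0 : ℝ) ≤ n := n.cast_nonneg
    linarith
  have h := integrableOn_rpow_mul_exp_neg_mul_rpow hn1 zero_lt_one hc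
  simpa [Real.rpow_natCast, Real.rpow_one, neg_mul] using h

lemma integral_pow_exp {n : ℕ} {c : ℝ} (hc : 0 < c) :
    ∫ t in Ioi (0 : ℝ), t ^ n * Real.exp (-(c * t)) = (n.factorial : ℝ) * (c ^ (n + 1))⁻¹ := by
  have h := Real.integral_rpow_mul_exp_neg_mul_Ioi (show (0 : ℝ) < (n : ℝ) + 1 by positivity) hc
  rw [show ((n : ℝ) + 1) - 1 = (n : ℝ) by ring] at h
  simp only [Real.rpow_natCast] at h
  rw [show ((n : ℝ) + 1) = ((n + 1 : ℕ) : ℝ) by push_cast; ring] at h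
  rw [Real.rpow_natCast] at h
  rw [h, show ((n + 1 : ℕ) : ℝ) = (n : ℝ) + 1 by push_cast; ring, Real.Gamma_nat_eq_factorial]
  rw [one_div, inv_pow]
  ring

lemma summable_inv_pow {m : ℕ} (hm : 2 ≤ m) {x : ℝ} (hx : 0 < x) :
    Summable fun k : ℕ => ((x + (k : ℝ)) ^ m)⁻¹ := by
  rw [← summable_nat_add_iff 1]
  have h := summable_S' hm (show -(2⁻¹ : ℝ) < x by linarith)
  apply h.congr
  intro k
  push_cast
  ring_nf

lemma integral_repr {n : ℕ} (hn : 1 ≤ n) {x : ℝ} (hx : 0 < x) :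
    ∫ t in Ioi (0 : ℝ), t ^ n / (1 - Real.exp (-t)) * Real.exp (-x * t) =
      (n.factorial : ℝ) * ((x ^ (n + 1))⁻¹ + S (n + 1) x) := by
  have hxk : ∀ k : ℕ, (0 : ℝ) < x + k := by
    intro k
    have : (0 : ℝ) ≤ k := k.cast_nonneg
    linarith
  have hpt : ∀ t ∈ Ioi (0 : ℝ), t ^ n / (1 - Real.exp (-t)) * Real.exp (-x * t)
      = ∑' k : ℕ, t ^ n * Real.exp (-((x + k) * t)) := by
    intro t ht
    rw [mem_Ioi] at ht
    have he1 : Real.exp (-t) < 1 := by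
      rw [Real.exp_lt_one_iff]; linarith
    have hgeo := tsum_geometric_of_lt_one (Real.exp_nonneg (-t)) he1
    have hterm : ∀ k : ℕ, t ^ n * Real.exp (-((x + k) * t))
        = (t ^ n * Real.exp (-x * t)) * Real.exp (-t) ^ k := by
      intro k
      rw [← Real.exp_nat_mul, mul_assoc, ← Real.exp_add]
      congr 1
      ring
    rw [tsum_congr hterm, tsum_mul_left, hgeo, div_eq_mul_inv]
    ring
  rw [setIntegral_congr_fun measurableSet_Ioi hpt]
  have hint : ∀ k : ℕ, IntegrableOn (fun t : ℝ => t ^ n * Real.exp (-((x + k) * t))) (Ioi 0) :=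
    fun k => integrable_pow_exp (hxk k)
  have hval : ∀ k : ℕ, (∫ t in Ioi (0 : ℝ), ‖t ^ n * Real.exp (-((x + k) * t))‖)
      = (n.factorial : ℝ) * ((x + (k : ℝ)) ^ (n + 1))⁻¹ := by
    intro k
    have hnorm : ∀ t ∈ Ioi (0 : ℝ), ‖t ^ n * Real.exp (-((x + k) * t))‖
        = t ^ n * Real.exp (-((x + k) * t)) := by
      intro t ht
      rw [mem_Ioi] at ht
      rw [Real.norm_of_nonneg (by positivity)]
    rw [setIntegral_congr_fun measurableSet_Ioi hnorm, integral_pow_exp (hxk k)]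
  have hsum : Summable (fun k : ℕ => ∫ t in Ioi (0 : ℝ), ‖t ^ n * Real.exp (-((x + k) * t))‖) := by
    apply Summable.congr _ (fun k => (hval k).symm)
    exact (summable_inv_pow (show 2 ≤ n + 1 by omega) hx).mul_left _
  have hswap := MeasureTheory.integral_tsum_of_summable_integral_norm hint hsum
  rw [← hswap]
  have hint2 : ∀ k : ℕ, (∫ t in Ioi (0 : ℝ), t ^ n * Real.exp (-((x + k) * t)))
      = (n.factorial : ℝ) * ((x + (k : ℝ)) ^ (n + 1))⁻¹ := fun k => integral_pow_exp (hxk k)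
  rw [tsum_congr hint2, tsum_mul_left]
  congr 1
  rw [Summable.tsum_eq_zero_add (summable_inv_pow (show 2 ≤ n + 1 by omega) hx)]
  congr 1
  · norm_num
  · rw [S]
    apply tsum_congr
    intro k
    push_cast
    ring_nf

theorem polygamma_integral_repr (n : ℕ) (hn : 1 ≤ n) (x : ℝ) (hx : 0 < x) :
    iteratedDeriv n digamma x =
      (-1 : ℝ) ^ (n + 1) * ∫ t in Set.Ioi (0 : ℝ), t ^ n / (1 - Real.exp (-t)) * Real.exp (-x * t) := by
  rw [iteratedDeriv_digamma n hn x hx, integral_repr hn hx]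
  ring
end

section
/- For all $x > 0$, $[\psi'(x)]^2 + \psi''(x) > 0$, where $\psi$ is the digamma function. -/
open Real Filter Topology Set

namespace DigammaAux

lemma summable_nat_one_div_pow (p : ℕ) (hp : 2 ≤ p) :
    Summable (fun n : ℕ => 1 / ((n : ℝ) + 1) ^ p) := by
  have := (Real.summable_one_div_nat_pow (p := p)).mpr hp
  have h2 := (summable_nat_add_iff (f := fun n : ℕ => 1 / (n : ℝ) ^ p) 1).mpr this
  exact h2.congr (fun n => by push_cast; ring)

lemma summable_shift (c : ℝ) (hc : 0 < c) (p : ℕ) (hp : 2 ≤ p) :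
    Summable (fun n : ℕ => 1 / (c + n) ^ p) := by
  rw [← summable_nat_add_iff 1]
  refine Summable.of_nonneg_of_le (fun n => by positivity) (fun n => ?_)
    (summable_nat_one_div_pow p hp)
  have h1 : (0:ℝ) < (n:ℝ) + 1 := by positivity
  have h2 : ((n:ℝ) + 1) ≤ c + (n + 1 : ℕ) := by push_cast; linarith
  apply one_div_le_one_div_of_le (by positivity)
  exact pow_le_pow_left₀ h1.le h2 p

end DigammaAux
namespace DigammaAux2
open DigammaAux

lemma tsum_telescope {f : ℕ → ℝ} (hs : Summable (fun n => f n - f (n+1)))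
    (h0 : Tendsto f atTop (𝓝 0)) : ∑' n, (f n - f (n+1)) = f 0 := by
  have h1 := hs.hasSum.tendsto_sum_nat
  have h2 : ∀ n, ∑ i ∈ Finset.range n, (f i - f (i+1)) = f 0 - f n := by
    intro n; exact Finset.sum_range_sub' f n
  rw [funext h2] at h1
  have h3 : Tendsto (fun n => f 0 - f n) atTop (𝓝 (f 0 - 0)) := tendsto_const_nhds.sub h0
  rw [sub_zero] at h3
  exact tendsto_nhds_unique h1 h3

/-- telescoping: ∑' n, (1/(x+n) - 1/(x+n+1)) = 1/x -/
lemma tsum_tele_inv {x : ℝ} (hx : 0 < x) :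
    ∑' n : ℕ, (1/(x+n) - 1/(x+(n:ℝ)+1)) = 1/x := by
  have hs : Summable (fun n : ℕ => 1/(x+n) - 1/(x+(n:ℝ)+1)) := by
    refine Summable.of_nonneg_of_le (fun n => ?_) (fun n => ?_) (summable_shift x hx 2 le_rfl)
    · have h1 : (0:ℝ) < x + n := by positivity
      have h2 : x + (n:ℝ) ≤ x + n + 1 := by linarith
      simp only [sub_nonneg]
      exact one_div_le_one_div_of_le h1 (by linarith)
    · have h1 : (0:ℝ) < x + n := by positivity
      rw [div_sub_div _ _ (by positivity) (by positivity)]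
      rw [div_le_div_iff₀ (by positivity) (by positivity)]
      ring_nf
      nlinarith [sq_nonneg (x + n)]
  have h0 : Tendsto (fun n : ℕ => 1/(x+n)) atTop (𝓝 0) := by
    apply Tendsto.comp (tendsto_inv_atTop_zero.congr (fun y => (one_div y).symm))
    exact tendsto_atTop_add_const_left _ x tendsto_natCast_atTop_atTop
  have hs2 : Summable (fun n : ℕ => (fun n : ℕ => 1/(x+n)) n - (fun n : ℕ => 1/(x+n)) (n+1)) := by
    apply hs.congr; intro n; push_cast; ring_nf
  have := tsum_telescope (f := fun n : ℕ => 1/(x+n)) hs2 h0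
  simp only [Nat.cast_zero, add_zero, Nat.cast_add, Nat.cast_one] at this
  rw [← this]
  apply tsum_congr; intro n; push_cast; ring_nf

end DigammaAux2
namespace DigammaAux3
open DigammaAux DigammaAux2

noncomputable def trig (x : ℝ) : ℝ := ∑' n : ℕ, 1/(x+n)^2
noncomputable def tet (x : ℝ) : ℝ := ∑' n : ℕ, (-2)/(x+n)^3
noncomputable def dig (x : ℝ) : ℝ :=
  -Real.eulerMascheroniConstant - 1/x + ∑' n : ℕ, (1/((n:ℝ)+1) - 1/(x+n+1))

lemma summable_trig {x : ℝ} (hx : 0 < x) : Summable (fun n : ℕ => 1/(x+n)^2) :=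
  summable_shift x hx 2 le_rfl

lemma summable_tet {x : ℝ} (hx : 0 < x) : Summable (fun n : ℕ => (-2:ℝ)/(x+n)^3) := by
  have := (summable_shift x hx 3 (by norm_num)).mul_left (-2)
  apply this.congr; intro n; simp [mul_one_div]; ring

lemma summable_dig {x : ℝ} (hx : 0 < x) :
    Summable (fun n : ℕ => 1/((n:ℝ)+1) - 1/(x+n+1)) := by
  refine Summable.of_norm ?_
  refine Summable.of_nonneg_of_le (fun n => norm_nonneg _) (fun n => ?_)
    ((summable_nat_one_div_pow 2 le_rfl).mul_left x)
  have h1 : (0:ℝ) < (n:ℝ) + 1 := by positivity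
  have h2 : (0:ℝ) < x + n + 1 := by positivity
  rw [Real.norm_eq_abs, div_sub_div _ _ h1.ne' h2.ne', abs_div]
  rw [abs_of_nonneg (by nlinarith), abs_of_nonneg (by positivity)]
  rw [div_le_iff₀ (by positivity)]
  have : x * (1 / ((n:ℝ) + 1) ^ 2) * (((n:ℝ) + 1) * (x + ↑n + 1))
      = x * (x + n + 1) / (n+1) := by field_simp
  rw [this]
  rw [le_div_iff₀ h1]
  nlinarith

lemma trig_pos {x : ℝ} (hx : 0 < x) : 0 < trig x := by
  have h0 : (0:ℝ) < 1/(x+(0:ℕ))^2 := by simp; positivity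
  calc 0 < 1/(x+(0:ℕ))^2 := h0
  _ ≤ trig x := Summable.le_tsum (summable_trig hx) 0 (fun n _ => by positivity)

lemma trig_succ {x : ℝ} (hx : 0 < x) : trig x = 1/x^2 + trig (x+1) := by
  rw [trig, Summable.tsum_eq_zero_add (summable_trig hx)]
  simp only [Nat.cast_zero, add_zero, Nat.cast_add, Nat.cast_one]
  congr 1
  rw [trig]
  apply tsum_congr; intro n; ring_nf

lemma tet_succ {x : ℝ} (hx : 0 < x) : tet x = -2/x^3 + tet (x+1) := by
  rw [tet, Summable.tsum_eq_zero_add (summable_tet hx)]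
  simp only [Nat.cast_zero, add_zero, Nat.cast_add, Nat.cast_one]
  congr 1
  rw [tet]
  apply tsum_congr; intro n; ring_nf

lemma trig_le {x : ℝ} (hx : 0 < x) : trig x ≤ 1/x^2 + 1/x := by
  rw [trig_succ hx]
  gcongr
  rw [← tsum_tele_inv hx, trig]
  refine Summable.tsum_le_tsum (fun n => ?_) (summable_trig (by linarith)) ?_
  · have h1 : (0:ℝ) < x + n := by positivity
    have h2 : x + 1 + (n:ℝ) = x + n + 1 := by ring
    rw [h2, div_sub_div _ _ (by positivity) (by positivity), div_le_div_iff₀ (by positivity) (by positivity)]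
    ring_nf
    nlinarith
  · apply (summable_trig hx).of_nonneg_of_le (fun n => ?_) (fun n => ?_)
    · have h1 : (0:ℝ) < x + n := by positivity
      simp only [sub_nonneg]
      exact one_div_le_one_div_of_le h1 (by linarith)
    · have h1 : (0:ℝ) < x + n := by positivity
      rw [div_sub_div _ _ (by positivity) (by positivity), div_le_div_iff₀ (by positivity) (by positivity)]
      ring_nf
      nlinarith [sq_nonneg (x+n)]

end DigammaAux3
namespace DigammaAux4
open DigammaAux DigammaAux2 DigammaAux3

lemma key_ineq {c : ℝ} (hc : 0 < c) :
    1/c - 1/(c+1) < (1/c^2 + 1/(c+1)^2)/2 := by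
  have h1 : 1/c - 1/(c+1) = 1/c * (1/(c+1)) := by
    field_simp
    ring
  have h2 : 0 < 1/c * (1/(c+1)) := by positivity
  have h3 : 0 < 1/c - 1/(c+1) := by rw [h1]; exact h2
  have h4 : 1/c^2 = (1/c)^2 := by rw [one_div, one_div, inv_pow]
  have h5 : 1/(c+1)^2 = (1/(c+1))^2 := by rw [one_div, one_div, inv_pow]
  rw [h4, h5]
  nlinarith [mul_pos h3 h3]

lemma trig_lower {x : ℝ} (hx : 0 < x) : 1/x + 1/(2*x^2) < trig x := by
  have hx1 : (0:ℝ) < x + 1 := by linarith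
  have hsb : Summable (fun n : ℕ => 1/(x+n) - 1/(x+(n:ℝ)+1)) := by
    refine Summable.of_nonneg_of_le (fun n => ?_) (fun n => ?_) (summable_trig hx)
    · have h1 : (0:ℝ) < x + n := by positivity
      simp only [sub_nonneg]
      exact one_div_le_one_div_of_le h1 (by linarith)
    · have h1 : (0:ℝ) < x + n := by positivity
      rw [div_sub_div _ _ (by positivity) (by positivity), div_le_div_iff₀ (by positivity) (by positivity)]
      ring_nf
      nlinarith [sq_nonneg (x+n)]
  have hs1 : Summable (fun n : ℕ => 1/((x+1)+(n:ℝ))^2) := summable_trig hx1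
  have hsc : Summable (fun n : ℕ => (1/(x+(n:ℝ))^2 + 1/((x+1)+(n:ℝ))^2)/2) := by
    apply (((summable_trig hx).add hs1).div_const 2)
  have hlt : ∑' n : ℕ, (1/(x+n) - 1/(x+(n:ℝ)+1))
      < ∑' n : ℕ, (1/(x+(n:ℝ))^2 + 1/((x+1)+(n:ℝ))^2)/2 := by
    refine Summable.tsum_lt_tsum_of_nonneg (i := 0) (fun n => ?_) (fun n => ?_) ?_ hsc
    · have h1 : (0:ℝ) < x + n := by positivity
      simp only [sub_nonneg]
      exact one_div_le_one_div_of_le h1 (by linarith)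
    · have h1 : (0:ℝ) < x + n := by positivity
      have := key_ineq h1
      have he : (x + 1) + (n:ℝ) = (x + n) + 1 := by ring
      rw [he]; exact this.le
    · have h1 : (0:ℝ) < x + (0:ℕ) := by simp; positivity
      have := key_ineq h1
      have he : (x + 1) + ((0:ℕ):ℝ) = (x + ((0:ℕ):ℝ)) + 1 := by push_cast; ring
      rw [he]; exact this
  rw [tsum_tele_inv hx] at hlt
  have hc : ∑' n : ℕ, (1/(x+(n:ℝ))^2 + 1/((x+1)+(n:ℝ))^2)/2
      = (trig x + trig (x+1))/2 := by
    rw [tsum_div_const, Summable.tsum_add (summable_trig hx) hs1]; rfl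
  rw [hc] at hlt
  have hsucc : trig (x+1) = trig x - 1/x^2 := by
    have := trig_succ hx; linarith
  rw [hsucc] at hlt
  have e : 2 * (1/(2*x^2)) = 1/x^2 := by
    have : (2:ℝ)*x^2 ≠ 0 := by positivity
    field_simp
  linarith

lemma tet_nonpos {x : ℝ} (hx : 0 < x) : tet x ≤ 0 := by
  apply tsum_nonpos
  intro n
  have : (0:ℝ) < x + n := by positivity
  apply div_nonpos_of_nonpos_of_nonneg
  · norm_num
  · positivity

lemma neg_tet_le {x : ℝ} (hx : 1 ≤ x) : -2 * trig x ≤ tet x := by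
  have hx0 : (0:ℝ) < x := by linarith
  have : ∀ n : ℕ, -2 * (1/(x+n)^2) ≤ (-2:ℝ)/(x+n)^3 := by
    intro n
    have h1 : (1:ℝ) ≤ x + n := by
      have : (0:ℝ) ≤ n := Nat.cast_nonneg n
      linarith
    have h0 : (0:ℝ) < x + n := by linarith
    rw [mul_one_div, div_le_div_iff₀ (by positivity) (by positivity)]
    nlinarith [pow_pos h0 2, pow_pos h0 3]
  calc -2 * trig x = ∑' n : ℕ, -2 * (1/(x+n)^2) := by
        rw [trig, tsum_mul_left]
    _ ≤ tet x := Summable.tsum_le_tsum this ((summable_trig hx0).mul_left _) (summable_tet hx0)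

noncomputable def F (y : ℝ) : ℝ := (trig y)^2 + tet y

lemma F_step {y : ℝ} (hy : 0 < y) : F (y+1) < F y := by
  have h1 : trig (y+1) = trig y - 1/y^2 := by have := trig_succ hy; linarith
  have h2 : tet (y+1) = tet y + 2/y^3 := by
    have h := tet_succ hy
    have hn : (-2:ℝ)/y^3 = -(2/y^3) := neg_div _ _
    linarith
  have h3 := trig_lower hy
  rw [F, F, h1, h2]
  have hy2 : (0:ℝ) < y^2 := by positivity
  have hy3 : (0:ℝ) < y^3 := by positivity
  have hy4 : (0:ℝ) < y^4 := by positivity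
  have e1 : (trig y - 1/y^2)^2 = trig y^2 - 2*trig y/y^2 + 1/y^4 := by
    field_simp; ring
  rw [e1]
  have : 2/y^3 + 1/y^4 < 2*trig y/y^2 := by
    rw [div_add_div _ _ hy3.ne' hy4.ne', div_lt_div_iff₀ (by positivity) hy2]
    rw [div_add_div _ _ hy.ne' (by positivity : (2*y^2:ℝ) ≠ 0)] at h3
    rw [div_lt_iff₀ (by positivity)] at h3
    nlinarith
  linarith

lemma tendsto_F : ∀ x : ℝ, 0 < x → Tendsto (fun n : ℕ => F (x + n)) atTop (𝓝 0) := by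
  intro x hx
  have hpos : ∀ n : ℕ, 0 < x + (n:ℝ) := fun n => by positivity
  have h1 : Tendsto (fun n : ℕ => 1/(x + (n:ℝ))) atTop (𝓝 0) := by
    apply Tendsto.comp (tendsto_inv_atTop_zero.congr (fun y => (one_div y).symm))
    exact tendsto_atTop_add_const_left _ x tendsto_natCast_atTop_atTop
  have htrig : Tendsto (fun n : ℕ => trig (x + n)) atTop (𝓝 0) := by
    have hup : Tendsto (fun n : ℕ => 1/(x+(n:ℝ))^2 + 1/(x+(n:ℝ))) atTop (𝓝 0) := by
      have := (h1.mul h1).add h1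
      simpa using this.congr (fun n => by rw [one_div_mul_one_div]; ring_nf)
    refine tendsto_of_tendsto_of_tendsto_of_le_of_le tendsto_const_nhds hup
      (fun n => (trig_pos (hpos n)).le) (fun n => trig_le (hpos n))
  have htet : Tendsto (fun n : ℕ => tet (x + n)) atTop (𝓝 0) := by
    have hlow : Tendsto (fun n : ℕ => -2 * trig (x + n)) atTop (𝓝 0) := by
      simpa using htrig.const_mul (-2)
    refine tendsto_of_tendsto_of_tendsto_of_le_of_le' hlow tendsto_const_nhds ?_ ?_
    · filter_upwards [eventually_ge_atTop 1] with n hn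
      apply neg_tet_le
      have : (1:ℝ) ≤ (n:ℝ) := by exact_mod_cast hn
      linarith
    · filter_upwards with n using tet_nonpos (hpos n)
  have := (htrig.mul htrig).add htet
  simpa [F, pow_two] using this

lemma F_pos {x : ℝ} (hx : 0 < x) : 0 < F x := by
  have key : ∀ n : ℕ, F (x + 1 + n) ≤ F (x + 1) := by
    intro n
    induction n with
    | zero => simp
    | succ n ih =>
      have h1 : 0 < x + 1 + (n:ℝ) := by positivity
      have := F_step h1
      have he : x + 1 + ((n:ℝ)+1) = (x + 1 + n) + 1 := by ring
      refine le_of_lt ?_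
      calc F (x + 1 + ((n+1:ℕ):ℝ)) = F ((x + 1 + n) + 1) := by push_cast; rw [← he]
        _ < F (x + 1 + n) := this
        _ ≤ F (x + 1) := ih
  have h0 : 0 ≤ F (x + 1) := by
    refine le_of_tendsto (tendsto_F (x+1) (by linarith)) ?_
    filter_upwards with n using key n
  have := F_step hx
  linarith

end DigammaAux4
namespace DigammaAux5
open DigammaAux DigammaAux2 DigammaAux3 DigammaAux4

noncomputable def Gd (n : ℕ) (y : ℝ) : ℝ :=
  Real.log n - ∑ m ∈ Finset.range (n+1), 1/(y+m)

lemma hasDerivAt_logGammaSeq (n : ℕ) {y : ℝ} (hy : 0 < y) :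
    HasDerivAt (fun z => Real.BohrMollerup.logGammaSeq z n) (Gd n y) y := by
  have h1 : HasDerivAt (fun z : ℝ => z * Real.log n + Real.log ((Nat.factorial n : ℕ) : ℝ)) (Real.log n) y :=
    (hasDerivAt_mul_const (Real.log n)).add_const _
  have h2 : HasDerivAt (fun z : ℝ => ∑ m ∈ Finset.range (n+1), Real.log (z + m))
      (∑ m ∈ Finset.range (n+1), 1/(y+m)) y := by
    refine HasDerivAt.fun_sum (fun m _ => ?_)
    have h0 : y + (m:ℝ) ≠ 0 := by positivity
    have := ((hasDerivAt_id y).add_const (m:ℝ)).log h0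
    simpa using this
  have := h1.sub h2
  exact this.congr_deriv rfl

lemma tendstoUniformlyOn_Gd {R : ℝ} (hR : 0 < R) :
    TendstoUniformlyOn Gd dig atTop (Ioo 0 R) := by
  -- constant part
  have t1 : TendstoUniformlyOn (fun (n : ℕ) (_ : ℝ) => Real.log n - (harmonic n : ℝ))
      (fun _ => -Real.eulerMascheroniConstant) atTop (Ioo 0 R) := by
    apply Filter.Tendsto.tendstoUniformlyOn_const
    have := Real.tendsto_harmonic_sub_log.neg
    simpa [neg_sub] using this
  -- -1/y part (independent of n)
  have t2 : TendstoUniformlyOn (fun (_ : ℕ) (y : ℝ) => -(1/y)) (fun y => -(1/y))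
      atTop (Ioo 0 R) := by
    rw [Metric.tendstoUniformlyOn_iff]
    intro ε hε
    filter_upwards with n y _
    simpa using hε
  -- series part
  have t3 : TendstoUniformlyOn
      (fun (n : ℕ) (y : ℝ) => ∑ m ∈ Finset.range n, (1/((m:ℝ)+1) - 1/(y+m+1)))
      (fun y => ∑' m : ℕ, (1/((m:ℝ)+1) - 1/(y+m+1))) atTop (Ioo 0 R) := by
    apply tendstoUniformlyOn_tsum_nat (u := fun m : ℕ => R * (1/((m:ℝ)+1)^2))
      ((summable_nat_one_div_pow 2 le_rfl).mul_left R)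
    intro m y hy
    obtain ⟨hy0, hyR⟩ := hy
    have h1 : (0:ℝ) < (m:ℝ) + 1 := by positivity
    have h2 : (0:ℝ) < y + m + 1 := by positivity
    rw [Real.norm_eq_abs, div_sub_div _ _ h1.ne' h2.ne', abs_div,
      abs_of_nonneg (by nlinarith), abs_of_nonneg (by positivity),
      div_le_iff₀ (by positivity)]
    have e : R * (1 / ((m:ℝ) + 1) ^ 2) * (((m:ℝ) + 1) * (y + ↑m + 1))
        = R * (y + m + 1) / (m+1) := by field_simp
    rw [e, le_div_iff₀ h1]
    nlinarith
  have tcomb := t1.add (t2.add t3)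
  have tcomb2 := tcomb.congr_right (g := dig) (fun y hy => by
    simp only [Pi.add_apply, dig]
    ring)
  refine tcomb2.congr ?_
  filter_upwards with n
  intro y hy
  obtain ⟨hy0, _⟩ := hy
  simp only [Pi.add_apply, Gd]
  have e1 : ∑ m ∈ Finset.range (n+1), 1/(y+(m:ℝ))
      = 1/y + ∑ m ∈ Finset.range n, 1/(y+(m:ℝ)+1) := by
    rw [Finset.sum_range_succ']
    push_cast
    simp only [Nat.cast_zero, add_zero]
    rw [add_comm]
    congr 1
    apply Finset.sum_congr rfl; intro m _; push_cast; ring_nf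
  have e2 : ((harmonic n : ℚ) : ℝ) = ∑ m ∈ Finset.range n, 1/((m:ℝ)+1) := by
    rw [harmonic]
    push_cast
    apply Finset.sum_congr rfl
    intro m _
    rw [one_div]
  rw [e1, e2, Finset.sum_sub_distrib]
  ring


lemma hasDerivAt_logGamma {x : ℝ} (hx : 0 < x) :
    HasDerivAt (fun y => Real.log (Real.Gamma y)) (dig x) x := by
  refine hasDerivAt_of_tendstoUniformlyOn (f := fun n y => Real.BohrMollerup.logGammaSeq y n)
    (f' := Gd) isOpen_Ioo (tendstoUniformlyOn_Gd (R := x + 1) (by linarith)) ?_ ?_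
    (⟨hx, by linarith⟩ : x ∈ Ioo (0:ℝ) (x+1))
  · filter_upwards with n y hy
    exact hasDerivAt_logGammaSeq n hy.1
  · intro y hy
    exact Real.BohrMollerup.tendsto_log_gamma hy.1

lemma hasDerivAt_dig {x : ℝ} (hx : 0 < x) : HasDerivAt dig (trig x) x := by
  have hx2 : 0 < x/2 := by linarith
  have h1 : HasDerivAt (fun y : ℝ => -Real.eulerMascheroniConstant - 1/y) ((x^2)⁻¹) x := by
    have := (hasDerivAt_inv hx.ne').const_sub (-Real.eulerMascheroniConstant)
    simpa [one_div] using this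
  have h2 : HasDerivAt (fun y : ℝ => ∑' n : ℕ, (1/((n:ℝ)+1) - 1/(y+n+1)))
      (∑' n : ℕ, 1/(x+(n:ℝ)+1)^2) x := by
    refine hasDerivAt_tsum_of_isPreconnected
      (u := fun n : ℕ => 1/(x/2+(n:ℝ)+1)^2)
      (g' := fun n y => 1/(y+(n:ℝ)+1)^2) ?_ isOpen_Ioi isPreconnected_Ioi
      (fun n y hy => ?_) (fun n y hy => ?_) (mem_Ioi.mpr (half_lt_self hx))
      (summable_dig hx) (mem_Ioi.mpr (half_lt_self hx))
    · apply (summable_shift (x/2+1) (by linarith) 2 le_rfl).congr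
      intro n; congr 1; ring
    · have hyx : x/2 < y := hy
      have hn : (0:ℝ) ≤ n := Nat.cast_nonneg n
      have hy0 : (0:ℝ) < y + n + 1 := by linarith
      have hd := ((hasDerivAt_id y).add_const ((n:ℝ)+1)).inv
        (by intro h; nlinarith : y + ((n:ℝ)+1) ≠ 0)
      have := hd.const_sub (1/((n:ℝ)+1))
      convert this using 1
      · funext z
        simp only [id_eq]
        ring_nf
        rfl
      · simp only [id_eq, neg_div, neg_neg]
        ring_nf
    · have hy' : x/2 < y := hy
      have h1 : (0:ℝ) < x/2 + n + 1 := by positivity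
      have h2 : (0:ℝ) < y + n + 1 := by linarith
      rw [Real.norm_eq_abs, abs_of_pos (by positivity)]
      apply one_div_le_one_div_of_le (by positivity)
      have : x/2 + (n:ℝ) + 1 ≤ y + n + 1 := by linarith
      exact pow_le_pow_left₀ h1.le this 2
  have hcomb := h1.add h2
  have : HasDerivAt dig ((x^2)⁻¹ + ∑' n : ℕ, 1/(x+(n:ℝ)+1)^2) x := hcomb
  convert this using 1
  rw [trig_succ hx]
  congr 1
  · rw [one_div]
  · rw [trig]
    apply tsum_congr; intro n; congr 2; ring

lemma hasDerivAt_trig {x : ℝ} (hx : 0 < x) : HasDerivAt trig (tet x) x := by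
  have hx2 : 0 < x/2 := by linarith
  have h : HasDerivAt (fun y : ℝ => ∑' n : ℕ, 1/(y+(n:ℝ))^2)
      (∑' n : ℕ, (-2:ℝ)/(x+(n:ℝ))^3) x := by
    refine hasDerivAt_tsum_of_isPreconnected
      (u := fun n : ℕ => 2/(x/2+(n:ℝ))^3)
      (g' := fun n y => (-2:ℝ)/(y+(n:ℝ))^3) ?_ isOpen_Ioi isPreconnected_Ioi
      (fun n y hy => ?_) (fun n y hy => ?_) (mem_Ioi.mpr (half_lt_self hx))
      (summable_trig hx) (mem_Ioi.mpr (half_lt_self hx))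
    · apply ((summable_shift (x/2) hx2 3 (by norm_num)).mul_left 2).congr
      intro n; rw [mul_one_div]
    · have hyx : x/2 < y := hy
      have hn : (0:ℝ) ≤ n := Nat.cast_nonneg n
      have hy0 : (0:ℝ) < y + n := by linarith
      have hd := (((hasDerivAt_id y).add_const ((n:ℝ))).pow 2).inv
        (by positivity : ((y:ℝ) + n)^2 ≠ 0)
      convert hd using 1
      · rfl
      · funext z
        simp only [id_eq, one_div]
        rfl
      · simp only [id_eq, pow_one, mul_one, Nat.cast_ofNat, Pi.pow_apply]
        rw [show (2-1 : ℕ) = 1 from rfl, pow_one, neg_div, neg_div]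
        congr 1
        rw [div_eq_div_iff (by positivity) (by positivity)]
        ring
    · have hy' : x/2 < y := hy
      have h1 : (0:ℝ) < x/2 + n := by positivity
      have h2 : (0:ℝ) < y + n := by linarith
      rw [Real.norm_eq_abs, abs_div, abs_of_pos (by positivity : (0:ℝ) < (y+(n:ℝ))^3)]
      have : |(-2:ℝ)| = 2 := by norm_num
      rw [this]
      apply div_le_div_of_nonneg_left (by norm_num) (by positivity)
      exact pow_le_pow_left₀ h1.le (by linarith) 3
  exact h

end DigammaAux5
namespace DigammaAux6
open DigammaAux DigammaAux2 DigammaAux3 DigammaAux4 DigammaAux5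

lemma digamma_eq {y : ℝ} (hy : 0 < y) : digamma y = dig y :=
  (hasDerivAt_logGamma hy).deriv

lemma deriv_digamma_eq {x : ℝ} (hx : 0 < x) : deriv digamma x = trig x := by
  have hev : digamma =ᶠ[𝓝 x] dig := by
    filter_upwards [Ioi_mem_nhds hx] with y hy using digamma_eq hy
  rw [hev.deriv_eq, (hasDerivAt_dig hx).deriv]

lemma deriv2_digamma_eq {x : ℝ} (hx : 0 < x) : deriv (deriv digamma) x = tet x := by
  have hev : deriv digamma =ᶠ[𝓝 x] trig := by
    filter_upwards [Ioi_mem_nhds hx] with y hy using deriv_digamma_eq hy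
  rw [hev.deriv_eq, (hasDerivAt_trig hx).deriv]

end DigammaAux6

theorem trigamma_sq_add_tetragamma_pos (x : ℝ) (hx : 0 < x) :
    0 < (deriv digamma x) ^ 2 + deriv (deriv digamma) x := by
  rw [DigammaAux6.deriv_digamma_eq hx, DigammaAux6.deriv2_digamma_eq hx]
  simpa [DigammaAux4.F] using DigammaAux4.F_pos hx
end

section
/- For no $\varepsilon > 0$ is the function $x \mapsto x^{4+\varepsilon}\left([\psi'(x)]^2 + \psi''(x)\right)$ completely monotonic on $(0,\infty)$; equivalently, $\lim_{x\to\infty} \left(-\frac{x\left[2\psi'(x)\psi''(x) + \psi^{(3)}(x)\right]}{[\psi'(x)]^2+\psi''(x)}\right) = 4$. -/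
open Filter

noncomputable def Psi (x : ℝ) : ℝ := (deriv digamma x) ^ 2 + deriv (deriv digamma) x

open Topology Finset

namespace DG



/-- positivity of shifted products -/
lemma prod_shift_pos {x : ℝ} (hx : 0 < x) (m k : ℕ) :
    0 < ∏ j ∈ Finset.range k, (x + m + j) := by
  apply Finset.prod_pos
  intro j _
  positivity

/-- telescoping sum -/
lemma hasSum_teles {x : ℝ} (hx : 1 < x) {k : ℕ} (hk : 1 ≤ k) :
    HasSum (fun m : ℕ => (∏ j ∈ Finset.range (k + 1), (x + m + j))⁻¹)
      ((k * ∏ j ∈ Finset.range k, (x + j))⁻¹) := by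
  have hx0 : (0:ℝ) < x := by linarith
  set h : ℕ → ℝ := fun m => ((k : ℝ) * ∏ j ∈ Finset.range k, (x + m + j))⁻¹ with hh
  have key : ∀ m : ℕ, (∏ j ∈ Finset.range (k + 1), (x + m + j))⁻¹ = h m - h (m + 1) := by
    intro m
    have e1 : ∏ j ∈ Finset.range (k + 1), (x + m + j)
        = (∏ j ∈ Finset.range k, (x + m + j)) * (x + m + k) := Finset.prod_range_succ _ _
    have e2 : ∏ j ∈ Finset.range (k + 1), (x + m + j)
        = (∏ j ∈ Finset.range k, (x + (m+1) + j)) * (x + m) := by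
      rw [Finset.prod_range_succ']
      push_cast
      have : ∀ j ∈ Finset.range k, (x + m + (j+1)) = (x + (m+1) + j) := by
        intro j _; push_cast; ring
      rw [Finset.prod_congr rfl this]
      norm_num
    have p1 : (0:ℝ) < ∏ j ∈ Finset.range k, (x + m + j) := prod_shift_pos hx0 m k
    have p2 : (0:ℝ) < ∏ j ∈ Finset.range k, (x + (m+1) + j) := by
      have := prod_shift_pos hx0 (m+1) k
      push_cast at this ⊢
      convert this using 2
    have pk : (0:ℝ) < k := by exact_mod_cast hk
    have pxm : (0:ℝ) < x + m := by positivity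
    have pxmk : (0:ℝ) < x + m + k := by positivity
    have e3 : (∏ j ∈ Finset.range k, (x + (m+1) + j))
        = (∏ j ∈ Finset.range k, (x + m + j)) * (x + m + k) / (x + m) := by
      rw [eq_div_iff pxm.ne', ← e2, e1]
    rw [hh]
    simp only []
    push_cast
    rw [e3, e1]
    field_simp
    ring
  have hnonneg : ∀ m : ℕ, 0 ≤ (∏ j ∈ Finset.range (k + 1), (x + m + j))⁻¹ := by
    intro m
    have := prod_shift_pos hx0 m (k+1)
    positivity
  rw [hasSum_iff_tendsto_nat_of_nonneg hnonneg]
  have hsum : ∀ n : ℕ, ∑ m ∈ Finset.range n, (∏ j ∈ Finset.range (k + 1), (x + m + j))⁻¹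
      = h 0 - h n := by
    intro n
    rw [← Finset.sum_range_sub' h n]
    exact Finset.sum_congr rfl fun m _ => key m
  have h0 : h 0 = ((k:ℝ) * ∏ j ∈ Finset.range k, (x + j))⁻¹ := by
    rw [hh]; norm_num
  have hlim : Tendsto h atTop (𝓝 0) := by
    have hmono : Tendsto (fun n : ℕ => (k : ℝ) * ∏ j ∈ Finset.range k, (x + n + j)) atTop atTop := by
      apply tendsto_atTop_mono (fun n : ℕ => ?_) (tendsto_atTop_add_const_left _ x
        (tendsto_natCast_atTop_atTop (R := ℝ)))
      have h1 : x + n ≤ ∏ j ∈ Finset.range k, (x + n + j) := by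
        obtain ⟨k', rfl⟩ : ∃ k', k = k' + 1 := ⟨k - 1, by omega⟩
        rw [Finset.prod_range_succ']
        have hone : (1:ℝ) ≤ ∏ j ∈ Finset.range k', (x + n + (j + 1)) := by
          have h2 : (∏ _j ∈ Finset.range k', (1:ℝ)) ≤ ∏ j ∈ Finset.range k', (x + n + (j + 1)) := by
            apply Finset.prod_le_prod (fun _ _ => zero_le_one)
            intro j _
            have : (0:ℝ) ≤ (n:ℝ) + j := by positivity
            push_cast
            nlinarith
          simpa using h2
        have hxn : (0:ℝ) < x + n := by positivity
        push_cast
        nlinarith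
      have hk1 : (1:ℝ) ≤ k := by exact_mod_cast hk
      nlinarith [prod_shift_pos hx0 n k]
    exact (tendsto_inv_atTop_zero.comp hmono)
  rw [funext hsum, ← h0]
  simpa using tendsto_const_nhds.sub hlim

noncomputable def S (p : ℕ) (x : ℝ) : ℝ := ∑' m : ℕ, ((x + m) ^ p)⁻¹

lemma S_def (p : ℕ) (x : ℝ) : S p x = ∑' m : ℕ, ((x + m) ^ p)⁻¹ := rfl





lemma summable_of_le_sq {x : ℝ} (hx : 1 < x) {f : ℕ → ℝ} (h0 : ∀ m, 0 ≤ f m)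
    (hle : ∀ m : ℕ, f m ≤ ((x + m) ^ 2)⁻¹) : Summable f := by
  have hbase : Summable (fun m : ℕ => (((m : ℝ) + 1) ^ 2)⁻¹) := by
    have h2 : Summable (fun n : ℕ => ((n : ℝ) ^ 2)⁻¹) := by
      simpa using Real.summable_one_div_nat_pow.2 (le_refl 2)
    have := (summable_nat_add_iff 1).2 h2
    simpa [add_comm] using this
  apply Summable.of_nonneg_of_le h0 (fun m => le_trans (hle m) ?_) hbase
  apply inv_anti₀ (by positivity)
  have h2 : ((m:ℝ) + 1) ≤ x + m := by linarith
  exact pow_le_pow_left₀ (by positivity) h2 2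

lemma sq_le_gen {x : ℝ} (hx : 1 < x) (m : ℕ) {p : ℕ} (hp : 2 ≤ p) :
    ((x + m) ^ p)⁻¹ ≤ ((x + m) ^ 2)⁻¹ := by
  have h1 : (1:ℝ) < x + m := by have : (0:ℝ) ≤ m := Nat.cast_nonneg m; linarith
  exact inv_anti₀ (by positivity) (pow_le_pow_right₀ h1.le hp)

lemma summable_S {x : ℝ} (hx : 1 < x) {p : ℕ} (hp : 2 ≤ p) :
    Summable (fun m : ℕ => ((x + m) ^ p)⁻¹) := by
  apply summable_of_le_sq hx (fun m => by positivity) (fun m => sq_le_gen hx m hp)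

-- concrete telescoped sums
lemma hs1 {x : ℝ} (hx : 1 < x) :
    HasSum (fun m : ℕ => ((x + m) * (x + m + 1))⁻¹) x⁻¹ := by
  have h := hasSum_teles hx (k := 1) (by norm_num)
  simp only [Finset.prod_range_succ, Finset.prod_range_zero, one_mul] at h
  push_cast at h
  convert h using 2 with m
  · push_cast; ring
  · norm_num

lemma hs2 {x : ℝ} (hx : 1 < x) :
    HasSum (fun m : ℕ => ((x + m) * (x + m + 1) * (x + m + 2))⁻¹) (2 * (x * (x + 1)))⁻¹ := by
  have h := hasSum_teles hx (k := 2) (by norm_num)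
  simp only [Finset.prod_range_succ, Finset.prod_range_zero, one_mul] at h
  push_cast at h
  convert h using 2 with m
  · push_cast; ring
  · norm_num

lemma hs3 {x : ℝ} (hx : 1 < x) :
    HasSum (fun m : ℕ => ((x + m) * (x + m + 1) * (x + m + 2) * (x + m + 3))⁻¹)
      (3 * (x * (x + 1) * (x + 2)))⁻¹ := by
  have h := hasSum_teles hx (k := 3) (by norm_num)
  simp only [Finset.prod_range_succ, Finset.prod_range_zero, one_mul] at h
  push_cast at h
  convert h using 2 with m
  · push_cast; ring
  · norm_num

lemma hs4 {x : ℝ} (hx : 1 < x) :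
    HasSum (fun m : ℕ => ((x + m) * (x + m + 1) * (x + m + 2) * (x + m + 3) * (x + m + 4))⁻¹)
      (4 * (x * (x + 1) * (x + 2) * (x + 3)))⁻¹ := by
  have h := hasSum_teles hx (k := 4) (by norm_num)
  simp only [Finset.prod_range_succ, Finset.prod_range_zero, one_mul] at h
  push_cast at h
  convert h using 2 with m
  · push_cast; ring
  · norm_num

lemma hs5 {x : ℝ} (hx : 1 < x) :
    HasSum (fun m : ℕ =>
        ((x + m) * (x + m + 1) * (x + m + 2) * (x + m + 3) * (x + m + 4) * (x + m + 5))⁻¹)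
      (5 * (x * (x + 1) * (x + 2) * (x + 3) * (x + 4)))⁻¹ := by
  have h := hasSum_teles hx (k := 5) (by norm_num)
  simp only [Finset.prod_range_succ, Finset.prod_range_zero, one_mul] at h
  push_cast at h
  convert h using 2 with m
  · push_cast; ring
  · norm_num

lemma hs6 {x : ℝ} (hx : 1 < x) :
    HasSum (fun m : ℕ =>
        ((x + m) * (x + m + 1) * (x + m + 2) * (x + m + 3) * (x + m + 4) * (x + m + 5)
          * (x + m + 6))⁻¹)
      (6 * (x * (x + 1) * (x + 2) * (x + 3) * (x + 4) * (x + 5)))⁻¹ := by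
  have h := hasSum_teles hx (k := 6) (by norm_num)
  simp only [Finset.prod_range_succ, Finset.prod_range_zero, one_mul] at h
  push_cast at h
  convert h using 2 with m
  · push_cast; ring
  · norm_num



noncomputable def E23 (x : ℝ) : ℝ :=
  ∑' m : ℕ, ((x + m) ^ 2 * (x + m + 1) * (x + m + 2) * (x + m + 3))⁻¹
noncomputable def E24 (x : ℝ) : ℝ :=
  ∑' m : ℕ, ((x + m) ^ 2 * (x + m + 1) * (x + m + 2) * (x + m + 3) * (x + m + 4))⁻¹
noncomputable def E33 (x : ℝ) : ℝ :=
  ∑' m : ℕ, ((x + m) ^ 3 * (x + m + 1) * (x + m + 2) * (x + m + 3))⁻¹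
noncomputable def E25 (x : ℝ) : ℝ :=
  ∑' m : ℕ, ((x + m) ^ 2 * (x + m + 1) * (x + m + 2) * (x + m + 3) * (x + m + 4) * (x + m + 5))⁻¹
noncomputable def E34 (x : ℝ) : ℝ :=
  ∑' m : ℕ, ((x + m) ^ 3 * (x + m + 1) * (x + m + 2) * (x + m + 3) * (x + m + 4))⁻¹
noncomputable def E43 (x : ℝ) : ℝ :=
  ∑' m : ℕ, ((x + m) ^ 4 * (x + m + 1) * (x + m + 2) * (x + m + 3))⁻¹

lemma xm_gt {x : ℝ} (hx : 1 < x) (m : ℕ) : 1 < x + m := by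
  have : (0:ℝ) ≤ m := Nat.cast_nonneg m
  linarith

-- termwise bounds for each E-term
lemma E23_term_le {x : ℝ} (hx : 1 < x) (m : ℕ) :
    ((x + m) ^ 2 * (x + m + 1) * (x + m + 2) * (x + m + 3))⁻¹ ≤ ((x + m) ^ 5)⁻¹ := by
  have ht : (1:ℝ) < x + m := xm_gt hx m
  apply inv_anti₀ (by positivity)
  nlinarith [pow_pos (by linarith : (0:ℝ) < x + m) 2, pow_pos (by linarith : (0:ℝ) < x + m) 3,
    pow_pos (by linarith : (0:ℝ) < x + m) 5]

lemma E24_term_le {x : ℝ} (hx : 1 < x) (m : ℕ) :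
    ((x + m) ^ 2 * (x + m + 1) * (x + m + 2) * (x + m + 3) * (x + m + 4))⁻¹
      ≤ ((x + m) ^ 6)⁻¹ := by
  have ht : (1:ℝ) < x + m := xm_gt hx m
  apply inv_anti₀ (by positivity)
  nlinarith [pow_pos (by linarith : (0:ℝ) < x + m) 2, pow_pos (by linarith : (0:ℝ) < x + m) 4,
    pow_pos (by linarith : (0:ℝ) < x + m) 6]

lemma E33_term_le {x : ℝ} (hx : 1 < x) (m : ℕ) :
    ((x + m) ^ 3 * (x + m + 1) * (x + m + 2) * (x + m + 3))⁻¹ ≤ ((x + m) ^ 6)⁻¹ := by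
  have ht : (1:ℝ) < x + m := xm_gt hx m
  apply inv_anti₀ (by positivity)
  have h3 : (x + m) ^ 3 ≤ (x + m + 1) * (x + m + 2) * (x + m + 3) := by nlinarith
  nlinarith [mul_le_mul_of_nonneg_left h3 (pow_pos (by linarith : (0:ℝ) < x + m) 3).le]

lemma E25_term_le {x : ℝ} (hx : 1 < x) (m : ℕ) :
    ((x + m) ^ 2 * (x + m + 1) * (x + m + 2) * (x + m + 3) * (x + m + 4) * (x + m + 5))⁻¹
      ≤ ((x + m) ^ 7)⁻¹ := by
  have ht : (1:ℝ) < x + m := xm_gt hx m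
  apply inv_anti₀ (by positivity)
  nlinarith [pow_pos (by linarith : (0:ℝ) < x + m) 2, pow_pos (by linarith : (0:ℝ) < x + m) 5,
    pow_pos (by linarith : (0:ℝ) < x + m) 7]

lemma E34_term_le {x : ℝ} (hx : 1 < x) (m : ℕ) :
    ((x + m) ^ 3 * (x + m + 1) * (x + m + 2) * (x + m + 3) * (x + m + 4))⁻¹
      ≤ ((x + m) ^ 7)⁻¹ := by
  have ht : (1:ℝ) < x + m := xm_gt hx m
  apply inv_anti₀ (by positivity)
  nlinarith [pow_pos (by linarith : (0:ℝ) < x + m) 3, pow_pos (by linarith : (0:ℝ) < x + m) 4,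
    pow_pos (by linarith : (0:ℝ) < x + m) 7]

lemma E43_term_le {x : ℝ} (hx : 1 < x) (m : ℕ) :
    ((x + m) ^ 4 * (x + m + 1) * (x + m + 2) * (x + m + 3))⁻¹ ≤ ((x + m) ^ 7)⁻¹ := by
  have ht : (1:ℝ) < x + m := xm_gt hx m
  apply inv_anti₀ (by positivity)
  have h3 : (x + m) ^ 3 ≤ (x + m + 1) * (x + m + 2) * (x + m + 3) := by nlinarith
  nlinarith [mul_le_mul_of_nonneg_left h3 (pow_pos (by linarith : (0:ℝ) < x + m) 4).le]

-- summability of E-terms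
lemma E23_summable {x : ℝ} (hx : 1 < x) :
    Summable (fun m : ℕ => ((x + m) ^ 2 * (x + m + 1) * (x + m + 2) * (x + m + 3))⁻¹) :=
  summable_of_le_sq hx (fun m => by have := xm_gt hx m; positivity)
    (fun m => le_trans (E23_term_le hx m) (sq_le_gen hx m (by norm_num)))

lemma E24_summable {x : ℝ} (hx : 1 < x) :
    Summable (fun m : ℕ =>
      ((x + m) ^ 2 * (x + m + 1) * (x + m + 2) * (x + m + 3) * (x + m + 4))⁻¹) :=
  summable_of_le_sq hx (fun m => by have := xm_gt hx m; positivity)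
    (fun m => le_trans (E24_term_le hx m) (sq_le_gen hx m (by norm_num)))

lemma E33_summable {x : ℝ} (hx : 1 < x) :
    Summable (fun m : ℕ => ((x + m) ^ 3 * (x + m + 1) * (x + m + 2) * (x + m + 3))⁻¹) :=
  summable_of_le_sq hx (fun m => by have := xm_gt hx m; positivity)
    (fun m => le_trans (E33_term_le hx m) (sq_le_gen hx m (by norm_num)))

lemma E25_summable {x : ℝ} (hx : 1 < x) :
    Summable (fun m : ℕ =>
      ((x + m) ^ 2 * (x + m + 1) * (x + m + 2) * (x + m + 3) * (x + m + 4) * (x + m + 5))⁻¹) :=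
  summable_of_le_sq hx (fun m => by have := xm_gt hx m; positivity)
    (fun m => le_trans (E25_term_le hx m) (sq_le_gen hx m (by norm_num)))

lemma E34_summable {x : ℝ} (hx : 1 < x) :
    Summable (fun m : ℕ =>
      ((x + m) ^ 3 * (x + m + 1) * (x + m + 2) * (x + m + 3) * (x + m + 4))⁻¹) :=
  summable_of_le_sq hx (fun m => by have := xm_gt hx m; positivity)
    (fun m => le_trans (E34_term_le hx m) (sq_le_gen hx m (by norm_num)))

lemma E43_summable {x : ℝ} (hx : 1 < x) :
    Summable (fun m : ℕ => ((x + m) ^ 4 * (x + m + 1) * (x + m + 2) * (x + m + 3))⁻¹) :=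
  summable_of_le_sq hx (fun m => by have := xm_gt hx m; positivity)
    (fun m => le_trans (E43_term_le hx m) (sq_le_gen hx m (by norm_num)))

-- nonnegativity of the remainder sums
lemma E23_nonneg {x : ℝ} (hx : 1 < x) : 0 ≤ E23 x :=
  tsum_nonneg (fun m => by have := xm_gt hx m; positivity)
lemma E24_nonneg {x : ℝ} (hx : 1 < x) : 0 ≤ E24 x :=
  tsum_nonneg (fun m => by have := xm_gt hx m; positivity)
lemma E33_nonneg {x : ℝ} (hx : 1 < x) : 0 ≤ E33 x :=
  tsum_nonneg (fun m => by have := xm_gt hx m; positivity)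
lemma E25_nonneg {x : ℝ} (hx : 1 < x) : 0 ≤ E25 x :=
  tsum_nonneg (fun m => by have := xm_gt hx m; positivity)
lemma E34_nonneg {x : ℝ} (hx : 1 < x) : 0 ≤ E34 x :=
  tsum_nonneg (fun m => by have := xm_gt hx m; positivity)
lemma E43_nonneg {x : ℝ} (hx : 1 < x) : 0 ≤ E43 x :=
  tsum_nonneg (fun m => by have := xm_gt hx m; positivity)

-- upper bound for S p via shifted telescoping: S 5
lemma S5_le {x : ℝ} (hx : 5 < x) : S 5 x ≤ (4 * ((x-4) * (x-3) * (x-2) * (x-1)))⁻¹ := by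
  have hx1 : 1 < x := by linarith
  have hy : 1 < x - 4 := by linarith
  have h4 := hs4 hy
  have hterm : ∀ m : ℕ, ((x + m) ^ 5)⁻¹ ≤
      ((x - 4 + m) * (x - 4 + m + 1) * (x - 4 + m + 2) * (x - 4 + m + 3) * (x - 4 + m + 4))⁻¹ := by
    intro m
    have hm : (0:ℝ) ≤ m := Nat.cast_nonneg m
    apply inv_anti₀ (by positivity)
    nlinarith [sq_nonneg (x + m), pow_pos (show (0:ℝ) < x + m by linarith) 3,
      mul_pos (mul_pos (show (0:ℝ) < x - 4 + m by linarith) (show (0:ℝ) < x - 4 + m + 1 by linarith)) (show (0:ℝ) < x - 4 + m + 2 by linarith)]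
  have := Summable.tsum_le_tsum hterm (summable_S hx1 (by norm_num : 2 ≤ 5)) h4.summable
  rw [S_def]
  calc ∑' m : ℕ, ((x + m) ^ 5)⁻¹ ≤ _ := this
  _ = (4 * ((x-4) * (x-4+1) * (x-4+2) * (x-4+3)))⁻¹ := h4.tsum_eq
  _ = (4 * ((x-4) * (x-3) * (x-2) * (x-1)))⁻¹ := by ring_nf

lemma S6_le {x : ℝ} (hx : 6 < x) : S 6 x ≤ (5 * ((x-5) * (x-4) * (x-3) * (x-2) * (x-1)))⁻¹ := by
  have hx1 : 1 < x := by linarith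
  have hy : 1 < x - 5 := by linarith
  have h5 := hs5 hy
  have hterm : ∀ m : ℕ, ((x + m) ^ 6)⁻¹ ≤
      ((x - 5 + m) * (x - 5 + m + 1) * (x - 5 + m + 2) * (x - 5 + m + 3) * (x - 5 + m + 4)
        * (x - 5 + m + 5))⁻¹ := by
    intro m
    have hm : (0:ℝ) ≤ m := Nat.cast_nonneg m
    apply inv_anti₀ (by positivity)
    have l1 : (0:ℝ) < x - 5 + m := by linarith
    nlinarith [mul_pos (mul_pos l1 (show (0:ℝ) < x - 5 + m + 1 by linarith)) (show (0:ℝ) < x - 5 + m + 2 by linarith), mul_pos (show (0:ℝ) < x + m by linarith) (show (0:ℝ) < x + m by linarith), pow_pos (show (0:ℝ) < x + m by linarith) 4]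
  have := Summable.tsum_le_tsum hterm (summable_S hx1 (by norm_num : 2 ≤ 6)) h5.summable
  rw [S_def]
  calc ∑' m : ℕ, ((x + m) ^ 6)⁻¹ ≤ _ := this
  _ = (5 * ((x-5) * (x-5+1) * (x-5+2) * (x-5+3) * (x-5+4)))⁻¹ := h5.tsum_eq
  _ = (5 * ((x-5) * (x-4) * (x-3) * (x-2) * (x-1)))⁻¹ := by ring_nf

lemma S7_le {x : ℝ} (hx : 7 < x) :
    S 7 x ≤ (6 * ((x-6) * (x-5) * (x-4) * (x-3) * (x-2) * (x-1)))⁻¹ := by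
  have hx1 : 1 < x := by linarith
  have hy : 1 < x - 6 := by linarith
  have h6 := hs6 hy
  have hterm : ∀ m : ℕ, ((x + m) ^ 7)⁻¹ ≤
      ((x - 6 + m) * (x - 6 + m + 1) * (x - 6 + m + 2) * (x - 6 + m + 3) * (x - 6 + m + 4)
        * (x - 6 + m + 5) * (x - 6 + m + 6))⁻¹ := by
    intro m
    have hm : (0:ℝ) ≤ m := Nat.cast_nonneg m
    apply inv_anti₀ (by positivity)
    have l1 : (0:ℝ) < x - 6 + m := by linarith
    nlinarith [mul_pos (mul_pos l1 (show (0:ℝ) < x - 6 + m + 1 by linarith)) (show (0:ℝ) < x - 6 + m + 2 by linarith), mul_pos (mul_pos (show (0:ℝ) < x - 6 + m + 3 by linarith) (show (0:ℝ) < x - 6 + m + 4 by linarith)) (show (0:ℝ) < x - 6 + m + 5 by linarith), pow_pos (show (0:ℝ) < x + m by linarith) 5, pow_pos (show (0:ℝ) < x + m by linarith) 3]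
  have := Summable.tsum_le_tsum hterm (summable_S hx1 (by norm_num : 2 ≤ 7)) h6.summable
  rw [S_def]
  calc ∑' m : ℕ, ((x + m) ^ 7)⁻¹ ≤ _ := this
  _ = (6 * ((x-6) * (x-6+1) * (x-6+2) * (x-6+3) * (x-6+4) * (x-6+5)))⁻¹ := h6.tsum_eq
  _ = (6 * ((x-6) * (x-5) * (x-4) * (x-3) * (x-2) * (x-1)))⁻¹ := by ring_nf

lemma E23_le {x : ℝ} (hx : 5 < x) : E23 x ≤ (4 * ((x-4) * (x-3) * (x-2) * (x-1)))⁻¹ := by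
  have hx1 : 1 < x := by linarith
  refine le_trans ?_ (S5_le hx)
  rw [S_def]
  exact Summable.tsum_le_tsum (E23_term_le hx1) (E23_summable hx1) (summable_S hx1 (by norm_num))

lemma E24_le {x : ℝ} (hx : 6 < x) : E24 x ≤ (5 * ((x-5) * (x-4) * (x-3) * (x-2) * (x-1)))⁻¹ := by
  have hx1 : 1 < x := by linarith
  refine le_trans ?_ (S6_le hx)
  rw [S_def]
  exact Summable.tsum_le_tsum (E24_term_le hx1) (E24_summable hx1) (summable_S hx1 (by norm_num))

lemma E33_le {x : ℝ} (hx : 6 < x) : E33 x ≤ (5 * ((x-5) * (x-4) * (x-3) * (x-2) * (x-1)))⁻¹ := by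
  have hx1 : 1 < x := by linarith
  refine le_trans ?_ (S6_le hx)
  rw [S_def]
  exact Summable.tsum_le_tsum (E33_term_le hx1) (E33_summable hx1) (summable_S hx1 (by norm_num))

lemma E25_le {x : ℝ} (hx : 7 < x) :
    E25 x ≤ (6 * ((x-6) * (x-5) * (x-4) * (x-3) * (x-2) * (x-1)))⁻¹ := by
  have hx1 : 1 < x := by linarith
  refine le_trans ?_ (S7_le hx)
  rw [S_def]
  exact Summable.tsum_le_tsum (E25_term_le hx1) (E25_summable hx1) (summable_S hx1 (by norm_num))

lemma E34_le {x : ℝ} (hx : 7 < x) :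
    E34 x ≤ (6 * ((x-6) * (x-5) * (x-4) * (x-3) * (x-2) * (x-1)))⁻¹ := by
  have hx1 : 1 < x := by linarith
  refine le_trans ?_ (S7_le hx)
  rw [S_def]
  exact Summable.tsum_le_tsum (E34_term_le hx1) (E34_summable hx1) (summable_S hx1 (by norm_num))

lemma E43_le {x : ℝ} (hx : 7 < x) :
    E43 x ≤ (6 * ((x-6) * (x-5) * (x-4) * (x-3) * (x-2) * (x-1)))⁻¹ := by
  have hx1 : 1 < x := by linarith
  refine le_trans ?_ (S7_le hx)
  rw [S_def]
  exact Summable.tsum_le_tsum (E43_term_le hx1) (E43_summable hx1) (summable_S hx1 (by norm_num))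

-- decompositions
lemma S2_eq {x : ℝ} (hx : 1 < x) :
    S 2 x = x⁻¹ + (2 * (x * (x+1)))⁻¹ + 2 * (3 * (x * (x+1) * (x+2)))⁻¹ + 6 * E23 x := by
  have h : HasSum (fun m : ℕ =>
      ((x + m) * (x + m + 1))⁻¹ + ((x + m) * (x + m + 1) * (x + m + 2))⁻¹
        + 2 * ((x + m) * (x + m + 1) * (x + m + 2) * (x + m + 3))⁻¹
        + 6 * ((x + m) ^ 2 * (x + m + 1) * (x + m + 2) * (x + m + 3))⁻¹)
      (x⁻¹ + (2 * (x * (x+1)))⁻¹ + 2 * (3 * (x * (x+1) * (x+2)))⁻¹ + 6 * E23 x) :=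
    (((hs1 hx).add (hs2 hx)).add ((hs3 hx).mul_left 2)).add
      ((E23_summable hx).hasSum.mul_left 6)
  have hfun : (fun m : ℕ =>
      ((x + m) * (x + m + 1))⁻¹ + ((x + m) * (x + m + 1) * (x + m + 2))⁻¹
        + 2 * ((x + m) * (x + m + 1) * (x + m + 2) * (x + m + 3))⁻¹
        + 6 * ((x + m) ^ 2 * (x + m + 1) * (x + m + 2) * (x + m + 3))⁻¹)
      = fun m : ℕ => ((x + m) ^ 2)⁻¹ := by
    funext m
    have ht : (1:ℝ) < x + m := xm_gt hx m
    have h0 : (0:ℝ) < x + m := by linarith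
    have h1 : (0:ℝ) < x + m + 1 := by linarith
    have h2 : (0:ℝ) < x + m + 2 := by linarith
    have h3 : (0:ℝ) < x + m + 3 := by linarith
    field_simp
    ring
  rw [hfun] at h
  rw [S_def]
  exact h.tsum_eq

lemma S3_eq {x : ℝ} (hx : 1 < x) :
    S 3 x = (2 * (x * (x+1)))⁻¹ + 3 * (3 * (x * (x+1) * (x+2)))⁻¹
      + 11 * (4 * (x * (x+1) * (x+2) * (x+3)))⁻¹ + 44 * E24 x + 6 * E33 x := by
  have h : HasSum (fun m : ℕ =>
      ((x + m) * (x + m + 1) * (x + m + 2))⁻¹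
        + 3 * ((x + m) * (x + m + 1) * (x + m + 2) * (x + m + 3))⁻¹
        + 11 * ((x + m) * (x + m + 1) * (x + m + 2) * (x + m + 3) * (x + m + 4))⁻¹
        + 44 * ((x + m) ^ 2 * (x + m + 1) * (x + m + 2) * (x + m + 3) * (x + m + 4))⁻¹
        + 6 * ((x + m) ^ 3 * (x + m + 1) * (x + m + 2) * (x + m + 3))⁻¹)
      ((2 * (x * (x+1)))⁻¹ + 3 * (3 * (x * (x+1) * (x+2)))⁻¹
        + 11 * (4 * (x * (x+1) * (x+2) * (x+3)))⁻¹ + 44 * E24 x + 6 * E33 x) :=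
    ((((hs2 hx).add ((hs3 hx).mul_left 3)).add ((hs4 hx).mul_left 11)).add
      ((E24_summable hx).hasSum.mul_left 44)).add ((E33_summable hx).hasSum.mul_left 6)
  have hfun : (fun m : ℕ =>
      ((x + m) * (x + m + 1) * (x + m + 2))⁻¹
        + 3 * ((x + m) * (x + m + 1) * (x + m + 2) * (x + m + 3))⁻¹
        + 11 * ((x + m) * (x + m + 1) * (x + m + 2) * (x + m + 3) * (x + m + 4))⁻¹
        + 44 * ((x + m) ^ 2 * (x + m + 1) * (x + m + 2) * (x + m + 3) * (x + m + 4))⁻¹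
        + 6 * ((x + m) ^ 3 * (x + m + 1) * (x + m + 2) * (x + m + 3))⁻¹)
      = fun m : ℕ => ((x + m) ^ 3)⁻¹ := by
    funext m
    have ht : (1:ℝ) < x + m := xm_gt hx m
    have h0 : (0:ℝ) < x + m := by linarith
    have h1 : (0:ℝ) < x + m + 1 := by linarith
    have h2 : (0:ℝ) < x + m + 2 := by linarith
    have h3 : (0:ℝ) < x + m + 3 := by linarith
    have h4 : (0:ℝ) < x + m + 4 := by linarith
    field_simp
    ring
  rw [hfun] at h
  rw [S_def]
  exact h.tsum_eq

lemma S4_eq {x : ℝ} (hx : 1 < x) :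
    S 4 x = (3 * (x * (x+1) * (x+2)))⁻¹ + 6 * (4 * (x * (x+1) * (x+2) * (x+3)))⁻¹
      + 35 * (5 * (x * (x+1) * (x+2) * (x+3) * (x+4)))⁻¹
      + 175 * E25 x + 44 * E34 x + 6 * E43 x := by
  have h : HasSum (fun m : ℕ =>
      ((x + m) * (x + m + 1) * (x + m + 2) * (x + m + 3))⁻¹
        + 6 * ((x + m) * (x + m + 1) * (x + m + 2) * (x + m + 3) * (x + m + 4))⁻¹
        + 35 * ((x + m) * (x + m + 1) * (x + m + 2) * (x + m + 3) * (x + m + 4) * (x + m + 5))⁻¹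
        + 175 * ((x + m) ^ 2 * (x + m + 1) * (x + m + 2) * (x + m + 3) * (x + m + 4)
            * (x + m + 5))⁻¹
        + 44 * ((x + m) ^ 3 * (x + m + 1) * (x + m + 2) * (x + m + 3) * (x + m + 4))⁻¹
        + 6 * ((x + m) ^ 4 * (x + m + 1) * (x + m + 2) * (x + m + 3))⁻¹)
      ((3 * (x * (x+1) * (x+2)))⁻¹ + 6 * (4 * (x * (x+1) * (x+2) * (x+3)))⁻¹
        + 35 * (5 * (x * (x+1) * (x+2) * (x+3) * (x+4)))⁻¹
        + 175 * E25 x + 44 * E34 x + 6 * E43 x) :=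
    (((((hs3 hx).add ((hs4 hx).mul_left 6)).add ((hs5 hx).mul_left 35)).add
      ((E25_summable hx).hasSum.mul_left 175)).add
        ((E34_summable hx).hasSum.mul_left 44)).add ((E43_summable hx).hasSum.mul_left 6)
  have hfun : (fun m : ℕ =>
      ((x + m) * (x + m + 1) * (x + m + 2) * (x + m + 3))⁻¹
        + 6 * ((x + m) * (x + m + 1) * (x + m + 2) * (x + m + 3) * (x + m + 4))⁻¹
        + 35 * ((x + m) * (x + m + 1) * (x + m + 2) * (x + m + 3) * (x + m + 4) * (x + m + 5))⁻¹
        + 175 * ((x + m) ^ 2 * (x + m + 1) * (x + m + 2) * (x + m + 3) * (x + m + 4)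
            * (x + m + 5))⁻¹
        + 44 * ((x + m) ^ 3 * (x + m + 1) * (x + m + 2) * (x + m + 3) * (x + m + 4))⁻¹
        + 6 * ((x + m) ^ 4 * (x + m + 1) * (x + m + 2) * (x + m + 3))⁻¹)
      = fun m : ℕ => ((x + m) ^ 4)⁻¹ := by
    funext m
    have ht : (1:ℝ) < x + m := xm_gt hx m
    have h0 : (0:ℝ) < x + m := by linarith
    have h1 : (0:ℝ) < x + m + 1 := by linarith
    have h2 : (0:ℝ) < x + m + 2 := by linarith
    have h3 : (0:ℝ) < x + m + 3 := by linarith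
    have h4 : (0:ℝ) < x + m + 4 := by linarith
    have h5 : (0:ℝ) < x + m + 5 := by linarith
    field_simp
    ring
  rw [hfun] at h
  rw [S_def]
  exact h.tsum_eq



lemma hasDerivAt_term {p : ℕ} (hp : 1 ≤ p) {y : ℝ} (m : ℕ) (hy : 0 < y + m) :
    HasDerivAt (fun z : ℝ => ((z + m) ^ p)⁻¹) (-(p : ℝ) * ((y + m) ^ (p + 1))⁻¹) y := by
  have h1 : HasDerivAt (fun z : ℝ => (z + m) ^ p) ((p : ℝ) * (y + m) ^ (p - 1)) y := by
    simpa using ((hasDerivAt_id y).add_const (m : ℝ)).fun_pow p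
  have h2 := h1.fun_inv (by positivity)
  refine h2.congr_deriv ?_; symm
  have hpow : (y + m) ^ (p - 1) * (y + m) ^ (p + 1) = ((y + m) ^ p) ^ 2 := by
    rw [← pow_add, ← pow_mul]
    congr 1
    omega
  field_simp
  rw [← hpow]; ring

lemma hasDerivAt_S {p : ℕ} (hp : 2 ≤ p) {x : ℝ} (hx : 1 < x) :
    HasDerivAt (S p) (-(p : ℝ) * S (p + 1) x) x := by
  have hSfun : S p = fun y : ℝ => ∑' m : ℕ, ((y + m) ^ p)⁻¹ := funext fun y => S_def p y
  rw [hSfun]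
  set s : Set ℝ := Set.Ioo 1 (x + 1) with hs
  have hxs : x ∈ s := ⟨hx, by linarith⟩
  have hopen : IsOpen s := isOpen_Ioo
  -- uniform convergence of the derivative partial sums
  have hTU : TendstoUniformlyOn
      (fun N : ℕ => fun y : ℝ => ∑ m ∈ Finset.range N, (-(p:ℝ) * ((y + m) ^ (p + 1))⁻¹))
      (fun y => ∑' m : ℕ, (-(p:ℝ) * ((y + m) ^ (p + 1))⁻¹)) atTop s := by
    apply tendstoUniformlyOn_tsum_nat (u := fun m : ℕ => (p : ℝ) * (((m : ℝ) + 1) ^ (p + 1))⁻¹)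
    · apply Summable.mul_left
      have h2 : Summable (fun n : ℕ => ((n : ℝ) ^ (p+1))⁻¹) := by
        simpa using Real.summable_one_div_nat_pow.2 (by omega : 2 ≤ p + 1)
      have := (summable_nat_add_iff 1).2 h2
      simpa [add_comm] using this
    · intro m y hy
      have hy1 : (1:ℝ) < y := hy.1
      have h1 : ((m:ℝ) + 1) ≤ y + m := by linarith
      have h0 : (0:ℝ) < (m:ℝ) + 1 := by positivity
      rw [norm_mul, norm_neg, norm_inv]
      rw [Real.norm_natCast, Real.norm_of_nonneg (by positivity)]
      have hle : ((m:ℝ) + 1) ^ (p+1) ≤ (y + m) ^ (p+1) := pow_le_pow_left₀ (by positivity) h1 (p+1)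
      have := inv_anti₀ (by positivity) hle
      exact mul_le_mul_of_nonneg_left this (by positivity)
  have hderiv : ∀ᶠ N in (atTop : Filter ℕ), ∀ y ∈ s,
      HasDerivAt (fun z : ℝ => ∑ m ∈ Finset.range N, ((z + m) ^ p)⁻¹)
        (∑ m ∈ Finset.range N, (-(p:ℝ) * ((y + m) ^ (p + 1))⁻¹)) y := by
    filter_upwards with N y hy
    apply HasDerivAt.fun_sum
    intro m _
    have : (0:ℝ) < y + m := by
      have := xm_gt hy.1 m; linarith
    exact hasDerivAt_term (by omega) m this
  have hpt : ∀ y ∈ s, Tendsto (fun N : ℕ => ∑ m ∈ Finset.range N, ((y + m) ^ p)⁻¹) atTop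
      (𝓝 (∑' m : ℕ, ((y + m) ^ p)⁻¹)) := by
    intro y hy
    exact (summable_S hy.1 hp).hasSum.tendsto_sum_nat
  have key := hasDerivAt_of_tendstoUniformlyOn hopen hTU hderiv hpt hxs
  have : ∑' m : ℕ, (-(p:ℝ) * ((x + m) ^ (p + 1))⁻¹) = -(p:ℝ) * S (p+1) x := by
    rw [tsum_mul_left, S_def]
  rwa [this] at key



noncomputable def cseq (n : ℕ) : ℝ := (∑ m ∈ Finset.range (n+1), ((m:ℝ)+1)⁻¹) - Real.log n

noncomputable def T (x : ℝ) : ℝ := ∑' m : ℕ, (((m:ℝ)+1)⁻¹ - (x+m)⁻¹)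

noncomputable def gfun (x : ℝ) : ℝ := -Real.eulerMascheroniConstant + T x

noncomputable def W (n : ℕ) (x : ℝ) : ℝ := ∑ m ∈ Finset.range (n+1), (((m:ℝ)+1)⁻¹ - (x+m)⁻¹)

noncomputable def D (n : ℕ) (x : ℝ) : ℝ := -(cseq n) + W n x

lemma tendsto_cseq : Tendsto cseq atTop (𝓝 Real.eulerMascheroniConstant) := by
  have hid : ∀ n : ℕ, cseq n = (((harmonic (n+1) : ℚ) : ℝ) - Real.log (n+1))
      + (Real.log (n+1) - Real.log n) := by
    intro n
    have : ((harmonic (n+1) : ℚ) : ℝ) = ∑ m ∈ Finset.range (n+1), ((m:ℝ)+1)⁻¹ := by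
      rw [harmonic]
      push_cast
      apply Finset.sum_congr rfl
      intro m _
      norm_num
    rw [cseq, this]
    ring
  rw [funext hid]
  have h1 : Tendsto (fun n : ℕ => ((harmonic (n+1) : ℚ) : ℝ) - Real.log (n+1)) atTop
      (𝓝 Real.eulerMascheroniConstant) := by
    have h := Real.tendsto_harmonic_sub_log.comp (tendsto_add_atTop_nat 1)
    exact h.congr (fun n => by simp only [Function.comp_apply]; push_cast; ring)
  have h2 : Tendsto (fun n : ℕ => Real.log (n+1) - Real.log n) atTop (𝓝 0) := by
    have hinv : Tendsto (fun n : ℕ => (n:ℝ)⁻¹) atTop (𝓝 0) :=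
      tendsto_inv_atTop_zero.comp tendsto_natCast_atTop_atTop
    have hbase : Tendsto (fun n : ℕ => 1 + (n:ℝ)⁻¹) atTop (𝓝 1) := by
      simpa using tendsto_const_nhds.add hinv
    have hlog : Tendsto (fun n : ℕ => Real.log (1 + (n:ℝ)⁻¹)) atTop (𝓝 0) := by
      have := (Real.continuousAt_log (by norm_num : (1:ℝ) ≠ 0)).tendsto.comp hbase
      simpa [Function.comp_def] using this
    apply hlog.congr'
    filter_upwards [eventually_gt_atTop 0] with n hn
    have hn0 : (0:ℝ) < n := by exact_mod_cast hn
    rw [← Real.log_div (by positivity) (by positivity)]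
    congr 1
    field_simp
  simpa using h1.add h2

lemma Tterm_eq {x : ℝ} (hx : 1 < x) (m : ℕ) :
    ((m:ℝ)+1)⁻¹ - (x+m)⁻¹ = (x - 1) * (((m:ℝ)+1) * (x+m))⁻¹ := by
  have h0 : (0:ℝ) < (m:ℝ)+1 := by positivity
  have h1 : (0:ℝ) < x + m := by have := xm_gt hx m; linarith
  field_simp
  ring

lemma Tterm_nonneg {x : ℝ} (hx : 1 < x) (m : ℕ) : 0 ≤ ((m:ℝ)+1)⁻¹ - (x+m)⁻¹ := by
  rw [Tterm_eq hx m]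
  have h0 : (0:ℝ) < (m:ℝ)+1 := by positivity
  have h1 : (0:ℝ) < x + m := by have := xm_gt hx m; linarith
  have h2 : (0:ℝ) < x - 1 := by linarith
  positivity

lemma Tterm_le {x : ℝ} (hx : 1 < x) (m : ℕ) :
    ((m:ℝ)+1)⁻¹ - (x+m)⁻¹ ≤ (x - 1) * (((m:ℝ)+1)^2)⁻¹ := by
  rw [Tterm_eq hx m]
  have h0 : (0:ℝ) < (m:ℝ)+1 := by positivity
  have h1 : (0:ℝ) < x + m := by have := xm_gt hx m; linarith
  apply mul_le_mul_of_nonneg_left _ (by linarith)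
  apply inv_anti₀ (by positivity)
  nlinarith

lemma summable_sqinv : Summable (fun m : ℕ => (((m:ℝ)+1)^2)⁻¹) := by
  have h2 : Summable (fun n : ℕ => ((n : ℝ) ^ 2)⁻¹) := by
    simpa using Real.summable_one_div_nat_pow.2 (le_refl 2)
  have := (summable_nat_add_iff 1).2 h2
  simpa [add_comm] using this

lemma summable_Tterm {x : ℝ} (hx : 1 < x) :
    Summable (fun m : ℕ => ((m:ℝ)+1)⁻¹ - (x+m)⁻¹) :=
  Summable.of_nonneg_of_le (Tterm_nonneg hx) (Tterm_le hx) (summable_sqinv.mul_left (x-1))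

lemma tendstoUniformlyOn_W {b : ℝ} (hb : 1 < b) :
    TendstoUniformlyOn W T atTop (Set.Ioo 1 b) := by
  have h := tendstoUniformlyOn_tsum_nat (f := fun m : ℕ => fun x : ℝ => ((m:ℝ)+1)⁻¹ - (x+m)⁻¹)
    (u := fun m : ℕ => b * (((m:ℝ)+1)^2)⁻¹) (summable_sqinv.mul_left b) ?_ (s := Set.Ioo 1 b)
  · intro u hu
    exact (tendsto_add_atTop_nat 1).eventually (h u hu)
  · intro m x hx
    rw [Real.norm_of_nonneg (Tterm_nonneg hx.1 m)]
    refine le_trans (Tterm_le hx.1 m) ?_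
    apply mul_le_mul_of_nonneg_right (by linarith [hx.2]) (by positivity)

lemma W_tendsto {x : ℝ} (hx : 1 < x) : Tendsto (fun n => W n x) atTop (𝓝 (T x)) := by
  have := (summable_Tterm hx).hasSum.tendsto_sum_nat
  exact this.comp (tendsto_add_atTop_nat 1)

lemma hasDerivAt_logGammaSeq {n : ℕ} {y : ℝ} (hy : 1 < y) :
    HasDerivAt (fun z => Real.BohrMollerup.logGammaSeq z n) (D n y) y := by
  have hder : HasDerivAt (fun z : ℝ => z * Real.log n + Real.log (Nat.factorial n)
      - ∑ m ∈ Finset.range (n+1), Real.log (z + m))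
      (Real.log n - ∑ m ∈ Finset.range (n+1), (y+m)⁻¹) y := by
    have h1 : HasDerivAt (fun z : ℝ => z * Real.log n + Real.log (Nat.factorial n))
        (Real.log n) y := by
      simpa using ((hasDerivAt_id y).mul_const (Real.log n)).add_const (Real.log (Nat.factorial n))
    have h2 : HasDerivAt (fun z : ℝ => ∑ m ∈ Finset.range (n+1), Real.log (z + m))
        (∑ m ∈ Finset.range (n+1), (y+m)⁻¹) y := by
      apply HasDerivAt.fun_sum
      intro m _
      have hpos : (0:ℝ) < y + m := by have := xm_gt hy m; linarith
      have := ((hasDerivAt_id y).add_const (m:ℝ)).log hpos.ne'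
      simpa [one_div] using this
    simpa using h1.fun_sub h2
  have hD : D n y = Real.log n - ∑ m ∈ Finset.range (n+1), (y+m)⁻¹ := by
    rw [D, W, cseq, Finset.sum_sub_distrib]
    ring
  rw [hD]
  exact hder

lemma hasDerivAt_logGamma {x : ℝ} (hx : 1 < x) :
    HasDerivAt (fun y => Real.log (Real.Gamma y)) (gfun x) x := by
  refine hasDerivAt_of_tendstoUniformlyOn (l := (atTop : Filter ℕ)) (s := Set.Ioo 1 (x+1))
    (f := fun n y => Real.BohrMollerup.logGammaSeq y n) (f' := D) (g' := gfun)
    isOpen_Ioo ?_ ?_ ?_ ⟨hx, by linarith⟩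
  · have hconst : TendstoUniformlyOn (fun n : ℕ => fun _ : ℝ => -(cseq n))
        (fun _ => -Real.eulerMascheroniConstant) atTop (Set.Ioo 1 (x+1)) :=
      (tendsto_cseq.neg).tendstoUniformlyOn_const _
    have := hconst.add (tendstoUniformlyOn_W (by linarith : (1:ℝ) < x + 1))
    exact this
  · filter_upwards with n y hy
    exact hasDerivAt_logGammaSeq hy.1
  · intro y hy
    exact Real.BohrMollerup.tendsto_log_gamma (by linarith [hy.1] : (0:ℝ) < y)

lemma hasDerivAt_gfun {x : ℝ} (hx : 1 < x) : HasDerivAt gfun (S 2 x) x := by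
  have key : HasDerivAt gfun (∑' m : ℕ, ((x + m) ^ 2)⁻¹) x := by
    refine hasDerivAt_of_tendstoUniformlyOn (l := (atTop : Filter ℕ)) (s := Set.Ioo 1 (x+1))
      (f := D) (f' := fun n y => ∑ m ∈ Finset.range (n+1), ((y + m)^2)⁻¹)
      (g' := fun y : ℝ => ∑' m : ℕ, ((y + m) ^ 2)⁻¹)
      isOpen_Ioo ?_ ?_ ?_ ⟨hx, by linarith⟩
    · have h := tendstoUniformlyOn_tsum_nat (f := fun m : ℕ => fun y : ℝ => ((y+m)^2)⁻¹)
        (u := fun m : ℕ => (((m:ℝ)+1)^2)⁻¹) summable_sqinv ?_ (s := Set.Ioo 1 (x+1))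
      · intro u hu
        exact (tendsto_add_atTop_nat 1).eventually (h u hu)
      · intro m y hy
        have h1 : ((m:ℝ) + 1) ≤ y + m := by linarith [hy.1]
        rw [Real.norm_of_nonneg (by positivity)]
        apply inv_anti₀ (by positivity)
        exact pow_le_pow_left₀ (by positivity) h1 2
    · filter_upwards with n y hy
      have hW : HasDerivAt (fun z => W n z) (∑ m ∈ Finset.range (n+1), ((y + m)^2)⁻¹) y := by
        apply HasDerivAt.fun_sum
        intro m _
        have hpos : (0:ℝ) < y + m := by have := xm_gt hy.1 m; linarith
        have hinv : HasDerivAt (fun z : ℝ => (z + m)⁻¹) (-((y+m)^2)⁻¹) y := by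
          have := ((hasDerivAt_id y).add_const (m:ℝ)).fun_inv hpos.ne'
          refine this.congr_deriv ?_; symm
          simp only [id_eq]
          field_simp
        have := (hasDerivAt_const y ((m:ℝ)+1)⁻¹).fun_sub hinv
        simpa using this
      exact hW.const_add (-(cseq n))
    · intro y hy
      have := (tendsto_cseq.neg).add (W_tendsto hy.1)
      simpa [D, gfun] using this
  rwa [← S_def] at key

lemma digamma_eq_gfun {x : ℝ} (hx : 1 < x) : digamma x = gfun x :=
  (hasDerivAt_logGamma hx).deriv

lemma deriv_digamma_eq {x : ℝ} (hx : 1 < x) : deriv digamma x = S 2 x := by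
  have hev : digamma =ᶠ[𝓝 x] gfun := by
    filter_upwards [Ioi_mem_nhds hx] with y hy
    exact digamma_eq_gfun hy
  rw [hev.deriv_eq]
  exact (hasDerivAt_gfun hx).deriv

lemma deriv2_digamma_eq {x : ℝ} (hx : 1 < x) : deriv (deriv digamma) x = -2 * S 3 x := by
  have hev : deriv digamma =ᶠ[𝓝 x] S 2 := by
    filter_upwards [Ioi_mem_nhds hx] with y hy
    exact deriv_digamma_eq hy
  rw [hev.deriv_eq]
  have := (hasDerivAt_S (by norm_num : 2 ≤ 2) hx).deriv
  rw [this]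
  norm_num

lemma deriv3_digamma_eq {x : ℝ} (hx : 1 < x) :
    deriv (deriv (deriv digamma)) x = 6 * S 4 x := by
  have hev : deriv (deriv digamma) =ᶠ[𝓝 x] (fun y => -2 * S 3 y) := by
    filter_upwards [Ioi_mem_nhds hx] with y hy
    exact deriv2_digamma_eq hy
  rw [hev.deriv_eq]
  have h := ((hasDerivAt_S (by norm_num : 2 ≤ 3) hx).const_mul (-2 : ℝ)).deriv
  rw [h]
  push_cast
  ring

lemma Psi_eq {x : ℝ} (hx : 1 < x) : Psi x = (S 2 x)^2 - 2 * S 3 x := by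
  rw [Psi, deriv_digamma_eq hx, deriv2_digamma_eq hx]
  ring

lemma hasDerivAt_Psi {x : ℝ} (hx : 1 < x) :
    HasDerivAt Psi (-4 * S 2 x * S 3 x + 6 * S 4 x) x := by
  have hev : Psi =ᶠ[𝓝 x] (fun y => (S 2 y)^2 + (-2 * S 3 y)) := by
    filter_upwards [Ioi_mem_nhds hx] with y hy
    rw [Psi_eq hy]; ring
  apply HasDerivAt.congr_of_eventuallyEq _ hev
  have h1 : HasDerivAt (fun y => (S 2 y)^2) (2 * S 2 x * (-(2:ℝ) * S 3 x)) x := by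
    have := (hasDerivAt_S (by norm_num : 2 ≤ 2) hx).fun_pow 2
    refine this.congr_deriv ?_; symm
    push_cast
    ring
  have h2 : HasDerivAt (fun y => -2 * S 3 y) (-2 * (-(3:ℝ) * S 4 x)) x :=
    (hasDerivAt_S (by norm_num : 2 ≤ 3) hx).const_mul (-2 : ℝ)
  have := h1.fun_add h2
  refine this.congr_deriv ?_; symm
  push_cast
  ring



/-- generic helper: a limit at `atTop` obtained by substituting `t = x⁻¹`. -/
lemma tendsto_comp_inv {g : ℝ → ℝ} {c : ℝ} (hg : ContinuousAt g 0) (h0 : g 0 = c)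
    {f : ℝ → ℝ} (hfg : ∀ᶠ x in atTop, f x = g x⁻¹) : Tendsto f atTop (𝓝 c) := by
  have h := hg.tendsto.comp tendsto_inv_atTop_zero
  rw [h0] at h
  exact Tendsto.congr' (by filter_upwards [hfg] with x hx using hx.symm) h

-- error functions
noncomputable def uu (x : ℝ) : ℝ := x^3 * S 2 x - x^2 - x/2 - 1/6
noncomputable def vv (x : ℝ) : ℝ := x^4 * S 3 x - x^2/2 - x/2 - 1/4
noncomputable def ww (x : ℝ) : ℝ := x^5 * S 4 x - x^2/3 - x/2 - 1/3

lemma uu_def (x : ℝ) : uu x = x^3 * S 2 x - x^2 - x/2 - 1/6 := rfl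
lemma vv_def (x : ℝ) : vv x = x^4 * S 3 x - x^2/2 - x/2 - 1/4 := rfl
lemma ww_def (x : ℝ) : ww x = x^5 * S 4 x - x^2/3 - x/2 - 1/3 := rfl

lemma inv_facts {x : ℝ} (hx : 6 < x) :
    (0:ℝ) < x⁻¹ ∧ x⁻¹ < 1/6 := by
  constructor
  · positivity
  · rw [inv_lt_comm₀ (by linarith) (by norm_num)]
    simpa using hx

lemma tendsto_E5 : Tendsto (fun x : ℝ => 6 * (x^3 * E23 x)) atTop (𝓝 0) := by
  apply tendsto_of_tendsto_of_tendsto_of_le_of_le' (g := fun _ => (0:ℝ))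
    (h := fun x : ℝ => 6 * (x^3 * (4 * ((x-4) * (x-3) * (x-2) * (x-1)))⁻¹))
    tendsto_const_nhds
  · apply tendsto_comp_inv (g := fun t : ℝ => 6 * (t * (4 * ((1-4*t) * (1-3*t) * (1-2*t) * (1-t)))⁻¹))
    · apply ContinuousAt.mul continuousAt_const
      apply ContinuousAt.mul continuousAt_id
      apply ContinuousAt.inv₀ (by fun_prop) (by norm_num)
    · norm_num
    · filter_upwards [eventually_gt_atTop (6:ℝ)] with x hx
      obtain ⟨h1, h2⟩ := inv_facts hx
      have hx0 : x ≠ 0 := by positivity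
      have e1 : x - 1 ≠ 0 := by nlinarith
      have e2 : x - 2 ≠ 0 := by nlinarith
      have e3 : x - 3 ≠ 0 := by nlinarith
      have e4 : x - 4 ≠ 0 := by nlinarith
      have f1 : 1 - x⁻¹ ≠ 0 := by nlinarith
      have f2 : 1 - 2*x⁻¹ ≠ 0 := by nlinarith
      have f3 : 1 - 3*x⁻¹ ≠ 0 := by nlinarith
      have f4 : 1 - 4*x⁻¹ ≠ 0 := by nlinarith
      field_simp
  · filter_upwards [eventually_gt_atTop (6:ℝ)] with x hx
    have h1 : (0:ℝ) < x := by linarith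
    have h2 := E23_nonneg (show (1:ℝ) < x by linarith)
    positivity
  · filter_upwards [eventually_gt_atTop (6:ℝ)] with x hx
    have h2 := E23_le (show (5:ℝ) < x by linarith)
    have h3 : (0:ℝ) ≤ x^3 := by positivity
    nlinarith [mul_le_mul_of_nonneg_left h2 h3]

lemma tendsto_uu : Tendsto uu atTop (𝓝 0) := by
  have hga : Tendsto (fun x : ℝ =>
      (-(x⁻¹ * (3/2 + (11/6)*x⁻¹ + (1/3)*x⁻¹^2))) / ((1+x⁻¹)^2*(1+2*x⁻¹))) atTop (𝓝 0) := by
    apply tendsto_comp_inv (g := fun t : ℝ => (-(t * (3/2 + (11/6)*t + (1/3)*t^2))) / ((1+t)^2*(1+2*t)))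
    · apply ContinuousAt.div (by fun_prop) (by fun_prop) (by norm_num)
    · norm_num
    · filter_upwards with x using rfl
  have key := hga.add tendsto_E5
  rw [add_zero] at key
  apply Tendsto.congr' _ key
  filter_upwards [eventually_gt_atTop (6:ℝ)] with x hx
  obtain ⟨h1, h2⟩ := inv_facts hx
  have hx1 : (1:ℝ) < x := by linarith
  have hx0 : x ≠ 0 := by positivity
  have e1 : x + 1 ≠ 0 := by nlinarith
  have e2 : x + 2 ≠ 0 := by nlinarith
  have f1 : 1 + x⁻¹ ≠ 0 := by nlinarith
  have f2 : 1 + 2*x⁻¹ ≠ 0 := by nlinarith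
  rw [uu, S2_eq hx1]
  field_simp
  ring

lemma tendsto_E6 : Tendsto (fun x : ℝ => 44 * (x^4 * E24 x) + 6 * (x^4 * E33 x)) atTop (𝓝 0) := by
  apply tendsto_of_tendsto_of_tendsto_of_le_of_le' (g := fun _ => (0:ℝ))
    (h := fun x : ℝ => 50 * (x^4 * (5 * ((x-5) * (x-4) * (x-3) * (x-2) * (x-1)))⁻¹))
    tendsto_const_nhds
  · apply tendsto_comp_inv
      (g := fun t : ℝ => 50 * (t * (5 * ((1-5*t) * (1-4*t) * (1-3*t) * (1-2*t) * (1-t)))⁻¹))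
    · apply ContinuousAt.mul continuousAt_const
      apply ContinuousAt.mul continuousAt_id
      apply ContinuousAt.inv₀ (by fun_prop) (by norm_num)
    · norm_num
    · filter_upwards [eventually_gt_atTop (6:ℝ)] with x hx
      obtain ⟨h1, h2⟩ := inv_facts hx
      have hx0 : x ≠ 0 := by positivity
      have e1 : x - 1 ≠ 0 := by nlinarith
      have e2 : x - 2 ≠ 0 := by nlinarith
      have e3 : x - 3 ≠ 0 := by nlinarith
      have e4 : x - 4 ≠ 0 := by nlinarith
      have e5 : x - 5 ≠ 0 := by nlinarith
      have f1 : 1 - x⁻¹ ≠ 0 := by nlinarith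
      have f2 : 1 - 2*x⁻¹ ≠ 0 := by nlinarith
      have f3 : 1 - 3*x⁻¹ ≠ 0 := by nlinarith
      have f4 : 1 - 4*x⁻¹ ≠ 0 := by nlinarith
      have f5 : 1 - 5*x⁻¹ ≠ 0 := by nlinarith
      field_simp
  · filter_upwards [eventually_gt_atTop (6:ℝ)] with x hx
    have h1 : (0:ℝ) < x := by linarith
    have h2 := E24_nonneg (show (1:ℝ) < x by linarith)
    have h3 := E33_nonneg (show (1:ℝ) < x by linarith)
    positivity
  · filter_upwards [eventually_gt_atTop (6:ℝ)] with x hx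
    have h2 := E24_le hx
    have h3 := E33_le hx
    have h4 : (0:ℝ) ≤ x^4 := by positivity
    nlinarith [mul_le_mul_of_nonneg_left h2 h4, mul_le_mul_of_nonneg_left h3 h4]

lemma tendsto_E7 : Tendsto (fun x : ℝ =>
    175 * (x^5 * E25 x) + 44 * (x^5 * E34 x) + 6 * (x^5 * E43 x)) atTop (𝓝 0) := by
  apply tendsto_of_tendsto_of_tendsto_of_le_of_le' (g := fun _ => (0:ℝ))
    (h := fun x : ℝ => 225 * (x^5 * (6 * ((x-6) * (x-5) * (x-4) * (x-3) * (x-2) * (x-1)))⁻¹))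
    tendsto_const_nhds
  · apply tendsto_comp_inv
      (g := fun t : ℝ =>
        225 * (t * (6 * ((1-6*t) * (1-5*t) * (1-4*t) * (1-3*t) * (1-2*t) * (1-t)))⁻¹))
    · apply ContinuousAt.mul continuousAt_const
      apply ContinuousAt.mul continuousAt_id
      apply ContinuousAt.inv₀ (by fun_prop) (by norm_num)
    · norm_num
    · filter_upwards [eventually_gt_atTop (7:ℝ)] with x hx
      obtain ⟨h1, h2⟩ := inv_facts (by linarith)
      have hx0 : x ≠ 0 := by positivity
      have e1 : x - 1 ≠ 0 := by nlinarith
      have e2 : x - 2 ≠ 0 := by nlinarith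
      have e3 : x - 3 ≠ 0 := by nlinarith
      have e4 : x - 4 ≠ 0 := by nlinarith
      have e5 : x - 5 ≠ 0 := by nlinarith
      have e6 : x - 6 ≠ 0 := by nlinarith
      have f1 : 1 - x⁻¹ ≠ 0 := by nlinarith
      have f2 : 1 - 2*x⁻¹ ≠ 0 := by nlinarith
      have f3 : 1 - 3*x⁻¹ ≠ 0 := by nlinarith
      have f4 : 1 - 4*x⁻¹ ≠ 0 := by nlinarith
      have f5 : 1 - 5*x⁻¹ ≠ 0 := by nlinarith
      have f6 : 1 - 6*x⁻¹ ≠ 0 := by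
        have : 6*x⁻¹ < 6*(1/6) := by nlinarith
        nlinarith
      field_simp
  · filter_upwards [eventually_gt_atTop (7:ℝ)] with x hx
    have h1 : (0:ℝ) < x := by linarith
    have h2 := E25_nonneg (show (1:ℝ) < x by linarith)
    have h3 := E34_nonneg (show (1:ℝ) < x by linarith)
    have h4 := E43_nonneg (show (1:ℝ) < x by linarith)
    positivity
  · filter_upwards [eventually_gt_atTop (7:ℝ)] with x hx
    have h2 := E25_le hx
    have h3 := E34_le hx
    have h4 := E43_le hx
    have h5 : (0:ℝ) ≤ x^5 := by positivity
    nlinarith [mul_le_mul_of_nonneg_left h2 h5, mul_le_mul_of_nonneg_left h3 h5,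
      mul_le_mul_of_nonneg_left h4 h5]

lemma tendsto_vv : Tendsto vv atTop (𝓝 0) := by
  have hgc : Tendsto (fun x : ℝ =>
      (-(x⁻¹ * (10 + (183/4)*x⁻¹ + (149/2)*x⁻¹^2 + (219/4)*x⁻¹^3 + 19*x⁻¹^4 + 3*x⁻¹^5)))
        / ((1+x⁻¹)^3*(1+2*x⁻¹)^2*(1+3*x⁻¹))) atTop (𝓝 0) := by
    apply tendsto_comp_inv (g := fun t : ℝ =>
      (-(t * (10 + (183/4)*t + (149/2)*t^2 + (219/4)*t^3 + 19*t^4 + 3*t^5)))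
        / ((1+t)^3*(1+2*t)^2*(1+3*t)))
    · apply ContinuousAt.div (by fun_prop) (by fun_prop) (by norm_num)
    · norm_num
    · filter_upwards with x using rfl
  have key := hgc.add tendsto_E6
  rw [add_zero] at key
  apply Tendsto.congr' _ key
  filter_upwards [eventually_gt_atTop (6:ℝ)] with x hx
  obtain ⟨h1, h2⟩ := inv_facts hx
  have hx1 : (1:ℝ) < x := by linarith
  have hx0 : x ≠ 0 := by positivity
  have e1 : x + 1 ≠ 0 := by nlinarith
  have e2 : x + 2 ≠ 0 := by nlinarith
  have e3 : x + 3 ≠ 0 := by nlinarith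
  have f1 : 1 + x⁻¹ ≠ 0 := by nlinarith
  have f2 : 1 + 2*x⁻¹ ≠ 0 := by nlinarith
  have f3 : 1 + 3*x⁻¹ ≠ 0 := by nlinarith
  rw [vv, S3_eq hx1]
  field_simp
  ring

lemma tendsto_ww : Tendsto ww atTop (𝓝 0) := by
  have hgd : Tendsto (fun x : ℝ =>
      (-(x⁻¹ * (75/2 + (2293/6)*x⁻¹ + (9559/6)*x⁻¹^2 + (21379/6)*x⁻¹^3 + (14216/3)*x⁻¹^4
        + (11840/3)*x⁻¹^5 + (6272/3)*x⁻¹^6 + 664*x⁻¹^7 + 96*x⁻¹^8)))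
        / ((1+x⁻¹)^3*(1+2*x⁻¹)^3*(1+3*x⁻¹)^2*(1+4*x⁻¹))) atTop (𝓝 0) := by
    apply tendsto_comp_inv (g := fun t : ℝ =>
      (-(t * (75/2 + (2293/6)*t + (9559/6)*t^2 + (21379/6)*t^3 + (14216/3)*t^4
        + (11840/3)*t^5 + (6272/3)*t^6 + 664*t^7 + 96*t^8)))
        / ((1+t)^3*(1+2*t)^3*(1+3*t)^2*(1+4*t)))
    · apply ContinuousAt.div (by fun_prop) (by fun_prop) (by norm_num)
    · norm_num
    · filter_upwards with x using rfl
  have key := hgd.add tendsto_E7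
  rw [add_zero] at key
  apply Tendsto.congr' _ key
  filter_upwards [eventually_gt_atTop (7:ℝ)] with x hx
  obtain ⟨h1, h2⟩ := inv_facts (by linarith)
  have hx1 : (1:ℝ) < x := by linarith
  have hx0 : x ≠ 0 := by positivity
  have e1 : x + 1 ≠ 0 := by nlinarith
  have e2 : x + 2 ≠ 0 := by nlinarith
  have e3 : x + 3 ≠ 0 := by nlinarith
  have e4 : x + 4 ≠ 0 := by nlinarith
  have f1 : 1 + x⁻¹ ≠ 0 := by nlinarith
  have f2 : 1 + 2*x⁻¹ ≠ 0 := by nlinarith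
  have f3 : 1 + 3*x⁻¹ ≠ 0 := by nlinarith
  have f4 : 1 + 4*x⁻¹ ≠ 0 := by nlinarith
  rw [ww, S4_eq hx1]
  field_simp
  ring



lemma tendsto_x4Psi : Tendsto (fun x : ℝ => x^4 * Psi x) atTop (𝓝 (1/12)) := by
  have I : Tendsto (fun x : ℝ => x⁻¹) atTop (𝓝 (0:ℝ)) := tendsto_inv_atTop_zero
  have h : Tendsto (fun x : ℝ =>
      1/12 + 2 * uu x - 2 * vv x + x⁻¹ * (1/6 + uu x) + (x⁻¹)^2 * (1/6 + uu x)^2) atTop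
      (𝓝 (1/12 + 2*0 - 2*0 + 0 * (1/6 + 0) + 0^2 * (1/6 + 0)^2)) :=
    ((((tendsto_const_nhds.add (tendsto_uu.const_mul 2)).sub (tendsto_vv.const_mul 2)).add
      (I.mul (tendsto_const_nhds.add tendsto_uu))).add
        ((I.pow 2).mul ((tendsto_const_nhds.add tendsto_uu).pow 2)))
  norm_num at h
  apply Tendsto.congr' _ h
  filter_upwards [eventually_gt_atTop (6:ℝ)] with x hx
  have hx1 : (1:ℝ) < x := by linarith
  have hx0 : x ≠ 0 := by linarith
  rw [Psi_eq hx1, uu_def, vv_def]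
  field_simp
  ring

lemma tendsto_x5negN : Tendsto (fun x : ℝ =>
    -(x^5 * (-4 * S 2 x * S 3 x + 6 * S 4 x))) atTop (𝓝 (1/3)) := by
  have I : Tendsto (fun x : ℝ => x⁻¹) atTop (𝓝 (0:ℝ)) := tendsto_inv_atTop_zero
  have h : Tendsto (fun x : ℝ =>
      -1/3 - 2 * uu x - 4 * vv x + 6 * ww x + x⁻¹ * (-5/6 - 2 * uu x - 2 * vv x)
        - 4 * ((x⁻¹)^2 * ((1/6 + uu x) * (1/4 + vv x)))) atTop
      (𝓝 (-1/3 - 2*0 - 4*0 + 6*0 + 0 * (-5/6 - 2*0 - 2*0) - 4 * (0^2 * ((1/6 + 0) * (1/4 + 0))))) := by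
    refine Tendsto.sub ?_ (Tendsto.const_mul 4 ((I.pow 2).mul
      ((tendsto_const_nhds.add tendsto_uu).mul (tendsto_const_nhds.add tendsto_vv))))
    refine Tendsto.add ?_ (I.mul ((tendsto_const_nhds.sub (tendsto_uu.const_mul 2)).sub
      (tendsto_vv.const_mul 2)))
    exact ((tendsto_const_nhds.sub (tendsto_uu.const_mul 2)).sub
      (tendsto_vv.const_mul 4)).add (tendsto_ww.const_mul 6)
  norm_num at h
  have h2 := h.neg
  norm_num at h2
  apply Tendsto.congr' _ h2
  filter_upwards [eventually_gt_atTop (6:ℝ)] with x hx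
  have hx0 : x ≠ 0 := by linarith
  rw [uu_def, vv_def, ww_def]
  field_simp
  ring

lemma main_tendsto : Tendsto (fun x : ℝ =>
    -(x * (2 * deriv digamma x * deriv (deriv digamma) x + deriv (deriv (deriv digamma)) x)) /
      Psi x) atTop (𝓝 4) := by
  have h := tendsto_x5negN.div tendsto_x4Psi (by norm_num : (1:ℝ)/12 ≠ 0)
  norm_num at h
  apply Tendsto.congr' _ h
  filter_upwards [eventually_gt_atTop (6:ℝ)] with x hx
  have hx1 : (1:ℝ) < x := by linarith
  have hx0 : x ≠ 0 := by linarith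
  have hN : 2 * deriv digamma x * deriv (deriv digamma) x + deriv (deriv (deriv digamma)) x
      = -4 * S 2 x * S 3 x + 6 * S 4 x := by
    rw [deriv_digamma_eq hx1, deriv2_digamma_eq hx1, deriv3_digamma_eq hx1]
    ring
  simp only [Pi.div_apply]
  rw [hN]
  have h4 : x^4 ≠ 0 := pow_ne_zero 4 hx0
  rw [show -(x^5 * (-(4 * S 2 x * S 3 x) + 6 * S 4 x))
      = x^4 * -(x * (-4 * S 2 x * S 3 x + 6 * S 4 x)) by ring,
    mul_div_mul_left _ _ h4]

lemma eventually_Psi_pos : ∀ᶠ x in (atTop : Filter ℝ), 0 < Psi x := by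
  have h1 := (tendsto_order.1 tendsto_x4Psi).1 0 (by norm_num)
  filter_upwards [h1, eventually_gt_atTop (0:ℝ)] with x hx hx0
  nlinarith [pow_pos hx0 4]


end DG


theorem degree_at_most_four :
    (∀ ε : ℝ, 0 < ε →
      ¬ (∀ n : ℕ, ∀ x : ℝ, 0 < x →
        0 ≤ (-1 : ℝ) ^ n * iteratedDeriv n (fun y => y ^ (4 + ε : ℝ) * Psi y) x)) ∧
    Tendsto (fun x : ℝ =>
        -(x * (2 * deriv digamma x * deriv (deriv digamma) x + deriv (deriv (deriv digamma)) x)) /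
          Psi x)
      atTop (nhds 4) := by
  constructor
  · intro ε hε h
    -- choose a suitable large x
    have hev : ∀ᶠ x in (atTop : Filter ℝ),
        (-(x * (2 * deriv digamma x * deriv (deriv digamma) x
          + deriv (deriv (deriv digamma)) x)) / Psi x < 4 + ε) ∧ 0 < Psi x ∧ 6 < x := by
      have h1 := (tendsto_order.1 DG.main_tendsto).2 (4 + ε) (by linarith)
      filter_upwards [h1, DG.eventually_Psi_pos, eventually_gt_atTop (6:ℝ)] with x a b c
      exact ⟨a, b, c⟩
    obtain ⟨x, hlt, hPsi, hx6⟩ := hev.exists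
    have hx1 : (1:ℝ) < x := by linarith
    have hx0 : (0:ℝ) < x := by linarith
    set N : ℝ := 2 * deriv digamma x * deriv (deriv digamma) x
      + deriv (deriv (deriv digamma)) x with hN
    -- from the ratio bound: (4+ε) * Psi x + x * N > 0
    have hkey : 0 < (4 + ε) * Psi x + x * N := by
      have := (div_lt_iff₀ hPsi).mp hlt
      linarith
    -- compute the first derivative of the tested function
    have hNval : N = -4 * DG.S 2 x * DG.S 3 x + 6 * DG.S 4 x := by
      rw [hN, DG.deriv_digamma_eq hx1, DG.deriv2_digamma_eq hx1, DG.deriv3_digamma_eq hx1]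
      ring
    have hrpow : HasDerivAt (fun y : ℝ => y ^ (4 + ε : ℝ)) ((4 + ε) * x ^ (3 + ε : ℝ)) x := by
      have := Real.hasDerivAt_rpow_const (x := x) (p := 4 + ε) (Or.inl hx0.ne')
      convert this using 2
      congr 1
      ring
    have hPsiD : HasDerivAt Psi N x := by
      rw [hNval]; exact DG.hasDerivAt_Psi hx1
    have hfD : HasDerivAt (fun y : ℝ => y ^ (4 + ε : ℝ) * Psi y)
        ((4 + ε) * x ^ (3 + ε : ℝ) * Psi x + x ^ (4 + ε : ℝ) * N) x := hrpow.mul hPsiD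
    have h1 := h 1 x hx0
    rw [iteratedDeriv_one, hfD.deriv] at h1
    have hxp : (0:ℝ) < x ^ (3 + ε : ℝ) := Real.rpow_pos_of_pos hx0 _
    have hx4 : x ^ (4 + ε : ℝ) = x ^ (3 + ε : ℝ) * x := by
      rw [← Real.rpow_add_one hx0.ne' (3 + ε)]
      congr 1
      ring
    rw [hx4] at h1
    simp only [pow_one, neg_one_mul] at h1
    nlinarith [mul_pos hxp hkey]
  · exact DG.main_tendsto
end

section
/- Let $f : (0,\infty) \to \mathbb{R}$ be infinitely differentiable. If $x \mapsto x f(x)$ is completely monotonic on $(0,\infty)$, then for every integer $k \ge 0$ and all $x > 0$, $(-1)^k x^{k+1} f^{(k)}(x) \ge k! \cdot x f(x) \ge 0$; in particular $f$ is strongly completely monotonic on $(0,\infty)$. -/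
open Set

private lemma myIDW_eq (f : ℝ → ℝ) (n : ℕ) {x : ℝ} (hx : x ∈ Ioi (0:ℝ)) :
    iteratedDerivWithin n f (Ioi 0) x = iteratedDeriv n f x := by
  rw [iteratedDerivWithin_eq_iteratedFDerivWithin, iteratedDeriv_eq_iteratedFDeriv,
    iteratedFDerivWithin_of_isOpen n isOpen_Ioi hx]

private lemma myHasDeriv (f : ℝ → ℝ) (hf : ContDiffOn ℝ (⊤ : ℕ∞) f (Set.Ioi 0))
    (n : ℕ) {x : ℝ} (hx : 0 < x) :
    HasDerivAt (iteratedDeriv n f) (iteratedDeriv (n + 1) f x) x := by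
  have h1 : DifferentiableWithinAt ℝ (iteratedDerivWithin n f (Ioi 0)) (Ioi 0) x :=
    hf.differentiableOn_iteratedDerivWithin (by exact_mod_cast ENat.coe_lt_top n) (uniqueDiffOn_Ioi 0) x hx
  have h2 : DifferentiableAt ℝ (iteratedDerivWithin n f (Ioi 0)) x :=
    h1.differentiableAt (isOpen_Ioi.mem_nhds hx)
  have heq : iteratedDerivWithin n f (Ioi 0) =ᶠ[nhds x] iteratedDeriv n f :=
    Filter.eventuallyEq_of_mem (isOpen_Ioi.mem_nhds hx) (fun y hy => myIDW_eq f n hy)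
  have h3 : DifferentiableAt ℝ (iteratedDeriv n f) x := h2.congr_of_eventuallyEq heq.symm
  have := h3.hasDerivAt
  rwa [iteratedDeriv_succ, show deriv (iteratedDeriv n f) x = deriv (iteratedDeriv n f) x from rfl]

private lemma myLeib (f : ℝ → ℝ) (hf : ContDiffOn ℝ (⊤ : ℕ∞) f (Set.Ioi 0)) :
    ∀ n : ℕ, ∀ x : ℝ, 0 < x →
      iteratedDeriv (n + 1) (fun y => y * f y) x
        = x * iteratedDeriv (n + 1) f x + (n + 1) * iteratedDeriv n f x := by
  have hg : ContDiffOn ℝ (⊤ : ℕ∞) (fun y => y * f y) (Ioi 0) := contDiffOn_id.mul hf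
  intro n
  induction n with
  | zero =>
    intro x hx
    have hdf : HasDerivAt f (iteratedDeriv 1 f x) x := by
      have := myHasDeriv f hf 0 hx
      rwa [iteratedDeriv_zero] at this
    have h1 : HasDerivAt (fun y => y * f y) (1 * f x + x * iteratedDeriv 1 f x) x :=
      (hasDerivAt_id x).mul hdf
    rw [iteratedDeriv_one]
    rw [h1.deriv, iteratedDeriv_zero]
    ring
  | succ n ih =>
    intro x hx
    have hg' : HasDerivAt (iteratedDeriv (n + 1) (fun y => y * f y))
        (iteratedDeriv (n + 2) (fun y => y * f y) x) x := myHasDeriv _ hg (n + 1) hx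
    have hφ : HasDerivAt
        (fun y => y * iteratedDeriv (n + 1) f y + (↑n + 1) * iteratedDeriv n f y)
        ((1 * iteratedDeriv (n + 1) f x + x * iteratedDeriv (n + 2) f x)
          + (↑n + 1) * iteratedDeriv (n + 1) f x) x :=
      ((hasDerivAt_id x).mul (myHasDeriv f hf (n + 1) hx)).add
        ((myHasDeriv f hf n hx).const_mul ((n : ℝ) + 1))
    have heq : iteratedDeriv (n + 1) (fun y => y * f y)
        =ᶠ[nhds x] (fun y => y * iteratedDeriv (n + 1) f y + (↑n + 1) * iteratedDeriv n f y) :=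
      Filter.eventuallyEq_of_mem (isOpen_Ioi.mem_nhds hx) (fun y hy => ih y hy)
    have h2 : HasDerivAt (iteratedDeriv (n + 1) (fun y => y * f y))
        ((1 * iteratedDeriv (n + 1) f x + x * iteratedDeriv (n + 2) f x)
          + (↑n + 1) * iteratedDeriv (n + 1) f x) x := hφ.congr_of_eventuallyEq heq
    have := hg'.unique h2
    push_cast
    rw [this]
    ring

theorem strongly_cm_of_cm (f : ℝ → ℝ) (hf : ContDiffOn ℝ (⊤ : ℕ∞) f (Set.Ioi 0))
    (hcm : ∀ n : ℕ, ∀ x : ℝ, 0 < x →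
      0 ≤ (-1 : ℝ) ^ n * iteratedDeriv n (fun y => y * f y) x) :
    (∀ k : ℕ, ∀ x : ℝ, 0 < x →
      (k.factorial : ℝ) * (x * f x) ≤ (-1 : ℝ) ^ k * x ^ (k + 1) * iteratedDeriv k f x ∧
        0 ≤ x * f x) ∧
    (∀ n : ℕ,
      (∀ x : ℝ, 0 < x → 0 ≤ (-1 : ℝ) ^ n * x ^ (n + 1) * iteratedDeriv n f x) ∧
      AntitoneOn (fun x => (-1 : ℝ) ^ n * x ^ (n + 1) * iteratedDeriv n f x) (Set.Ioi 0)) := by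
  have hxf : ∀ x : ℝ, 0 < x → 0 ≤ x * f x := by
    intro x hx
    have := hcm 0 x hx
    simpa [iteratedDeriv_zero] using this
  -- key recurrence: h_{k+1} = x^{k+1} * ((-1)^{k+1} g^{(k+1)}) + (k+1) * h_k
  have hrec : ∀ k : ℕ, ∀ x : ℝ, 0 < x →
      (-1 : ℝ) ^ (k + 1) * x ^ (k + 2) * iteratedDeriv (k + 1) f x
        = x ^ (k + 1) * ((-1 : ℝ) ^ (k + 1) * iteratedDeriv (k + 1) (fun y => y * f y) x)
          + (k + 1) * ((-1 : ℝ) ^ k * x ^ (k + 1) * iteratedDeriv k f x) := by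
    intro k x hx
    have h := myLeib f hf k x hx
    linear_combination ((-1 : ℝ) ^ k * x ^ (k + 1)) * h
  have main : ∀ k : ℕ, ∀ x : ℝ, 0 < x →
      (k.factorial : ℝ) * (x * f x) ≤ (-1 : ℝ) ^ k * x ^ (k + 1) * iteratedDeriv k f x := by
    intro k
    induction k with
    | zero => intro x hx; simp [iteratedDeriv_zero]
    | succ k ih =>
      intro x hx
      have h1 := hrec k x hx
      have h2 : (0 : ℝ) ≤ x ^ (k + 1) * ((-1 : ℝ) ^ (k + 1) * iteratedDeriv (k + 1) (fun y => y * f y) x) :=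
        mul_nonneg (pow_nonneg hx.le _) (hcm (k + 1) x hx)
      have h3 : ((k : ℝ) + 1) * ((k.factorial : ℝ) * (x * f x))
          ≤ ((k : ℝ) + 1) * ((-1 : ℝ) ^ k * x ^ (k + 1) * iteratedDeriv k f x) :=
        mul_le_mul_of_nonneg_left (ih x hx) (by positivity)
      have hfac : ((k + 1).factorial : ℝ) = ((k : ℝ) + 1) * (k.factorial : ℝ) := by
        rw [Nat.factorial_succ]; push_cast; ring
      rw [hfac]
      calc ((k : ℝ) + 1) * (k.factorial : ℝ) * (x * f x)
          = ((k : ℝ) + 1) * ((k.factorial : ℝ) * (x * f x)) := by ring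
        _ ≤ ((k : ℝ) + 1) * ((-1 : ℝ) ^ k * x ^ (k + 1) * iteratedDeriv k f x) := h3
        _ ≤ (-1 : ℝ) ^ (k + 1) * x ^ (k + 2) * iteratedDeriv (k + 1) f x := by linarith
  refine ⟨fun k x hx => ⟨main k x hx, hxf x hx⟩, fun n => ?_⟩
  have hnonneg : ∀ x : ℝ, 0 < x → 0 ≤ (-1 : ℝ) ^ n * x ^ (n + 1) * iteratedDeriv n f x :=
    fun x hx => le_trans (mul_nonneg (Nat.cast_nonneg _) (hxf x hx)) (main n x hx)
  refine ⟨hnonneg, ?_⟩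
  have hD : ∀ x : ℝ, 0 < x → HasDerivAt (fun y => (-1 : ℝ) ^ n * y ^ (n + 1) * iteratedDeriv n f y)
      ((-1 : ℝ) ^ n * (((n : ℝ) + 1) * x ^ n * iteratedDeriv n f x
        + x ^ (n + 1) * iteratedDeriv (n + 1) f x)) x := by
    intro x hx
    have h1 : HasDerivAt (fun y : ℝ => y ^ (n + 1)) (((n : ℝ) + 1) * x ^ n) x := by
      simpa using hasDerivAt_pow (n + 1) x
    have h2 := (h1.mul (myHasDeriv f hf n hx)).const_mul ((-1 : ℝ) ^ n)
    have hfun : (fun y => (-1 : ℝ) ^ n * y ^ (n + 1) * iteratedDeriv n f y)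
        = fun y => (-1 : ℝ) ^ n * (y ^ (n + 1) * iteratedDeriv n f y) := by funext y; ring
    rw [hfun]
    exact h2
  apply antitoneOn_of_deriv_nonpos (convex_Ioi 0)
  · exact fun x hx => ((hD x hx).continuousAt).continuousWithinAt
  · intro x hx
    rw [interior_Ioi] at hx
    exact (hD x hx).differentiableAt.differentiableWithinAt
  · intro x hx
    rw [interior_Ioi] at hx
    rw [(hD x hx).deriv]
    have h1 := hrec n x hx
    have h2 : (0 : ℝ) ≤ x ^ (n + 1) * ((-1 : ℝ) ^ (n + 1) * iteratedDeriv (n + 1) (fun y => y * f y) x) :=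
      mul_nonneg (pow_nonneg hx.le _) (hcm (n + 1) x hx)
    have hxD : x * ((-1 : ℝ) ^ n * (((n : ℝ) + 1) * x ^ n * iteratedDeriv n f x
        + x ^ (n + 1) * iteratedDeriv (n + 1) f x)) ≤ x * 0 := by
      have : x * ((-1 : ℝ) ^ n * (((n : ℝ) + 1) * x ^ n * iteratedDeriv n f x
          + x ^ (n + 1) * iteratedDeriv (n + 1) f x))
          = ((n : ℝ) + 1) * ((-1 : ℝ) ^ n * x ^ (n + 1) * iteratedDeriv n f x)
            - (-1 : ℝ) ^ (n + 1) * x ^ (n + 2) * iteratedDeriv (n + 1) f x := by ring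
      rw [this, h1]
      linarith
    exact le_of_mul_le_mul_left hxD hx
end

section
/- Let $f : (0,\infty) \to \mathbb{R}$ be infinitely differentiable. If $f$ is strongly completely monotonic on $(0,\infty)$, then $x \mapsto x f(x)$ is completely monotonic on $(0,\infty)$. -/
open Set Filter Topology

private lemma antitoneOn_deriv_nonpos' {g : ℝ → ℝ} {s : Set ℝ} (hs : IsOpen s) {x : ℝ}
    (hx : x ∈ s) (hg : AntitoneOn g s) (hd : DifferentiableAt ℝ g x) : deriv g x ≤ 0 := by
  have h := hd.hasDerivAt
  rw [hasDerivAt_iff_tendsto_slope] at h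
  have h' : Tendsto (slope g x) (𝓝[>] x) (𝓝 (deriv g x)) :=
    h.mono_left (nhdsWithin_mono x fun y hy => ne_of_gt hy)
  refine le_of_tendsto h' ?_
  filter_upwards [self_mem_nhdsWithin,
    mem_nhdsWithin_of_mem_nhds (hs.mem_nhds hx)] with y hy hys
  rw [slope_def_field]
  exact div_nonpos_of_nonpos_of_nonneg (sub_nonpos.2 (hg hx hys (le_of_lt hy)))
    (sub_nonneg.2 (le_of_lt hy))

theorem cm_of_strongly_cm (f : ℝ → ℝ) (hf : ContDiffOn ℝ (⊤ : ℕ∞) f (Set.Ioi 0))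
    (hscm : ∀ n : ℕ,
      (∀ x : ℝ, 0 < x → 0 ≤ (-1 : ℝ) ^ n * x ^ (n + 1) * iteratedDeriv n f x) ∧
      AntitoneOn (fun x => (-1 : ℝ) ^ n * x ^ (n + 1) * iteratedDeriv n f x) (Set.Ioi 0)) :
    ∀ n : ℕ, ∀ x : ℝ, 0 < x →
      0 ≤ (-1 : ℝ) ^ n * iteratedDeriv n (fun y => y * f y) x := by
  have hso : IsOpen (Set.Ioi (0:ℝ)) := isOpen_Ioi
  have hsu : UniqueDiffOn ℝ (Set.Ioi (0:ℝ)) := hso.uniqueDiffOn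
  have heq : ∀ (m : ℕ) (x : ℝ), x ∈ Set.Ioi (0:ℝ) →
      iteratedDerivWithin m f (Set.Ioi 0) x = iteratedDeriv m f x := by
    intro m x hx
    rw [iteratedDerivWithin_eq_iteratedFDerivWithin, iteratedDeriv_eq_iteratedFDeriv,
      iteratedFDerivWithin_of_isOpen m hso hx]
  have hdiff : ∀ m : ℕ, DifferentiableOn ℝ (iteratedDerivWithin m f (Set.Ioi 0)) (Set.Ioi 0) :=
    fun m => hf.differentiableOn_iteratedDerivWithin (by exact_mod_cast ENat.coe_lt_top m) hsu
  have hdA : ∀ (m : ℕ) {x : ℝ}, x ∈ Set.Ioi (0:ℝ) → DifferentiableAt ℝ (iteratedDeriv m f) x := by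
    intro m x hx
    have h1 := (hdiff m x hx).differentiableAt (hso.mem_nhds hx)
    have hev : iteratedDerivWithin m f (Set.Ioi 0) =ᶠ[𝓝 x] iteratedDeriv m f :=
      eventually_of_mem (hso.mem_nhds hx) fun y hy => heq m y hy
    exact h1.congr_of_eventuallyEq hev.symm
  -- product formula
  have hform : ∀ n : ℕ, ∀ x ∈ Set.Ioi (0:ℝ), iteratedDeriv (n+1) (fun y => y * f y) x
      = x * iteratedDeriv (n+1) f x + (n+1) * iteratedDeriv n f x := by
    intro n
    induction n with
    | zero =>
      intro x hx
      have hfd : DifferentiableAt ℝ f x := by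
        have := hdA 0 hx; simpa [iteratedDeriv_zero] using this
      rw [iteratedDeriv_succ, iteratedDeriv_zero, iteratedDeriv_one,
        deriv_fun_mul differentiableAt_fun_id hfd]
      simp; ring
    | succ n ih =>
      intro x hx
      have hev : iteratedDeriv (n+1) (fun y => y * f y) =ᶠ[𝓝 x]
          (fun y => y * iteratedDeriv (n+1) f y + (n+1) * iteratedDeriv n f y) :=
        eventually_of_mem (hso.mem_nhds hx) fun y hy => ih y hy
      have h1 := hdA (n+1) hx
      have h2 := hdA n hx
      rw [iteratedDeriv_succ, hev.deriv_eq, deriv_fun_add (differentiableAt_fun_id.fun_mul h1)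
        (h2.const_mul _), deriv_fun_mul differentiableAt_fun_id h1, deriv_const_mul _ h2,
        ← iteratedDeriv_succ, ← iteratedDeriv_succ]
      simp only [deriv_id'']
      push_cast
      ring
  intro n x hx
  cases n with
  | zero =>
    have := (hscm 0).1 x hx
    simpa using this
  | succ m =>
    rw [hform m x hx]
    have hanti := (hscm m).2
    have hdg : DifferentiableAt ℝ (fun y => (-1:ℝ)^m * y^(m+1) * iteratedDeriv m f y) x :=
      (((differentiableAt_pow (m+1)).const_mul _)).mul (hdA m hx)
    have hle := antitoneOn_deriv_nonpos' hso hx hanti hdg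
    have hder : deriv (fun y => (-1:ℝ)^m * y^(m+1) * iteratedDeriv m f y) x
        = (-1:ℝ)^m * ((m+1) * x^m * iteratedDeriv m f x + x^(m+1) * iteratedDeriv (m+1) f x) := by
      rw [deriv_fun_mul (((differentiableAt_pow (m+1)).const_mul _)) (hdA m hx),
        deriv_const_mul _ (differentiableAt_pow (m+1)), deriv_pow_field, ← iteratedDeriv_succ]
      push_cast
      ring
    rw [hder] at hle
    have hp : (0:ℝ) < x^m := pow_pos hx m
    set c : ℝ := (-1:ℝ)^m with hc
    set F : ℝ := iteratedDeriv m f x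
    set G : ℝ := iteratedDeriv (m+1) f x
    have hgoal : (0:ℝ) ≤ (-1:ℝ)^(m+1) * (x * G + (m+1) * F) := by
      rw [pow_succ, ← hc]
      rw [pow_succ] at hle
      nlinarith [hle, hp, mul_pos hp hx]
    exact hgoal
end
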